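/- arXiv:2409.01048 — 4 statements merged into one kernel-verified Lean document; each statement's English description precedes it below -/
import Mathlib

section
/- Let (S_n) be a real-valued random walk with i.i.d. increments such that P(S_1 ≠ 0) > 0. Then sup_{x ≥ 0} E[ Σ_{k=0}^∞ 1{min_{0≤i≤k} S_i + x ≥ 0} e^{-S_k - x} ] < ∞. -/
open MeasureTheory ProbabilityTheory Filter Set
open scoped ENNReal

namespace Statement0Aux

/-- partial sum of the first `i` coordinates of a finite vector. -/
def ps {k : ℕ} (u : Fin k → ℝ) (i : ℕ) : ℝ := ∑ j : Fin k, if (j : ℕ) < i then u j else 0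

lemma ps_zero {k : ℕ} (u : Fin k → ℝ) : ps u 0 = 0 := by
  simp [ps]

lemma ps_succ {k : ℕ} (u : Fin k → ℝ) {i : ℕ} (h : i < k) :
    ps u (i + 1) = ps u i + u ⟨i, h⟩ := by
  have : ∀ j : Fin k, (if (j : ℕ) < i + 1 then u j else 0)
      = (if (j : ℕ) < i then u j else 0) + (if j = ⟨i, h⟩ then u j else 0) := by
    intro j
    rcases lt_trichotomy (j : ℕ) i with hj | hj | hj
    · have h1 : (j : ℕ) < i + 1 := by omega
      have h2 : j ≠ ⟨i, h⟩ := by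
        intro he; rw [he] at hj; simp at hj
      simp [h1, hj, h2]
    · have h1 : (j : ℕ) < i + 1 := by omega
      have h2 : j = ⟨i, h⟩ := by ext; simpa using hj
      have h3 : ¬ ((j : ℕ) < i) := by omega
      simp [h1, h3, h2]
    · have h1 : ¬ ((j : ℕ) < i + 1) := by omega
      have h2 : j ≠ ⟨i, h⟩ := by
        intro he; rw [he] at hj; simp at hj
      simp [h1, h2, show ¬ ((j:ℕ) < i) by omega]
  rw [ps, Finset.sum_congr rfl (fun j _ => this j), Finset.sum_add_distrib]
  congr 1
  simpa only [Finset.mem_univ, if_true] using Finset.sum_ite_eq' Finset.univ (⟨i, h⟩ : Fin k) u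

lemma ps_stable {k : ℕ} (u : Fin k → ℝ) {i : ℕ} (h : k ≤ i) : ps u i = ps u k := by
  refine Finset.sum_congr rfl fun j _ => ?_
  have hj : (j : ℕ) < k := j.2
  simp [show (j:ℕ) < i by omega, hj]

lemma measurable_ps {k i : ℕ} : Measurable (fun u : Fin k → ℝ => ps u i) := by
  apply Finset.measurable_sum
  intro j _
  by_cases h : (j : ℕ) < i
  · simpa [h] using measurable_pi_apply j
  · simp only [h, if_false]; exact measurable_const

lemma ps_head {j l : ℕ} (u : Fin (j + l) → ℝ) {i : ℕ} (h : i ≤ j) :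
    ps u i = ps (fun a : Fin j => u (Fin.castAdd l a)) i := by
  rw [ps, Fin.sum_univ_add]
  have h2 : ∀ b : Fin l, (if ((Fin.natAdd j b : Fin (j+l)) : ℕ) < i then u (Fin.natAdd j b) else 0) = 0 := by
    intro b
    have : ¬ ((Fin.natAdd j b : Fin (j+l)) : ℕ) < i := by
      simp only [Fin.coe_natAdd]; omega
    simp only [this, if_false]
  rw [Finset.sum_congr rfl (fun b _ => h2 b), Finset.sum_const, smul_zero, add_zero]
  rfl

lemma ps_tail {j l : ℕ} (u : Fin (j + l) → ℝ) (i : ℕ) :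
    ps u (j + i) = ps u j + ps (fun b : Fin l => u (Fin.natAdd j b)) i := by
  rw [ps, Fin.sum_univ_add, ps, Fin.sum_univ_add]
  have hA : ∀ a : Fin j, (if ((Fin.castAdd l a : Fin (j+l)) : ℕ) < j + i then u (Fin.castAdd l a) else 0)
      = (if ((Fin.castAdd l a : Fin (j+l)) : ℕ) < j then u (Fin.castAdd l a) else 0) := by
    intro a
    have ha : (a : ℕ) < j := a.2
    simp only [Fin.coe_castAdd]
    rw [if_pos (by omega), if_pos ha]
  have hB : ∀ b : Fin l, (if ((Fin.natAdd j b : Fin (j+l)) : ℕ) < j + i then u (Fin.natAdd j b) else 0)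
      = (if (b : ℕ) < i then u (Fin.natAdd j b) else 0) := by
    intro b
    simp only [Fin.coe_natAdd]
    by_cases hb : (b : ℕ) < i
    · rw [if_pos (by omega), if_pos hb]
    · rw [if_neg (by omega), if_neg hb]
  rw [Finset.sum_congr rfl (fun a _ => hA a), Finset.sum_congr rfl (fun b _ => hB b)]
  have hB2 : ∀ b : Fin l, (if ((Fin.natAdd j b : Fin (j+l)) : ℕ) < j then u (Fin.natAdd j b) else 0) = 0 := by
    intro b; rw [if_neg]; simp only [Fin.coe_natAdd]; omega
  rw [Finset.sum_congr rfl (fun b _ => hB2 b)]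
  simp [ps]

lemma ps_rev {k : ℕ} (u : Fin k → ℝ) {i : ℕ} (h : i ≤ k) :
    ps (fun t => u (Fin.rev t)) i = ps u k - ps u (k - i) := by
  have key : (∑ t : Fin k, if (t : ℕ) < i then u (Fin.rev t) else 0)
      = ∑ s : Fin k, if ((Fin.rev s : Fin k) : ℕ) < i then u s else 0 := by
    rw [← Equiv.sum_comp (Fin.revPerm (n := k))
      (fun s : Fin k => if ((Fin.rev s : Fin k) : ℕ) < i then u s else 0)]
    refine Finset.sum_congr rfl fun t _ => ?_
    simp only [Fin.revPerm_apply, Fin.rev_rev]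
  rw [ps, key]
  have h2 : ∀ s : Fin k, (if ((Fin.rev s : Fin k) : ℕ) < i then u s else 0)
      = (if (s : ℕ) < k then u s else 0) - (if (s : ℕ) < k - i then u s else 0) := by
    intro s
    have hs : (s : ℕ) < k := s.2
    rw [Fin.val_rev]
    by_cases hc : (s : ℕ) < k - i
    · rw [if_neg (by omega), if_pos hs, if_pos hc]; ring
    · rw [if_pos (by omega), if_pos hs, if_neg hc]; ring
  rw [Finset.sum_congr rfl (fun s _ => h2 s), Finset.sum_sub_distrib]
  rfl

lemma ps_neg {k : ℕ} (u : Fin k → ℝ) (i : ℕ) : ps (fun t => -(u t)) i = - ps u i := by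
  rw [ps, ps, ← Finset.sum_neg_distrib]
  refine Finset.sum_congr rfl fun j _ => ?_
  by_cases h : (j : ℕ) < i <;> simp [h]



noncomputable def pim (μ : Measure ℝ) (k : ℕ) : Measure (Fin k → ℝ) :=
  Measure.pi fun _ => μ

variable {μ : Measure ℝ} [IsProbabilityMeasure μ]

instance (k : ℕ) : IsProbabilityMeasure (pim μ k) := by
  unfold pim; infer_instance

lemma measurable_revmap {k : ℕ} : Measurable (fun (u : Fin k → ℝ) (i : Fin k) => u (Fin.rev i)) :=
  measurable_pi_lambda _ fun i => measurable_pi_apply _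

lemma pim_apply_pi {k : ℕ} (s : Fin k → Set ℝ) :
    pim μ k (univ.pi s) = ∏ i, μ (s i) := Measure.pi_pi _ _

lemma pim_map_rev (k : ℕ) :
    (pim μ k).map (fun (u : Fin k → ℝ) (i : Fin k) => u (Fin.rev i)) = pim μ k := by
  symm
  unfold pim
  refine Measure.pi_eq fun s hs => ?_
  rw [Measure.map_apply measurable_revmap (MeasurableSet.univ_pi hs)]
  have hpre : (fun (u : Fin k → ℝ) (i : Fin k) => u (Fin.rev i)) ⁻¹' (univ.pi s)
      = univ.pi (fun i => s (Fin.rev i)) := by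
    ext u
    simp only [mem_preimage, Set.mem_univ_pi]
    exact ⟨fun hu i => by simpa [Fin.rev_rev] using hu (Fin.rev i),
      fun hu i => by simpa [Fin.rev_rev] using hu (Fin.rev i)⟩
  rw [hpre, Measure.pi_pi]
  exact Equiv.prod_comp (Fin.revPerm (n := k)) (fun i => μ (s i))

lemma pim_map_neg (k : ℕ) :
    (pim μ k).map (fun (u : Fin k → ℝ) (i : Fin k) => -(u i)) = pim (μ.map (fun x : ℝ => -x)) k := by
  symm
  unfold pim
  refine Measure.pi_eq fun s hs => ?_
  have hm : Measurable (fun (u : Fin k → ℝ) (i : Fin k) => -(u i)) :=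
    measurable_pi_lambda _ fun i => (measurable_pi_apply i).neg
  rw [Measure.map_apply hm (MeasurableSet.univ_pi hs)]
  have hpre : (fun (u : Fin k → ℝ) (i : Fin k) => -(u i)) ⁻¹' (univ.pi s)
      = univ.pi (fun i => (fun x : ℝ => -x) ⁻¹' (s i)) := by
    ext u; simp [Set.mem_pi]
  rw [hpre, Measure.pi_pi]
  refine Finset.prod_congr rfl fun i _ => ?_
  rw [Measure.map_apply measurable_neg (hs i)]

/-- Splitting a `pi` integral of a product of a head-function and tail-function. -/
lemma lintegral_split {j l : ℕ} {F : (Fin j → ℝ) → ℝ≥0∞} {G : (Fin l → ℝ) → ℝ≥0∞}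
    (hF : Measurable F) (hG : Measurable G) :
    ∫⁻ u, F (fun a => u (Fin.castAdd l a)) * G (fun b => u (Fin.natAdd j b)) ∂(pim μ (j + l))
      = (∫⁻ w, F w ∂(pim μ j)) * ∫⁻ v, G v ∂(pim μ l) := by
  have mp2 := measurePreserving_piCongrLeft (fun _ : Fin (j + l) => μ) finSumFinEquiv
  have mp1 := measurePreserving_sumPiEquivProdPi (X := fun _ : Fin j ⊕ Fin l => ℝ)
    (fun _ => μ)
  have mp : MeasurePreserving
      ((MeasurableEquiv.sumPiEquivProdPi (fun _ : Fin j ⊕ Fin l => ℝ)) ∘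
        (MeasurableEquiv.piCongrLeft (fun _ : Fin (j + l) => ℝ) finSumFinEquiv).symm)
      (pim μ (j + l)) ((pim μ j).prod (pim μ l)) := mp1.comp mp2.symm
  have key := mp.lintegral_comp (f := fun z : (Fin j → ℝ) × (Fin l → ℝ) => F z.1 * G z.2)
    ((hF.comp measurable_fst).mul (hG.comp measurable_snd))
  rw [lintegral_prod_mul hF.aemeasurable hG.aemeasurable] at key
  rw [← key]
  refine lintegral_congr fun u => ?_
  have h1 : ((MeasurableEquiv.sumPiEquivProdPi (fun _ : Fin j ⊕ Fin l => ℝ))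
      ((MeasurableEquiv.piCongrLeft (fun _ : Fin (j + l) => ℝ) finSumFinEquiv).symm u)).1
      = fun a => u (Fin.castAdd l a) := by
    funext a
    simp [MeasurableEquiv.sumPiEquivProdPi, MeasurableEquiv.piCongrLeft,
      Equiv.sumPiEquivProdPi, Equiv.piCongrLeft]
  have h2 : ((MeasurableEquiv.sumPiEquivProdPi (fun _ : Fin j ⊕ Fin l => ℝ))
      ((MeasurableEquiv.piCongrLeft (fun _ : Fin (j + l) => ℝ) finSumFinEquiv).symm u)).2
      = fun b => u (Fin.natAdd j b) := by
    funext b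
    simp [MeasurableEquiv.sumPiEquivProdPi, MeasurableEquiv.piCongrLeft,
      Equiv.sumPiEquivProdPi, Equiv.piCongrLeft]
  simp only [Function.comp_apply, h1, h2]


/-! ### Counting weak descending ladder points in a unit interval -/

/-- weak descending ladder epoch `j` with ladder height in `[a, a+1]`. -/
def Emin (a : ℝ) (j : ℕ) : Set (Fin j → ℝ) :=
  {u | (∀ i, i < j → ps u j ≤ ps u i) ∧ ps u j ∈ Set.Icc a (a + 1)}

def HH (a δ : ℝ) (r N j : ℕ) : Set (Fin N → ℝ) :=
  {u | (∀ i, i < j → ps u j ≤ ps u i) ∧ ps u j ∈ Set.Icc a (a + 1) ∧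
    ∀ t : Fin N, j ≤ (t : ℕ) → (t : ℕ) < j + r → u t ≤ -δ}

def QQ (δ : ℝ) (r l : ℕ) : Set (Fin l → ℝ) := {v | ∀ b : Fin l, (b : ℕ) < r → v b ≤ -δ}

lemma measurableSet_Emin (a : ℝ) (j : ℕ) : MeasurableSet (Emin a j) := by
  have : Emin a j = (⋂ i, ⋂ (_ : i < j), {u : Fin j → ℝ | ps u j ≤ ps u i}) ∩
      ((fun u : Fin j → ℝ => ps u j) ⁻¹' Set.Icc a (a + 1)) := by
    ext u; simp [Emin]
  rw [this]
  exact (MeasurableSet.iInter fun i => MeasurableSet.iInter fun _ =>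
    measurableSet_le measurable_ps measurable_ps).inter (measurable_ps measurableSet_Icc)

lemma measurableSet_HH (a δ : ℝ) (r N j : ℕ) : MeasurableSet (HH a δ r N j) := by
  have : HH a δ r N j = ((⋂ i, ⋂ (_ : i < j), {u : Fin N → ℝ | ps u j ≤ ps u i}) ∩
      ((fun u : Fin N → ℝ => ps u j) ⁻¹' Set.Icc a (a + 1))) ∩
      (⋂ t : Fin N, ⋂ (_ : j ≤ (t : ℕ)), ⋂ (_ : (t : ℕ) < j + r),
        {u : Fin N → ℝ | u t ≤ -δ}) := by
    ext u; simp [HH]; tauto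
  rw [this]
  refine (((MeasurableSet.iInter fun i => MeasurableSet.iInter fun _ =>
    measurableSet_le measurable_ps measurable_ps).inter
    (measurable_ps measurableSet_Icc)).inter
    (MeasurableSet.iInter fun t => MeasurableSet.iInter fun _ => MeasurableSet.iInter fun _ =>
      measurableSet_le (measurable_pi_apply t) measurable_const))

lemma measurableSet_QQ (δ : ℝ) (r l : ℕ) : MeasurableSet (QQ δ r l) := by
  have : QQ δ r l = ⋂ b : Fin l, ⋂ (_ : (b : ℕ) < r), {v : Fin l → ℝ | v b ≤ -δ} := by
    ext v; simp [QQ]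
  rw [this]
  exact MeasurableSet.iInter fun b => MeasurableSet.iInter fun _ =>
    measurableSet_le (measurable_pi_apply b) measurable_const

variable {μ : Measure ℝ} [IsProbabilityMeasure μ]

lemma QQ_measure {δ : ℝ} {r l : ℕ} (hrl : r ≤ l) :
    pim μ l (QQ δ r l) = (μ (Set.Iic (-δ))) ^ r := by
  have : QQ δ r l = univ.pi (fun b : Fin l => if (b : ℕ) < r then Set.Iic (-δ) else univ) := by
    ext v
    simp only [QQ, Set.mem_univ_pi, mem_setOf_eq]
    constructor
    · intro hv b
      by_cases hb : (b : ℕ) < r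
      · simpa [hb] using hv b hb
      · simp [hb]
    · intro hv b hb
      have := hv b
      simpa [hb] using this
  rw [this, pim_apply_pi]
  have : ∀ b : Fin l, μ (if (b : ℕ) < r then Set.Iic (-δ) else univ)
      = if (b : ℕ) < r then μ (Set.Iic (-δ)) else 1 := by
    intro b; by_cases hb : (b : ℕ) < r <;> simp [hb]
  rw [Finset.prod_congr rfl (fun b _ => this b)]
  rw [Fin.prod_univ_eq_prod_range (fun t : ℕ => if t < r then μ (Set.Iic (-δ)) else 1)]
  rw [← Finset.prod_filter]
  have : (Finset.range l).filter (fun t => t < r) = Finset.range r := by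
    ext t; simp [Finset.mem_filter, Finset.mem_range]; omega
  rw [this, Finset.prod_const, Finset.card_range]

lemma HH_split {a δ : ℝ} {r j l : ℕ} (hrl : r ≤ l) :
    pim μ (j + l) (HH a δ r (j + l) j) = pim μ j (Emin a j) * (μ (Set.Iic (-δ))) ^ r := by
  have key := lintegral_split (μ := μ) (j := j) (l := l)
    (F := Set.indicator (Emin a j) (fun _ => 1))
    (G := Set.indicator (QQ δ r l) (fun _ => 1))
    ((measurable_const.indicator (measurableSet_Emin a j)))
    ((measurable_const.indicator (measurableSet_QQ δ r l)))
  rw [lintegral_indicator_const (measurableSet_Emin a j) (1:ℝ≥0∞),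
    lintegral_indicator_const (measurableSet_QQ δ r l) (1:ℝ≥0∞), one_mul, one_mul] at key
  rw [← QQ_measure (μ := μ) hrl, ← key]
  have hpt : ∀ u : Fin (j + l) → ℝ,
      (Set.indicator (Emin a j) (fun _ => (1:ℝ≥0∞)) (fun a_1 => u (Fin.castAdd l a_1))) *
        (Set.indicator (QQ δ r l) (fun _ => (1:ℝ≥0∞)) (fun b => u (Fin.natAdd j b)))
      = Set.indicator (HH a δ r (j + l) j) (fun _ => 1) u := by
    intro u
    have hmem : ((fun a_1 => u (Fin.castAdd l a_1)) ∈ Emin a j ∧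
        (fun b => u (Fin.natAdd j b)) ∈ QQ δ r l) ↔ u ∈ HH a δ r (j + l) j := by
      constructor
      · rintro ⟨⟨h1, h2⟩, h3⟩
        refine ⟨?_, ?_, ?_⟩
        · intro i hi
          rw [ps_head u (le_of_lt hi), ps_head u (le_refl j)]
          exact h1 i hi
        · rwa [ps_head u (le_refl j)]
        · intro t ht1 ht2
          have htl : (t : ℕ) - j < l := by omega
          have : t = Fin.natAdd j ⟨(t : ℕ) - j, htl⟩ := by
            ext; simp [Fin.natAdd]; omega
          rw [this]
          exact h3 ⟨(t : ℕ) - j, htl⟩ (by simpa using by omega)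
      · rintro ⟨h1, h2, h3⟩
        refine ⟨⟨?_, ?_⟩, ?_⟩
        · intro i hi
          rw [← ps_head u (le_of_lt hi), ← ps_head u (le_refl j)]
          exact h1 i hi
        · rwa [← ps_head u (le_refl j)]
        · intro b hb
          exact h3 (Fin.natAdd j b) (by simp) (by simp; omega)
    by_cases hu : u ∈ HH a δ r (j + l) j
    · have := hmem.2 hu
      rw [Set.indicator_of_mem this.1, Set.indicator_of_mem this.2, Set.indicator_of_mem hu]
      simp
    · rw [Set.indicator_of_notMem hu]
      by_cases h1 : (fun a_1 => u (Fin.castAdd l a_1)) ∈ Emin a j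
      · have h2 : (fun b => u (Fin.natAdd j b)) ∉ QQ δ r l := fun h2 => hu (hmem.1 ⟨h1, h2⟩)
        rw [Set.indicator_of_notMem h2, mul_zero]
      · rw [Set.indicator_of_notMem h1, zero_mul]
  rw [lintegral_congr hpt, lintegral_indicator_const (measurableSet_HH a δ r (j + l) j) (1:ℝ≥0∞),
    one_mul]

lemma HH_disjoint {a δ : ℝ} {r N j j' : ℕ} (hδ : 0 < δ) (hr : 1 < r * δ)
    (hN : j + r ≤ N) (hjj' : j + r ≤ j') :
    Disjoint (HH a δ r N j) (HH a δ r N j') := by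
  rw [Set.disjoint_left]
  rintro u ⟨h1, h2, h3⟩ ⟨h1', h2', _⟩
  have desc : ∀ c, c ≤ r → ps u (j + c) ≤ ps u j - c * δ := by
    intro c
    induction c with
    | zero => intro _; simp
    | succ c ih =>
      intro hc
      have hlt : j + c < N := by omega
      rw [show j + (c + 1) = (j + c) + 1 by omega, ps_succ u hlt]
      have hcoord := h3 ⟨j + c, hlt⟩ (by simp) (by simp; omega)
      have hih := ih (by omega)
      push_cast
      linarith
  have hdrop : ps u (j + r) < a := by
    have h4 := desc r (le_refl r)
    have h5 : ps u j ≤ a + 1 := h2.2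
    linarith
  have hle : ps u j' ≤ ps u (j + r) := by
    rcases eq_or_lt_of_le hjj' with he | hlt
    · rw [he]
    · exact h1' (j + r) hlt
  have : a ≤ ps u j' := h2'.1
  linarith

/-- Key counting lemma: the expected number of weak descending ladder epochs whose ladder
height lies in an interval of length 1 is bounded, uniformly in the location of the
interval. -/
lemma weakMinCount (μ : Measure ℝ) [IsProbabilityMeasure μ] (h0 : μ {(0:ℝ)} < 1) :
    ∃ C : ℝ≥0∞, C ≠ ⊤ ∧ ∀ a : ℝ, (∑' j : ℕ, pim μ j (Emin a j)) ≤ C := by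
  by_cases hneg : μ (Set.Iio (0:ℝ)) = 0
  · -- no negative jumps: ladder epochs force all increments to vanish
    refine ⟨(1 - μ {(0:ℝ)})⁻¹, ?_, ?_⟩
    · simp only [ne_eq, ENNReal.inv_eq_top, tsub_eq_zero_iff_le, not_le]
      exact h0
    intro a
    have hbound : ∀ j : ℕ, pim μ j (Emin a j) ≤ (μ {(0:ℝ)}) ^ j := by
      intro j
      have hsub : Emin a j ⊆ (univ.pi fun _ : Fin j => {(0:ℝ)}) ∪
          (⋃ t : Fin j, (fun u : Fin j → ℝ => u t) ⁻¹' Set.Iio 0) := by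
        intro u hu
        by_cases hN : ∃ t : Fin j, u t < 0
        · right
          obtain ⟨t, ht⟩ := hN
          exact Set.mem_iUnion.2 ⟨t, ht⟩
        · left
          push_neg at hN
          have hmono : ∀ i i', i ≤ i' → ps u i ≤ ps u i' := by
            intro i i' hii'
            induction i' with
            | zero => simp_all
            | succ i' ih =>
              rcases Nat.lt_or_ge i' j with hj | hj
              · rcases le_or_gt i i' with hii | hii
                · rw [ps_succ u hj]
                  have := hN ⟨i', hj⟩
                  linarith [ih hii]
                · have : i = i' + 1 := by omega
                  rw [this]
              · rw [ps_stable u (by omega : j ≤ i' + 1)]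
                rcases le_or_gt i i' with hii | hii
                · rw [← ps_stable u hj]; exact ih hii
                · have : i = i' + 1 := by omega
                  rw [this, ps_stable u (by omega : j ≤ i' + 1)]
          have hzero : ∀ i, i ≤ j → ps u i = 0 := by
            intro i hi
            have hji : ps u j ≤ ps u 0 := by
              rcases Nat.eq_zero_or_pos j with hj0 | hj0
              · simp [hj0]
              · exact hu.1 0 hj0
            rw [ps_zero] at hji
            have h1 : 0 ≤ ps u i := by
              have := hmono 0 i (Nat.zero_le i); rwa [ps_zero] at this
            have h2 : ps u i ≤ ps u j := hmono i j hi
            have h3 : 0 ≤ ps u j := le_trans h1 h2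
            have h4 : ps u j = 0 := le_antisymm hji h3
            linarith
          intro t _
          have h5 : ps u ((t : ℕ) + 1) = ps u (t : ℕ) + u t := by
            have := ps_succ u t.2
            simpa using this
          have h6 := hzero (t : ℕ) (le_of_lt t.2)
          have h7 := hzero ((t : ℕ) + 1) t.2
          simp only [Set.mem_singleton_iff]
          linarith
      calc pim μ j (Emin a j)
          ≤ pim μ j ((univ.pi fun _ : Fin j => {(0:ℝ)}) ∪
            (⋃ t : Fin j, (fun u : Fin j → ℝ => u t) ⁻¹' Set.Iio 0)) := measure_mono hsub
        _ ≤ pim μ j (univ.pi fun _ : Fin j => {(0:ℝ)}) +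
            pim μ j (⋃ t : Fin j, (fun u : Fin j → ℝ => u t) ⁻¹' Set.Iio 0) := measure_union_le _ _
        _ ≤ (μ {(0:ℝ)}) ^ j + 0 := by
            gcongr
            · rw [pim_apply_pi]
              simp
            · refine le_of_eq (measure_iUnion_null fun t => ?_)
              have : (fun u : Fin j → ℝ => u t) ⁻¹' Set.Iio 0
                  = univ.pi (Function.update (fun _ : Fin j => (univ : Set ℝ)) t (Set.Iio 0)) := by
                ext u
                simp only [mem_preimage, Set.mem_univ_pi]
                constructor
                · intro hu i
                  by_cases hit : i = t
                  · subst hit; simpa using hu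
                  · simp [Function.update_of_ne hit]
                · intro hu
                  have := hu t
                  simpa using this
              rw [this, pim_apply_pi]
              apply Finset.prod_eq_zero (Finset.mem_univ t)
              simp [hneg]
        _ = (μ {(0:ℝ)}) ^ j := by rw [add_zero]
    calc (∑' j : ℕ, pim μ j (Emin a j)) ≤ ∑' j : ℕ, (μ {(0:ℝ)}) ^ j := ENNReal.tsum_le_tsum hbound
      _ = (1 - μ {(0:ℝ)})⁻¹ := ENNReal.tsum_geometric _
  · -- there are negative jumps : geometric killing of ladder windows
    obtain ⟨δ, hδ, hρ⟩ : ∃ δ : ℝ, 0 < δ ∧ μ (Set.Iic (-δ)) ≠ 0 := by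
      by_contra hcon
      push_neg at hcon
      apply hneg
      have hcover : Set.Iio (0:ℝ) = ⋃ n : ℕ, Set.Iic (-(1 / ((n:ℝ) + 1))) := by
        ext x
        simp only [Set.mem_Iio, Set.mem_iUnion, Set.mem_Iic]
        constructor
        · intro hx
          obtain ⟨n, hn⟩ := exists_nat_one_div_lt (show (0:ℝ) < -x by linarith)
          exact ⟨n, by linarith⟩
        · rintro ⟨n, hn⟩
          have : 0 < 1 / ((n:ℝ) + 1) := by positivity
          linarith
      rw [hcover]
      refine measure_iUnion_null fun n => ?_
      exact hcon (1 / ((n:ℝ) + 1)) (by positivity)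
    set ρ : ℝ≥0∞ := μ (Set.Iic (-δ)) with hρdef
    set r : ℕ := ⌈1/δ⌉₊ + 1 with hrdef
    have hrδ : 1 < (r : ℝ) * δ := by
      have h1 : (1/δ) ≤ (⌈1/δ⌉₊ : ℝ) := Nat.le_ceil _
      have : (r : ℝ) = (⌈1/δ⌉₊ : ℝ) + 1 := by simp [hrdef]
      rw [this]
      have h2 : (1/δ) * δ = 1 := by field_simp
      nlinarith
    refine ⟨(r : ℝ≥0∞) / ρ ^ r, ?_, ?_⟩
    · exact (ENNReal.div_lt_top (by simp) (pow_ne_zero r hρ)).ne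
    intro a
    rw [ENNReal.tsum_eq_iSup_nat]
    refine iSup_le fun n => ?_
    -- embed everything into dimension n + r
    have key : ∀ j, j < n → pim μ (n + r) (HH a δ r (n + r) j) = pim μ j (Emin a j) * ρ ^ r := by
      intro j hj
      have hl : n + r = j + (n + r - j) := by omega
      have hrl : r ≤ n + r - j := by omega
      rw [hl]
      exact HH_split hrl
    have hsum : (∑ j ∈ Finset.range n, pim μ j (Emin a j)) * ρ ^ r ≤ (r : ℝ≥0∞) := by
      rw [Finset.sum_mul]
      have : ∀ j ∈ Finset.range n, pim μ j (Emin a j) * ρ ^ r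
          = pim μ (n + r) (HH a δ r (n + r) j) := by
        intro j hj
        rw [key j (Finset.mem_range.1 hj)]
      rw [Finset.sum_congr rfl this]
      rw [← Finset.sum_fiberwise_of_maps_to (g := fun j => j % r) (t := Finset.range r)
        (fun j _ => Finset.mem_range.2 (Nat.mod_lt j (by omega)))
        (fun j => pim μ (n + r) (HH a δ r (n + r) j))]
      calc ∑ c ∈ Finset.range r, ∑ j ∈ (Finset.range n).filter (fun j => j % r = c),
            pim μ (n + r) (HH a δ r (n + r) j)
          ≤ ∑ c ∈ Finset.range r, 1 := by
            refine Finset.sum_le_sum fun c _ => ?_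
            rw [← measure_biUnion_finset ?_ (fun j _ => measurableSet_HH a δ r (n + r) j)]
            · exact prob_le_one
            · intro j hj j' hj' hne
              simp only [Finset.coe_filter, Finset.mem_range, mem_setOf_eq] at hj hj'
              have gap : ∀ p q : ℕ, p < q → p % r = q % r → p + r ≤ q := by
                intro p q hpq hmod
                have hdvd : r ∣ (q - p) := (Nat.modEq_iff_dvd' (le_of_lt hpq)).1 hmod
                have := Nat.le_of_dvd (by omega) hdvd
                omega
              rcases Nat.lt_or_ge j j' with hlt | hge
              · exact HH_disjoint hδ (by exact_mod_cast hrδ) (by omega)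
                  (gap j j' hlt (by omega))
              · have hlt : j' < j := by omega
                exact (HH_disjoint hδ (by exact_mod_cast hrδ) (by omega)
                  (gap j' j hlt (by omega))).symm
        _ ≤ (r : ℝ≥0∞) := by simp
    have hfin : (∑ j ∈ Finset.range n, pim μ j (Emin a j)) ≤ (r : ℝ≥0∞) / ρ ^ r := by
      rw [ENNReal.le_div_iff_mul_le (Or.inl (pow_ne_zero r hρ))
        (Or.inl (by
          refine (ENNReal.pow_ne_top ?_)
          exact (measure_lt_top μ _).ne))]
      exact hsum
    exact hfin


/-! ### Counting weak ascending ladder points, by reflection -/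

def Emax (a : ℝ) (j : ℕ) : Set (Fin j → ℝ) :=
  {u | (∀ i, i < j → ps u i ≤ ps u j) ∧ ps u j ∈ Set.Icc a (a + 1)}

lemma measurableSet_Emax (a : ℝ) (j : ℕ) : MeasurableSet (Emax a j) := by
  have : Emax a j = (⋂ i, ⋂ (_ : i < j), {u : Fin j → ℝ | ps u i ≤ ps u j}) ∩
      ((fun u : Fin j → ℝ => ps u j) ⁻¹' Set.Icc a (a + 1)) := by
    ext u; simp [Emax]
  rw [this]
  exact (MeasurableSet.iInter fun i => MeasurableSet.iInter fun _ =>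
    measurableSet_le measurable_ps measurable_ps).inter (measurable_ps measurableSet_Icc)

lemma weakMaxCount (μ : Measure ℝ) [IsProbabilityMeasure μ] (h0 : μ {(0:ℝ)} < 1) :
    ∃ C : ℝ≥0∞, C ≠ ⊤ ∧ ∀ a : ℝ, (∑' j : ℕ, pim μ j (Emax a j)) ≤ C := by
  set ν : Measure ℝ := μ.map (fun x : ℝ => -x) with hν
  have : IsProbabilityMeasure ν := Measure.isProbabilityMeasure_map measurable_neg.aemeasurable
  have hν0 : ν {(0:ℝ)} < 1 := by
    have : ν {(0:ℝ)} = μ {(0:ℝ)} := by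
      rw [hν, Measure.map_apply measurable_neg (measurableSet_singleton _)]
      congr 1
      ext y; simp [neg_eq_iff_eq_neg]
    rwa [this]
  obtain ⟨C, hC, hCa⟩ := weakMinCount ν hν0
  refine ⟨C, hC, fun a => ?_⟩
  have heq : ∀ j : ℕ, pim μ j (Emax a j) = pim ν j (Emin (-(a+1)) j) := by
    intro j
    have hmap : pim ν j = (pim μ j).map (fun (u : Fin j → ℝ) (i : Fin j) => -(u i)) :=
      (pim_map_neg j).symm
    rw [hmap, Measure.map_apply
      (show Measurable (fun (u : Fin j → ℝ) (i : Fin j) => -(u i)) from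
        measurable_pi_lambda _ fun i => (measurable_pi_apply i).neg)
      (measurableSet_Emin _ j)]
    congr 1
    ext u
    simp only [Emin, Emax, mem_preimage, mem_setOf_eq, Set.mem_Icc]
    constructor
    · rintro ⟨h1, h2, h3⟩
      refine ⟨fun i hi => ?_, ?_, ?_⟩
      · rw [ps_neg u j, ps_neg u i]
        exact neg_le_neg (h1 i hi)
      · rw [ps_neg u j]; linarith
      · rw [ps_neg u j]; linarith
    · rintro ⟨h1, h2, h3⟩
      rw [ps_neg u j] at h2 h3
      refine ⟨fun i hi => ?_, by linarith, by linarith⟩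
      · have := h1 i hi
        rw [ps_neg u j, ps_neg u i] at this
        linarith
  calc (∑' j : ℕ, pim μ j (Emax a j)) = ∑' j : ℕ, pim ν j (Emin (-(a+1)) j) := by
        exact tsum_congr heq
    _ ≤ C := hCa _

/-! ### Bounding the weighted sums via the counting lemmas -/

/-- The decay factor `e⁻¹` as an extended nonneg real. -/
noncomputable def qq : ℝ≥0∞ := ENNReal.ofReal (Real.exp (-1))

lemma qq_lt_one : qq < 1 := by
  rw [qq, ENNReal.ofReal_lt_one, Real.exp_lt_one_iff]
  norm_num

lemma geom_ne_top : (1 - qq)⁻¹ ≠ ⊤ := by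
  simp only [ne_eq, ENNReal.inv_eq_top, tsub_eq_zero_iff_le, not_le]
  exact qq_lt_one

variable {μ : Measure ℝ} [IsProbabilityMeasure μ]

/-- Generic per-dimension bound: an integral of `e^{-g}` over an event is dominated by
a geometric sum over the level sets of `g`. -/
lemma per_dim_bound {k : ℕ} {S : Set (Fin k → ℝ)} {g : (Fin k → ℝ) → ℝ}
    (hS : MeasurableSet S) (hg : Measurable g) {D : ℕ → Set (Fin k → ℝ)}
    (hD : ∀ m, MeasurableSet (D m))
    (hsub : ∀ u ∈ S, 0 ≤ g u ∧ ∀ m : ℕ, (m : ℝ) ≤ g u → g u < m + 1 → u ∈ D m) :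
    ∫⁻ u, Set.indicator S (fun u => ENNReal.ofReal (Real.exp (-(g u)))) u ∂pim μ k
      ≤ ∑' m : ℕ, qq ^ m * pim μ k (D m) := by
  have hpt : ∀ u, Set.indicator S (fun u => ENNReal.ofReal (Real.exp (-(g u)))) u
      ≤ ∑' m : ℕ, qq ^ m * Set.indicator (D m) (fun _ => 1) u := by
    intro u
    by_cases hu : u ∈ S
    · rw [Set.indicator_of_mem hu]
      obtain ⟨hg0, hmem⟩ := hsub u hu
      set m : ℕ := ⌊g u⌋₊ with hm
      have h1 : (m : ℝ) ≤ g u := Nat.floor_le hg0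
      have h2 : g u < m + 1 := Nat.lt_floor_add_one _
      have hDm : u ∈ D m := hmem m h1 h2
      have hval : ENNReal.ofReal (Real.exp (-(g u))) ≤ qq ^ m * Set.indicator (D m) (fun _ => 1) u := by
        rw [Set.indicator_of_mem hDm, mul_one, qq, ← ENNReal.ofReal_pow (Real.exp_nonneg _),
          ← Real.exp_nat_mul]
        apply ENNReal.ofReal_le_ofReal
        apply Real.exp_le_exp.2
        push_cast
        linarith
      exact le_trans hval (ENNReal.le_tsum m)
    · rw [Set.indicator_of_notMem hu]
      exact zero_le
  calc ∫⁻ u, Set.indicator S (fun u => ENNReal.ofReal (Real.exp (-(g u)))) u ∂pim μ k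
      ≤ ∫⁻ u, ∑' m : ℕ, qq ^ m * Set.indicator (D m) (fun _ => 1) u ∂pim μ k :=
        lintegral_mono hpt
    _ = ∑' m : ℕ, ∫⁻ u, qq ^ m * Set.indicator (D m) (fun _ => 1) u ∂pim μ k :=
        lintegral_tsum fun m =>
          ((measurable_const.indicator (hD m)).const_mul _).aemeasurable
    _ = ∑' m : ℕ, qq ^ m * pim μ k (D m) := by
        refine tsum_congr fun m => ?_
        rw [lintegral_const_mul _ (measurable_const.indicator (hD m)),
          lintegral_indicator_const (hD m), one_mul]

/-- The first factor (descending-ladder factor): uniformly bounded in `x`. -/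
lemma boundA (μ : Measure ℝ) [IsProbabilityMeasure μ] (h0 : μ {(0:ℝ)} < 1) :
    ∃ CA : ℝ≥0∞, CA ≠ ⊤ ∧ ∀ x : ℝ,
      (∑' j : ℕ, ∫⁻ w, Set.indicator
          {w : Fin j → ℝ | (∀ i, i < j → ps w j < ps w i) ∧ 0 ≤ ps w j + x}
          (fun w => ENNReal.ofReal (Real.exp (-(ps w j + x)))) w ∂pim μ j) ≤ CA := by
  obtain ⟨C, hC, hCa⟩ := weakMinCount μ h0
  refine ⟨(1 - qq)⁻¹ * C, ENNReal.mul_ne_top geom_ne_top hC, fun x => ?_⟩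
  have hAset : ∀ j : ℕ, MeasurableSet
      {w : Fin j → ℝ | (∀ i, i < j → ps w j < ps w i) ∧ 0 ≤ ps w j + x} := by
    intro j
    have : {w : Fin j → ℝ | (∀ i, i < j → ps w j < ps w i) ∧ 0 ≤ ps w j + x}
        = (⋂ i, ⋂ (_ : i < j), {w : Fin j → ℝ | ps w j < ps w i}) ∩
          {w : Fin j → ℝ | 0 ≤ ps w j + x} := by
      ext w; simp
    rw [this]
    exact (MeasurableSet.iInter fun i => MeasurableSet.iInter fun _ =>
      measurableSet_lt measurable_ps measurable_ps).inter
      (measurableSet_le measurable_const (measurable_ps.add_const x))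
  have hper : ∀ j : ℕ, ∫⁻ w, Set.indicator
        {w : Fin j → ℝ | (∀ i, i < j → ps w j < ps w i) ∧ 0 ≤ ps w j + x}
        (fun w => ENNReal.ofReal (Real.exp (-(ps w j + x)))) w ∂pim μ j
      ≤ ∑' m : ℕ, qq ^ m * pim μ j (Emin ((m : ℝ) - x) j) := by
    intro j
    refine per_dim_bound (hAset j) (measurable_ps.add_const x)
      (fun m => measurableSet_Emin _ j) ?_
    rintro w ⟨h1, h2⟩
    refine ⟨h2, fun m hm1 hm2 => ?_⟩
    refine ⟨fun i hi => le_of_lt (h1 i hi), ?_, ?_⟩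
    · linarith
    · linarith
  calc (∑' j : ℕ, ∫⁻ w, Set.indicator
          {w : Fin j → ℝ | (∀ i, i < j → ps w j < ps w i) ∧ 0 ≤ ps w j + x}
          (fun w => ENNReal.ofReal (Real.exp (-(ps w j + x)))) w ∂pim μ j)
      ≤ ∑' j : ℕ, ∑' m : ℕ, qq ^ m * pim μ j (Emin ((m : ℝ) - x) j) :=
        ENNReal.tsum_le_tsum hper
    _ = ∑' m : ℕ, ∑' j : ℕ, qq ^ m * pim μ j (Emin ((m : ℝ) - x) j) := ENNReal.tsum_comm
    _ = ∑' m : ℕ, qq ^ m * ∑' j : ℕ, pim μ j (Emin ((m : ℝ) - x) j) := by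
        exact tsum_congr fun m => ENNReal.tsum_mul_left
    _ ≤ ∑' m : ℕ, qq ^ m * C :=
        ENNReal.tsum_le_tsum fun m => mul_le_mul_right (hCa _) _
    _ = (∑' m : ℕ, qq ^ m) * C := ENNReal.tsum_mul_right
    _ = (1 - qq)⁻¹ * C := by rw [ENNReal.tsum_geometric]

/-- The second factor (staying-nonnegative factor with exponential weight). -/
lemma boundB (μ : Measure ℝ) [IsProbabilityMeasure μ] (h0 : μ {(0:ℝ)} < 1) :
    ∃ CB : ℝ≥0∞, CB ≠ ⊤ ∧
      (∑' l : ℕ, ∫⁻ v, Set.indicator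
          {v : Fin l → ℝ | ∀ i, i ≤ l → 0 ≤ ps v i}
          (fun v => ENNReal.ofReal (Real.exp (-(ps v l)))) v ∂pim μ l) ≤ CB := by
  obtain ⟨C, hC, hCa⟩ := weakMaxCount μ h0
  refine ⟨(1 - qq)⁻¹ * C, ENNReal.mul_ne_top geom_ne_top hC, ?_⟩
  have hBset : ∀ l : ℕ, MeasurableSet {v : Fin l → ℝ | ∀ i, i ≤ l → 0 ≤ ps v i} := by
    intro l
    have : {v : Fin l → ℝ | ∀ i, i ≤ l → 0 ≤ ps v i}
        = ⋂ i, ⋂ (_ : i ≤ l), {v : Fin l → ℝ | 0 ≤ ps v i} := by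
      ext v; simp
    rw [this]
    exact MeasurableSet.iInter fun i => MeasurableSet.iInter fun _ =>
      measurableSet_le measurable_const measurable_ps
  have hrev : ∀ l : ℕ, ∫⁻ v, Set.indicator
        {v : Fin l → ℝ | ∀ i, i ≤ l → 0 ≤ ps v i}
        (fun v => ENNReal.ofReal (Real.exp (-(ps v l)))) v ∂pim μ l
      = ∫⁻ u, Set.indicator
        {u : Fin l → ℝ | ∀ i, i < l → ps u i ≤ ps u l}
        (fun u => ENNReal.ofReal (Real.exp (-(ps u l)))) u ∂pim μ l := by
    intro l
    have hmble : Measurable (fun v : Fin l → ℝ => Set.indicator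
        {v : Fin l → ℝ | ∀ i, i ≤ l → 0 ≤ ps v i}
        (fun v => ENNReal.ofReal (Real.exp (-(ps v l)))) v) :=
      ((measurable_ps.neg.exp).ennreal_ofReal).indicator (hBset l)
    conv_lhs => rw [← pim_map_rev (μ := μ) l]
    rw [lintegral_map hmble measurable_revmap]
    refine lintegral_congr fun u => ?_
    have hcond : ((fun i : Fin l => u (Fin.rev i)) ∈
        {v : Fin l → ℝ | ∀ i, i ≤ l → 0 ≤ ps v i})
        ↔ (u ∈ {u : Fin l → ℝ | ∀ i, i < l → ps u i ≤ ps u l}) := by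
      simp only [mem_setOf_eq]
      constructor
      · intro h i hi
        have := h (l - i) (by omega)
        rw [ps_rev u (by omega : l - i ≤ l)] at this
        have hll : l - (l - i) = i := by omega
        rw [hll] at this
        linarith
      · intro h i hi
        rw [ps_rev u hi]
        rcases Nat.lt_or_ge (l - i) l with hli | hli
        · have := h (l - i) hli
          linarith
        · have : l - i = l := by omega
          rw [this]
          simp
    have hval : ps (fun i : Fin l => u (Fin.rev i)) l = ps u l := by
      rw [ps_rev u (le_refl l)]
      simp [ps_zero]
    by_cases hu : (fun i : Fin l => u (Fin.rev i)) ∈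
        {v : Fin l → ℝ | ∀ i, i ≤ l → 0 ≤ ps v i}
    · rw [Set.indicator_of_mem hu, Set.indicator_of_mem (hcond.1 hu), hval]
    · rw [Set.indicator_of_notMem hu,
        Set.indicator_of_notMem (fun hmem => hu (hcond.2 hmem))]
  have hper : ∀ l : ℕ, ∫⁻ u, Set.indicator
        {u : Fin l → ℝ | ∀ i, i < l → ps u i ≤ ps u l}
        (fun u => ENNReal.ofReal (Real.exp (-(ps u l)))) u ∂pim μ l
      ≤ ∑' m : ℕ, qq ^ m * pim μ l (Emax (m : ℝ) l) := by
    intro l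
    have hset : MeasurableSet {u : Fin l → ℝ | ∀ i, i < l → ps u i ≤ ps u l} := by
      have : {u : Fin l → ℝ | ∀ i, i < l → ps u i ≤ ps u l}
          = ⋂ i, ⋂ (_ : i < l), {u : Fin l → ℝ | ps u i ≤ ps u l} := by
        ext u; simp
      rw [this]
      exact MeasurableSet.iInter fun i => MeasurableSet.iInter fun _ =>
        measurableSet_le measurable_ps measurable_ps
    refine per_dim_bound hset measurable_ps (fun m => measurableSet_Emax _ l) ?_
    intro u hu
    have h0l : 0 ≤ ps u l := by
      rcases Nat.eq_zero_or_pos l with hl | hl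
      · subst hl; rw [ps_zero]
      · have := hu 0 hl
        rwa [ps_zero] at this
    exact ⟨h0l, fun m hm1 hm2 => ⟨hu, by constructor <;> [linarith; linarith]⟩⟩
  calc (∑' l : ℕ, ∫⁻ v, Set.indicator
          {v : Fin l → ℝ | ∀ i, i ≤ l → 0 ≤ ps v i}
          (fun v => ENNReal.ofReal (Real.exp (-(ps v l)))) v ∂pim μ l)
      ≤ ∑' l : ℕ, ∑' m : ℕ, qq ^ m * pim μ l (Emax (m : ℝ) l) := by
        refine ENNReal.tsum_le_tsum fun l => ?_
        rw [hrev l]; exact hper l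
    _ = ∑' m : ℕ, ∑' l : ℕ, qq ^ m * pim μ l (Emax (m : ℝ) l) := ENNReal.tsum_comm
    _ = ∑' m : ℕ, qq ^ m * ∑' l : ℕ, pim μ l (Emax (m : ℝ) l) :=
        tsum_congr fun m => ENNReal.tsum_mul_left
    _ ≤ ∑' m : ℕ, qq ^ m * C :=
        ENNReal.tsum_le_tsum fun m => mul_le_mul_right (hCa _) _
    _ = (∑' m : ℕ, qq ^ m) * C := ENNReal.tsum_mul_right
    _ = (1 - qq)⁻¹ * C := by rw [ENNReal.tsum_geometric]


/-! ### The decomposition at the first minimum -/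

/-- The first factor integrand set. -/
def Aset (x : ℝ) (j : ℕ) : Set (Fin j → ℝ) :=
  {w | (∀ i, i < j → ps w j < ps w i) ∧ 0 ≤ ps w j + x}

/-- The second factor integrand set. -/
def Bset (l : ℕ) : Set (Fin l → ℝ) := {v | ∀ i, i ≤ l → 0 ≤ ps v i}

noncomputable def AI (μ : Measure ℝ) (x : ℝ) (j : ℕ) : ℝ≥0∞ :=
  ∫⁻ w, Set.indicator (Aset x j) (fun w => ENNReal.ofReal (Real.exp (-(ps w j + x)))) w ∂pim μ j

noncomputable def BI (μ : Measure ℝ) (l : ℕ) : ℝ≥0∞ :=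
  ∫⁻ v, Set.indicator (Bset l) (fun v => ENNReal.ofReal (Real.exp (-(ps v l)))) v ∂pim μ l

lemma measurableSet_Aset (x : ℝ) (j : ℕ) : MeasurableSet (Aset x j) := by
  have : Aset x j = (⋂ i, ⋂ (_ : i < j), {w : Fin j → ℝ | ps w j < ps w i}) ∩
      {w : Fin j → ℝ | 0 ≤ ps w j + x} := by
    ext w; simp [Aset]
  rw [this]
  exact (MeasurableSet.iInter fun i => MeasurableSet.iInter fun _ =>
    measurableSet_lt measurable_ps measurable_ps).inter
    (measurableSet_le measurable_const (measurable_ps.add_const x))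

lemma measurableSet_Bset (l : ℕ) : MeasurableSet (Bset l) := by
  have : Bset l = ⋂ i, ⋂ (_ : i ≤ l), {v : Fin l → ℝ | 0 ≤ ps v i} := by
    ext v; simp [Bset]
  rw [this]
  exact MeasurableSet.iInter fun i => MeasurableSet.iInter fun _ =>
    measurableSet_le measurable_const measurable_ps

/-- Pointwise decomposition of the surviving weight according to the first epoch at which
the walk attains its minimum. -/
lemma pointwise_decomp (x : ℝ) (k : ℕ) (u : Fin k → ℝ) :
    Set.indicator {u : Fin k → ℝ | ∀ i, i ≤ k → 0 ≤ ps u i + x}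
      (fun u => ENNReal.ofReal (Real.exp (-(ps u k + x)))) u
    = ∑ j ∈ Finset.range (k + 1),
        (Set.indicator {u : Fin k → ℝ | (∀ i, i < j → ps u j < ps u i) ∧ 0 ≤ ps u j + x}
          (fun u => ENNReal.ofReal (Real.exp (-(ps u j + x)))) u) *
        (Set.indicator {u : Fin k → ℝ | ∀ i, j ≤ i → i ≤ k → ps u j ≤ ps u i}
          (fun u => ENNReal.ofReal (Real.exp (-(ps u k - ps u j)))) u) := by
  classical
  have hex : ∃ j, j ≤ k ∧ ∀ i, i ≤ k → ps u j ≤ ps u i := by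
    obtain ⟨j₀, hj₀mem, hj₀min⟩ :=
      Finset.exists_min_image (Finset.range (k + 1)) (ps u) ⟨0, by simp⟩
    refine ⟨j₀, Nat.lt_succ_iff.mp (Finset.mem_range.1 hj₀mem), fun i hi => ?_⟩
    exact hj₀min i (Finset.mem_range.2 (by omega))
  set j₀ : ℕ := Nat.find hex with hj₀def
  obtain ⟨hj₀k, hj₀min⟩ := Nat.find_spec hex
  have hstrict : ∀ i, i < j₀ → ps u j₀ < ps u i := by
    intro i hi
    by_contra hcon
    push_neg at hcon
    exact Nat.find_min hex hi ⟨by omega, fun i' hi' => le_trans hcon (hj₀min i' hi')⟩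
  rw [Finset.sum_eq_single_of_mem j₀ (Finset.mem_range.2 (by omega))]
  · -- the term at j₀
    have hBmem : u ∈ {u : Fin k → ℝ | ∀ i, j₀ ≤ i → i ≤ k → ps u j₀ ≤ ps u i} :=
      fun i _ hik => hj₀min i hik
    rw [Set.indicator_of_mem hBmem]
    by_cases hL : u ∈ {u : Fin k → ℝ | ∀ i, i ≤ k → 0 ≤ ps u i + x}
    · have hAmem : u ∈ {u : Fin k → ℝ | (∀ i, i < j₀ → ps u j₀ < ps u i) ∧ 0 ≤ ps u j₀ + x} :=
        ⟨hstrict, hL j₀ hj₀k⟩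
      rw [Set.indicator_of_mem hL, Set.indicator_of_mem hAmem,
        ← ENNReal.ofReal_mul (Real.exp_nonneg _), ← Real.exp_add]
      congr 2
      ring
    · have hAnot : u ∉ {u : Fin k → ℝ | (∀ i, i < j₀ → ps u j₀ < ps u i) ∧ 0 ≤ ps u j₀ + x} := by
        intro hA
        apply hL
        intro i hik
        have h5 := hj₀min i hik
        have h6 := hA.2
        show 0 ≤ ps u i + x
        linarith
      rw [Set.indicator_of_notMem hL, Set.indicator_of_notMem hAnot, zero_mul]
  · -- all other terms vanish
    intro b hb hbne
    rcases Nat.lt_or_ge b j₀ with hblt | hbge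
    · by_cases hA : u ∈ {u : Fin k → ℝ | (∀ i, i < b → ps u b < ps u i) ∧ 0 ≤ ps u b + x}
      · by_cases hB : u ∈ {u : Fin k → ℝ | ∀ i, b ≤ i → i ≤ k → ps u b ≤ ps u i}
        · exfalso
          refine Nat.find_min hex hblt ⟨?_, fun i hi => ?_⟩
          · have := Finset.mem_range.1 hb; omega
          · rcases Nat.lt_or_ge i b with hib | hib
            · exact le_of_lt (hA.1 i hib)
            · exact hB i hib hi
        · rw [Set.indicator_of_notMem hB, mul_zero]
      · rw [Set.indicator_of_notMem hA, zero_mul]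
    · have hbgt : j₀ < b := by omega
      have hA : u ∉ {u : Fin k → ℝ | (∀ i, i < b → ps u b < ps u i) ∧ 0 ≤ ps u b + x} := by
        rintro ⟨h1, _⟩
        have h2 := h1 j₀ hbgt
        have h3 := hj₀min b (by have := Finset.mem_range.1 hb; omega)
        linarith
      rw [Set.indicator_of_notMem hA, zero_mul]

/-- Integral decomposition: the weight at horizon `j + l` factorizes. -/
lemma term_split (μ : Measure ℝ) [IsProbabilityMeasure μ] (x : ℝ) (j l : ℕ) :
    ∫⁻ u : Fin (j + l) → ℝ,
        (Set.indicator {u : Fin (j+l) → ℝ | (∀ i, i < j → ps u j < ps u i) ∧ 0 ≤ ps u j + x}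
          (fun u => ENNReal.ofReal (Real.exp (-(ps u j + x)))) u) *
        (Set.indicator {u : Fin (j+l) → ℝ | ∀ i, j ≤ i → i ≤ j + l → ps u j ≤ ps u i}
          (fun u => ENNReal.ofReal (Real.exp (-(ps u (j+l) - ps u j)))) u) ∂pim μ (j + l)
      = AI μ x j * BI μ l := by
  have key := lintegral_split (μ := μ) (j := j) (l := l)
    (F := Set.indicator (Aset x j) (fun w => ENNReal.ofReal (Real.exp (-(ps w j + x)))))
    (G := Set.indicator (Bset l) (fun v => ENNReal.ofReal (Real.exp (-(ps v l)))))
    (((measurable_ps.add_const x).neg.exp.ennreal_ofReal).indicator (measurableSet_Aset x j))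
    ((measurable_ps.neg.exp.ennreal_ofReal).indicator (measurableSet_Bset l))
  rw [AI, BI, ← key]
  refine lintegral_congr fun u => ?_
  have hA : (Set.indicator {u : Fin (j+l) → ℝ | (∀ i, i < j → ps u j < ps u i) ∧ 0 ≤ ps u j + x}
        (fun u => ENNReal.ofReal (Real.exp (-(ps u j + x)))) u)
      = Set.indicator (Aset x j) (fun w => ENNReal.ofReal (Real.exp (-(ps w j + x))))
        (fun a => u (Fin.castAdd l a)) := by
    have hmem : (u ∈ {u : Fin (j+l) → ℝ | (∀ i, i < j → ps u j < ps u i) ∧ 0 ≤ ps u j + x})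
        ↔ ((fun a => u (Fin.castAdd l a)) ∈ Aset x j) := by
      simp only [Aset, mem_setOf_eq]
      constructor
      · rintro ⟨h1, h2⟩
        refine ⟨fun i hi => ?_, ?_⟩
        · rw [← ps_head u (le_of_lt hi), ← ps_head u (le_refl j)]
          exact h1 i hi
        · rwa [← ps_head u (le_refl j)]
      · rintro ⟨h1, h2⟩
        refine ⟨fun i hi => ?_, ?_⟩
        · rw [ps_head u (le_of_lt hi), ps_head u (le_refl j)]
          exact h1 i hi
        · rwa [ps_head u (le_refl j)]
    by_cases hu : u ∈ {u : Fin (j+l) → ℝ | (∀ i, i < j → ps u j < ps u i) ∧ 0 ≤ ps u j + x}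
    · rw [Set.indicator_of_mem hu, Set.indicator_of_mem (hmem.1 hu),
        ps_head u (le_refl j)]
    · rw [Set.indicator_of_notMem hu,
        Set.indicator_of_notMem (fun h => hu (hmem.2 h))]
  have hB : (Set.indicator {u : Fin (j+l) → ℝ | ∀ i, j ≤ i → i ≤ j + l → ps u j ≤ ps u i}
        (fun u => ENNReal.ofReal (Real.exp (-(ps u (j+l) - ps u j)))) u)
      = Set.indicator (Bset l) (fun v => ENNReal.ofReal (Real.exp (-(ps v l))))
        (fun b => u (Fin.natAdd j b)) := by
    have hmem : (u ∈ {u : Fin (j+l) → ℝ | ∀ i, j ≤ i → i ≤ j + l → ps u j ≤ ps u i})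
        ↔ ((fun b => u (Fin.natAdd j b)) ∈ Bset l) := by
      simp only [Bset, mem_setOf_eq]
      constructor
      · intro h i hi
        have := h (j + i) (by omega) (by omega)
        rw [ps_tail u i] at this
        linarith
      · intro h i hji hik
        have := h (i - j) (by omega)
        have heq : j + (i - j) = i := by omega
        rw [← heq]
        rw [ps_tail u (i - j)]
        linarith
    have hval : ps u (j + l) - ps u j = ps (fun b => u (Fin.natAdd j b)) l := by
      rw [ps_tail u l]; ring
    by_cases hu : u ∈ {u : Fin (j+l) → ℝ | ∀ i, j ≤ i → i ≤ j + l → ps u j ≤ ps u i}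
    · rw [Set.indicator_of_mem hu, Set.indicator_of_mem (hmem.1 hu), hval]
    · rw [Set.indicator_of_notMem hu,
        Set.indicator_of_notMem (fun h => hu (hmem.2 h))]
  rw [hA, hB]

/-- Full decomposition of the horizon-`k` weight. -/
lemma decomp (μ : Measure ℝ) [IsProbabilityMeasure μ] (x : ℝ) (k : ℕ) :
    ∫⁻ u, Set.indicator {u : Fin k → ℝ | ∀ i, i ≤ k → 0 ≤ ps u i + x}
      (fun u => ENNReal.ofReal (Real.exp (-(ps u k + x)))) u ∂pim μ k
    = ∑ j ∈ Finset.range (k + 1), AI μ x j * BI μ (k - j) := by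
  have hmA : ∀ j : ℕ, Measurable (fun u : Fin k → ℝ =>
      Set.indicator {u : Fin k → ℝ | (∀ i, i < j → ps u j < ps u i) ∧ 0 ≤ ps u j + x}
        (fun u => ENNReal.ofReal (Real.exp (-(ps u j + x)))) u) := by
    intro j
    refine ((measurable_ps.add_const x).neg.exp.ennreal_ofReal).indicator ?_
    have : {u : Fin k → ℝ | (∀ i, i < j → ps u j < ps u i) ∧ 0 ≤ ps u j + x}
        = (⋂ i, ⋂ (_ : i < j), {u : Fin k → ℝ | ps u j < ps u i}) ∩
          {u : Fin k → ℝ | 0 ≤ ps u j + x} := by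
      ext u; simp
    rw [this]
    exact (MeasurableSet.iInter fun i => MeasurableSet.iInter fun _ =>
      measurableSet_lt measurable_ps measurable_ps).inter
      (measurableSet_le measurable_const (measurable_ps.add_const x))
  have hmB : ∀ j : ℕ, Measurable (fun u : Fin k → ℝ =>
      Set.indicator {u : Fin k → ℝ | ∀ i, j ≤ i → i ≤ k → ps u j ≤ ps u i}
        (fun u => ENNReal.ofReal (Real.exp (-(ps u k - ps u j)))) u) := by
    intro j
    refine ((measurable_ps.sub measurable_ps).neg.exp.ennreal_ofReal).indicator ?_
    have : {u : Fin k → ℝ | ∀ i, j ≤ i → i ≤ k → ps u j ≤ ps u i}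
        = ⋂ i, ⋂ (_ : j ≤ i), ⋂ (_ : i ≤ k), {u : Fin k → ℝ | ps u j ≤ ps u i} := by
      ext u; simp
    rw [this]
    exact MeasurableSet.iInter fun i => MeasurableSet.iInter fun _ =>
      MeasurableSet.iInter fun _ => measurableSet_le measurable_ps measurable_ps
  rw [lintegral_congr (pointwise_decomp x k),
    lintegral_finset_sum _ (fun j _ => (hmA j).fun_mul (hmB j))]
  refine Finset.sum_congr rfl fun j hj => ?_
  have hjk : j ≤ k := by have := Finset.mem_range.1 hj; omega
  obtain ⟨l, hl⟩ : ∃ l, k = j + l := ⟨k - j, by omega⟩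
  subst hl
  rw [show j + l - j = l from by omega]
  exact term_split μ x j l


/-! ### Transfer from the abstract probability space, and summation bookkeeping -/

lemma vector_law {Ω : Type*} [MeasurableSpace Ω] (P : Measure Ω) [IsProbabilityMeasure P]
    (X : ℕ → Ω → ℝ) (hmeas : ∀ i, Measurable (X i))
    (hindep : iIndepFun X P)
    (hident : ∀ i j, IdentDistrib (X i) (X j) P P) (k : ℕ) :
    P.map (fun ω (i : Fin k) => X (i : ℕ) ω) = pim (P.map (X 0)) k := by
  classical
  symm
  unfold pim
  refine Measure.pi_eq fun s hs => ?_
  have hV : Measurable (fun ω (i : Fin k) => X (i : ℕ) ω) :=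
    measurable_pi_lambda _ fun i => hmeas i
  rw [Measure.map_apply hV (MeasurableSet.univ_pi hs)]
  set sets : ℕ → Set ℝ := fun t => if h : t < k then s ⟨t, h⟩ else univ with hsets
  have hsetsm : ∀ t, t ∈ Finset.range k → MeasurableSet (sets t) := by
    intro t ht
    rw [hsets]
    simp only
    rw [dif_pos (Finset.mem_range.1 ht)]
    exact hs _
  have hpre : (fun ω (i : Fin k) => X (i : ℕ) ω) ⁻¹' (univ.pi s)
      = ⋂ t ∈ Finset.range k, X t ⁻¹' sets t := by
    ext ω
    simp only [mem_preimage, Set.mem_univ_pi, Set.mem_iInter, Finset.mem_range]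
    constructor
    · intro h t ht
      simp only [hsets, mem_preimage]
      rw [dif_pos ht]
      exact h ⟨t, ht⟩
    · intro h i
      have := h (i : ℕ) i.2
      simp only [hsets, mem_preimage] at this
      rw [dif_pos i.2] at this
      simpa using this
  rw [hpre, hindep.measure_inter_preimage_eq_mul (Finset.range k) hsetsm]
  have hfac : ∀ t, t ∈ Finset.range k → P (X t ⁻¹' sets t) = (P.map (X 0)) (sets t) := by
    intro t ht
    rw [← (hident t 0).map_eq, Measure.map_apply (hmeas t) (hsetsm t ht)]
  rw [Finset.prod_congr rfl hfac]
  rw [← Fin.prod_univ_eq_prod_range (fun t => (P.map (X 0)) (sets t)) k]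
  refine Finset.prod_congr rfl fun i _ => ?_
  congr 1
  rw [hsets]
  simp only
  rw [dif_pos i.2]

lemma tsum_range_split (f g : ℕ → ℝ≥0∞) :
    ∑' k : ℕ, ∑ j ∈ Finset.range (k + 1), f j * g (k - j)
      = (∑' j : ℕ, f j) * ∑' l : ℕ, g l := by
  have h1 : ∀ k : ℕ, (∑ j ∈ Finset.range (k + 1), f j * g (k - j))
      = ∑' j : ℕ, if j ≤ k then f j * g (k - j) else 0 := by
    intro k
    rw [tsum_eq_sum (s := Finset.range (k + 1))
      (fun b hb => by rw [if_neg (by simpa [Nat.lt_succ_iff] using hb)])]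
    exact (Finset.sum_congr rfl fun j hj =>
      (if_pos (Nat.lt_succ_iff.mp (Finset.mem_range.1 hj)))).symm
  calc ∑' k : ℕ, ∑ j ∈ Finset.range (k + 1), f j * g (k - j)
      = ∑' k : ℕ, ∑' j : ℕ, if j ≤ k then f j * g (k - j) else 0 := tsum_congr h1
    _ = ∑' j : ℕ, ∑' k : ℕ, if j ≤ k then f j * g (k - j) else 0 := ENNReal.tsum_comm
    _ = ∑' j : ℕ, ∑' l : ℕ, f j * g l := by
        refine tsum_congr fun j => ?_
        have hinj : Function.Injective (fun l : ℕ => j + l) := fun a b h => by simp only [] at h; omega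
        have hsupp : Function.support (fun k : ℕ => if j ≤ k then f j * g (k - j) else 0)
            ⊆ Set.range (fun l : ℕ => j + l) := by
          intro k hk
          rcases le_or_gt j k with h | h
          · exact ⟨k - j, by show j + (k - j) = k; omega⟩
          · exact absurd (if_neg (by omega)) hk
        rw [← Function.Injective.tsum_eq hinj hsupp]
        refine tsum_congr fun l => ?_
        rw [if_pos (by omega), show j + l - j = l from by omega]
    _ = (∑' j : ℕ, f j) * ∑' l : ℕ, g l := by
        rw [← ENNReal.tsum_mul_right]
        exact tsum_congr fun j => ENNReal.tsum_mul_left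

end Statement0Aux

open Statement0Aux in
/-- Let `(S_n)` be a real-valued random walk with i.i.d. increments such that
`P(S_1 ≠ 0) > 0`.  Then
`sup_{x ≥ 0} E[ Σ_{k=0}^∞ 1{min_{0≤i≤k} S_i + x ≥ 0} e^{-S_k - x} ] < ∞`. -/
theorem statement0 {Ω : Type*} [MeasurableSpace Ω] (P : Measure Ω) [IsProbabilityMeasure P]
    (X : ℕ → Ω → ℝ) (hmeas : ∀ i, Measurable (X i))
    (hindep : iIndepFun X P)
    (hident : ∀ i j, IdentDistrib (X i) (X j) P P)
    (S : ℕ → Ω → ℝ) (hS : ∀ k ω, S k ω = ∑ j ∈ Finset.range k, X j ω)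
    (hne : 0 < P {ω | X 0 ω ≠ 0}) :
    ∃ C : ℝ≥0∞, C ≠ ⊤ ∧ ∀ x : ℝ, 0 ≤ x →
      (∫⁻ ω, ∑' k : ℕ,
        Set.indicator {ω' : Ω | ∀ i ≤ k, 0 ≤ S i ω' + x}
          (fun ω' => ENNReal.ofReal (Real.exp (-(S k ω') - x))) ω ∂P) ≤ C := by
  classical
  set μ : Measure ℝ := P.map (X 0) with hμ
  haveI : IsProbabilityMeasure μ := Measure.isProbabilityMeasure_map (hmeas 0).aemeasurable
  have h0 : μ {(0:ℝ)} < 1 := by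
    have hA0 : μ {(0:ℝ)} = P (X 0 ⁻¹' {0}) :=
      Measure.map_apply (hmeas 0) (measurableSet_singleton 0)
    have hcompl : {ω | X 0 ω ≠ 0} = (X 0 ⁻¹' {0})ᶜ := by ext ω; simp
    rw [hcompl] at hne
    rw [prob_compl_eq_one_sub ((hmeas 0) (measurableSet_singleton 0))] at hne
    rw [hA0]
    exact tsub_pos_iff_lt.mp hne
  obtain ⟨CA, hCA, hA⟩ := boundA μ h0
  obtain ⟨CB, hCB, hB⟩ := boundB μ h0
  refine ⟨CA * CB, ENNReal.mul_ne_top hCA hCB, fun x _ => ?_⟩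
  have hSmeas : ∀ i, Measurable (S i) := by
    intro i
    have : S i = fun ω => ∑ j ∈ Finset.range i, X j ω := funext fun ω => hS i ω
    rw [this]
    exact Finset.measurable_sum _ fun j _ => hmeas j
  have hsetΩ : ∀ k : ℕ, MeasurableSet {ω' : Ω | ∀ i ≤ k, 0 ≤ S i ω' + x} := by
    intro k
    have : {ω' : Ω | ∀ i ≤ k, 0 ≤ S i ω' + x}
        = ⋂ i, ⋂ (_ : i ≤ k), {ω' : Ω | 0 ≤ S i ω' + x} := by
      ext ω'; simp
    rw [this]
    exact MeasurableSet.iInter fun i => MeasurableSet.iInter fun _ =>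
      measurableSet_le measurable_const ((hSmeas i).add_const x)
  have hIndMeas : ∀ k : ℕ, Measurable (fun ω => Set.indicator {ω' : Ω | ∀ i ≤ k, 0 ≤ S i ω' + x}
      (fun ω' => ENNReal.ofReal (Real.exp (-(S k ω') - x))) ω) := by
    intro k
    exact ((((hSmeas k).neg.add_const (-x)).exp).ennreal_ofReal).indicator (hsetΩ k)
  rw [lintegral_tsum fun k => (hIndMeas k).aemeasurable]
  have htrans : ∀ k : ℕ, (∫⁻ ω, Set.indicator {ω' : Ω | ∀ i ≤ k, 0 ≤ S i ω' + x}
        (fun ω' => ENNReal.ofReal (Real.exp (-(S k ω') - x))) ω ∂P)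
      = ∫⁻ u, Set.indicator {u : Fin k → ℝ | ∀ i, i ≤ k → 0 ≤ ps u i + x}
        (fun u => ENNReal.ofReal (Real.exp (-(ps u k + x)))) u ∂pim μ k := by
    intro k
    have hmF : Measurable (fun u : Fin k → ℝ => Set.indicator
        {u : Fin k → ℝ | ∀ i, i ≤ k → 0 ≤ ps u i + x}
        (fun u => ENNReal.ofReal (Real.exp (-(ps u k + x)))) u) := by
      refine (((measurable_ps.add_const x).neg.exp).ennreal_ofReal).indicator ?_
      have : {u : Fin k → ℝ | ∀ i, i ≤ k → 0 ≤ ps u i + x}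
          = ⋂ i, ⋂ (_ : i ≤ k), {u : Fin k → ℝ | 0 ≤ ps u i + x} := by
        ext u; simp
      rw [this]
      exact MeasurableSet.iInter fun i => MeasurableSet.iInter fun _ =>
        measurableSet_le measurable_const (measurable_ps.add_const x)
    have hV : Measurable (fun ω (i : Fin k) => X (i : ℕ) ω) :=
      measurable_pi_lambda _ fun i => hmeas i
    rw [← vector_law P X hmeas hindep hident k, lintegral_map hmF hV]
    refine lintegral_congr fun ω => ?_
    have hps : ∀ i, i ≤ k → ps (fun t : Fin k => X (t : ℕ) ω) i = S i ω := by
      intro i hi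
      rw [hS i ω, ps, Fin.sum_univ_eq_sum_range (fun t : ℕ => if t < i then X t ω else 0) k,
        ← Finset.sum_filter]
      congr 1
      ext t
      simp only [Finset.mem_filter, Finset.mem_range]
      omega
    have hmem : ((fun t : Fin k => X (t : ℕ) ω)
        ∈ {u : Fin k → ℝ | ∀ i, i ≤ k → 0 ≤ ps u i + x})
        ↔ ω ∈ {ω' : Ω | ∀ i ≤ k, 0 ≤ S i ω' + x} := by
      simp only [mem_setOf_eq]
      constructor
      · intro h i hi
        have := h i hi
        rwa [hps i hi] at this
      · intro h i hi
        rw [hps i hi]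
        exact h i hi
    by_cases hω : ω ∈ {ω' : Ω | ∀ i ≤ k, 0 ≤ S i ω' + x}
    · rw [Set.indicator_of_mem (hmem.2 hω), Set.indicator_of_mem hω, hps k (le_refl k)]
      congr 2
      ring
    · rw [Set.indicator_of_notMem (fun h => hω (hmem.1 h)), Set.indicator_of_notMem hω]
  calc (∑' k : ℕ, ∫⁻ ω, Set.indicator {ω' : Ω | ∀ i ≤ k, 0 ≤ S i ω' + x}
        (fun ω' => ENNReal.ofReal (Real.exp (-(S k ω') - x))) ω ∂P)
      = ∑' k : ℕ, ∑ j ∈ Finset.range (k + 1), AI μ x j * BI μ (k - j) :=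
        tsum_congr fun k => (htrans k).trans (decomp μ x k)
    _ = (∑' j : ℕ, AI μ x j) * ∑' l : ℕ, BI μ l := tsum_range_split _ _
    _ ≤ CA * CB := by
        refine mul_le_mul' ?_ ?_
        · have := hA x
          simpa [AI, Aset] using this
        · have := hB
          simpa [BI, Bset] using this
end

section
/- Let (S_n) be an integer-valued random walk with E[S_1] = 0, E[S_1^2] < ∞ and P(S_1 ≥ 2) = 0. With σ_1 and T'_{-n} as above and θ as in the previous statement, P(T'_{-n} < σ_1) ≤ θ/n for every n ≥ 1. -/
open MeasureTheory ProbabilityTheory Filter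
open scoped ENNReal Topology

set_option linter.dupNamespace false
namespace Statement2Aux

open MeasureTheory ProbabilityTheory Filter
open scoped ENNReal


/-- partial sums of a sequence -/
def ps (x : ℕ → ℤ) (j : ℕ) : ℤ := ∑ u ∈ Finset.range j, x u

/-- extend a finite vector by zero -/
def extV {k : ℕ} (x : Fin k → ℤ) : ℕ → ℤ := fun u => if h : u < k then x ⟨u, h⟩ else 0

/-- reverse a finite vector -/
def revV {k : ℕ} (x : Fin k → ℤ) : Fin k → ℤ := fun i => x i.rev

lemma ps_succ (x : ℕ → ℤ) (j : ℕ) : ps x (j + 1) = ps x j + x j :=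
  Finset.sum_range_succ x j

lemma ps_rev {k : ℕ} (x : Fin k → ℤ) : ∀ {j : ℕ}, j ≤ k →
    ps (extV (revV x)) j = ps (extV x) k - ps (extV x) (k - j) := by
  intro j
  induction j with
  | zero => intro _; simp [ps]
  | succ j ih =>
    intro hj
    have hjk : j < k := hj
    rw [ps_succ, ih (le_of_lt hjk)]
    have h1 : extV (revV x) j = extV x (k - j - 1) := by
      have h2 : k - j - 1 < k := by omega
      simp only [extV, revV, dif_pos hjk, dif_pos h2]
      congr 1
    have h3 : ps (extV x) (k - j) = ps (extV x) (k - (j+1)) + extV x (k - j - 1) := by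
      have : k - j = (k - (j+1)) + 1 := by omega
      rw [this, ps_succ]
      congr 2
    rw [h1, h3]
    ring

lemma sumBound_aux (f : ℕ → ℤ) (K : Finset ℕ)
    (hKmem : ∀ k ∈ K, 1 ≤ k ∧ (∀ i, 1 ≤ i → i < k → f i ≤ f k - 1) ∧ f k ≤ -1) :
    ∑ k ∈ K, ((-(f k) : ℤ) : ℝ) ≤ ((f 1 : ℝ)) ^ 2 := by
  classical
  have hinj : Set.InjOn f K := by
    intro a ha b hb hab
    by_contra hne
    rcases lt_or_gt_of_ne hne with h | h
    · have := (hKmem b hb).2.1 a (hKmem a ha).1 h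
      omega
    · have := (hKmem a ha).2.1 b (hKmem b hb).1 h
      omega
  have himg : K.image f ⊆ Finset.Icc (f 1) (-1) := by
    intro v hv
    rw [Finset.mem_image] at hv
    obtain ⟨k, hk, rfl⟩ := hv
    obtain ⟨hk1, hmono, hneg⟩ := hKmem k hk
    rw [Finset.mem_Icc]
    refine ⟨?_, hneg⟩
    rcases Nat.lt_or_ge 1 k with h | h
    · have := hmono 1 le_rfl h
      omega
    · have hk1' : k = 1 := by omega
      rw [hk1']
  have h1 : ∑ k ∈ K, ((-(f k) : ℤ) : ℝ) = ∑ v ∈ K.image f, ((-v : ℤ) : ℝ) := by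
    rw [Finset.sum_image]
    intro a ha b hb hab
    exact hinj ha hb hab
  rw [h1]
  have h2 : ∑ v ∈ K.image f, ((-v : ℤ) : ℝ) ≤ ∑ v ∈ Finset.Icc (f 1) (-1), ((-v : ℤ) : ℝ) := by
    refine Finset.sum_le_sum_of_subset_of_nonneg himg ?_
    intro v hv _
    rw [Finset.mem_Icc] at hv
    have h5 : (v : ℝ) ≤ -1 := by exact_mod_cast hv.2
    push_cast
    linarith
  refine h2.trans ?_
  have h3 : ∑ v ∈ Finset.Icc (f 1) (-1), ((-v : ℤ) : ℝ)
      ≤ (Finset.Icc (f 1) (-1)).card • ((-(f 1) : ℤ) : ℝ) := by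
    refine Finset.sum_le_card_nsmul _ _ _ ?_
    intro v hv
    rw [Finset.mem_Icc] at hv
    have h5 : ((f 1 : ℤ) : ℝ) ≤ (v : ℝ) := by exact_mod_cast hv.1
    push_cast
    linarith
  refine h3.trans ?_
  rw [Int.card_Icc]
  rcases le_or_gt 0 (f 1) with h | h
  · have h0 : (-1 + 1 - f 1).toNat = 0 := by omega
    rw [h0]
    simp
    positivity
  · have h0 : ((-1 + 1 - f 1).toNat : ℝ) = -(f 1 : ℝ) := by
      have h4 : (-1 + 1 - f 1).toNat = (-(f 1)).toNat := by omega
      rw [h4]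
      have h6 := Int.toNat_of_nonneg (by omega : (0:ℤ) ≤ -(f 1))
      exact_mod_cast congrArg (Int.cast : ℤ → ℝ) h6
    rw [nsmul_eq_mul, h0]
    push_cast
    ring_nf
    nlinarith [sq_nonneg ((f 1 : ℝ))]

lemma sumBound (f : ℕ → ℤ) (m : ℕ) :
    ∑ k ∈ Finset.Icc 1 m,
      Set.indicator {k : ℕ | (∀ i, 1 ≤ i → i < k → f i ≤ f k - 1) ∧ f k ≤ -1}
        (fun k => ((-(f k) : ℤ) : ℝ)) k ≤ ((f 1 : ℝ)) ^ 2 := by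
  classical
  have hind : ∀ k, Set.indicator {k : ℕ | (∀ i, 1 ≤ i → i < k → f i ≤ f k - 1) ∧ f k ≤ -1}
      (fun k => ((-(f k) : ℤ) : ℝ)) k
      = if (∀ i, 1 ≤ i → i < k → f i ≤ f k - 1) ∧ f k ≤ -1 then ((-(f k) : ℤ) : ℝ) else 0 := by
    intro k
    rw [Set.indicator_apply]
    congr 1
  simp only [hind]
  rw [← Finset.sum_filter]
  refine sumBound_aux f _ ?_
  intro k hk
  rw [Finset.mem_filter, Finset.mem_Icc] at hk
  exact ⟨hk.1.1, hk.2⟩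

/-- first strict descent time -/
noncomputable def upsF (f : ℕ → ℤ) : ℕ := sInf {i | 1 ≤ i ∧ f i < 0}

/-- stopped time: min of (hitting 0 after time 1, or hitting ≤ -n), truncated at m -/
noncomputable def tauF (f : ℕ → ℤ) (n m : ℕ) : ℕ :=
  sInf ({t | (1 ≤ t ∧ f t = 0) ∨ f t ≤ -(n : ℤ)} ∪ {m})

/-- the event A: descends below 0 before returning to 0 -/
def APred (f : ℕ → ℤ) : Prop := ∃ i, 1 ≤ i ∧ f i < 0 ∧ ∀ k, 1 ≤ k → k ≤ i → f k ≠ 0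

lemma det_ups (f : ℕ → ℤ) (hA : APred f) :
    1 ≤ upsF f ∧ f (upsF f) < 0 ∧ (∀ j, 1 ≤ j → f j < 0 → upsF f ≤ j) ∧
      (∀ k, 1 ≤ k → k ≤ upsF f → f k ≠ 0) ∧ (∀ i, 1 ≤ i → i < upsF f → 1 ≤ f i) := by
  obtain ⟨i, hi1, hineg, hinz⟩ := hA
  have hne : {i | 1 ≤ i ∧ f i < 0}.Nonempty := ⟨i, hi1, hineg⟩
  have hmem := Nat.sInf_mem hne
  have hmin : ∀ j, 1 ≤ j → f j < 0 → upsF f ≤ j := fun j h1 h2 => Nat.sInf_le ⟨h1, h2⟩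
  have hle : upsF f ≤ i := hmin i hi1 hineg
  refine ⟨hmem.1, hmem.2, hmin, ?_, ?_⟩
  · intro k hk1 hk2
    exact hinz k hk1 (hk2.trans hle)
  · intro j hj1 hj2
    have h1 : ¬ f j < 0 := fun h => absurd (hmin j hj1 h) (by omega)
    have h2 : f j ≠ 0 := hinz j hj1 (by omega)
    omega

lemma det_E_ups (f : ℕ → ℤ) (k : ℕ) (hk : 1 ≤ k)
    (hE : (∀ i, 1 ≤ i → i < k → 1 ≤ f i) ∧ f k ≤ -1) :
    upsF f = k ∧ APred f := by
  have hAP : APred f := by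
    refine ⟨k, hk, by omega, ?_⟩
    intro j hj1 hj2
    rcases Nat.lt_or_ge j k with h | h
    · have := hE.1 j hj1 h
      omega
    · have : j = k := by omega
      rw [this]
      omega
  obtain ⟨_, _, hmin, _, _⟩ := det_ups f hAP
  have h1 : upsF f ≤ k := hmin k hk (by omega)
  have h2 : ¬ upsF f < k := by
    intro h
    obtain ⟨hu1, hu2, _, _, _⟩ := det_ups f hAP
    have := hE.1 (upsF f) hu1 h
    omega
  exact ⟨by omega, hAP⟩

lemma det_tau_le (f : ℕ → ℤ) (n m : ℕ) : tauF f n m ≤ m :=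
  Nat.sInf_le (Set.mem_union_right _ rfl)

lemma det_tau_mem (f : ℕ → ℤ) (n m : ℕ) :
    ((1 ≤ tauF f n m ∧ f (tauF f n m) = 0) ∨ f (tauF f n m) ≤ -(n : ℤ)) ∨ tauF f n m = m :=
  Nat.sInf_mem (⟨m, Set.mem_union_right _ rfl⟩ :
    ({t | (1 ≤ t ∧ f t = 0) ∨ f t ≤ -(n : ℤ)} ∪ {m}).Nonempty)

lemma det_stop_tau_le (f : ℕ → ℤ) (n m t : ℕ) (h : (1 ≤ t ∧ f t = 0) ∨ f t ≤ -(n : ℤ)) :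
    tauF f n m ≤ t := Nat.sInf_le (Set.mem_union_left _ h)

lemma det_tau_not_stop (f : ℕ → ℤ) (n m t : ℕ) (ht : t < tauF f n m) :
    ¬((1 ≤ t ∧ f t = 0) ∨ f t ≤ -(n : ℤ)) := by
  intro h
  exact absurd (det_stop_tau_le f n m t h) (by omega)

lemma det_ups_le_tau (f : ℕ → ℤ) (n m : ℕ) (hn : 1 ≤ n) (hf0 : f 0 = 0)
    (hA : APred f) (hm : upsF f ≤ m) : upsF f ≤ tauF f n m := by
  obtain ⟨hu1, hu2, hmin, hnz, _⟩ := det_ups f hA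
  rcases det_tau_mem f n m with (⟨ht1, ht2⟩ | ht3) | ht4
  · by_contra h
    exact hnz (tauF f n m) ht1 (by omega) ht2
  · have htpos : 1 ≤ tauF f n m := by
      by_contra h
      have : tauF f n m = 0 := by omega
      rw [this] at ht3
      omega
    exact hmin _ htpos (by omega)
  · omega

lemma det_CP_iff (f : ℕ → ℤ) (n m t : ℕ) (ht : t < m) :
    ((∃ i, 1 ≤ i ∧ i ≤ t ∧ f i < 0 ∧ ∀ k, 1 ≤ k → k ≤ i → f k ≠ 0) ∧
      ∀ s, s ≤ t → ¬((1 ≤ s ∧ f s = 0) ∨ f s ≤ -(n : ℤ)))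
    ↔ (APred f ∧ upsF f ≤ t ∧ t < tauF f n m) := by
  constructor
  · rintro ⟨⟨i, hi1, hit, hineg, hinz⟩, hnostop⟩
    have hAP : APred f := ⟨i, hi1, hineg, hinz⟩
    obtain ⟨_, _, hmin, _, _⟩ := det_ups f hAP
    refine ⟨hAP, (hmin i hi1 hineg).trans hit, ?_⟩
    by_contra h
    have h1 : tauF f n m ≤ t := by omega
    rcases det_tau_mem f n m with h2 | h2
    · exact hnostop _ h1 h2
    · omega
  · rintro ⟨hAP, hule, htlt⟩
    obtain ⟨hu1, hu2, _, hnz, _⟩ := det_ups f hAP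
    refine ⟨⟨upsF f, hu1, hule, hu2, hnz⟩, ?_⟩
    intro s hs hstop
    exact absurd (det_stop_tau_le f n m s hstop) (by omega)

lemma det_GP_tau (f : ℕ → ℤ) (n m : ℕ) (hn : 1 ≤ n) (hf0 : f 0 = 0)
    (hG : ∃ i, i ≤ m ∧ f i ≤ -(n : ℤ) ∧ ∀ k, 1 ≤ k → k ≤ i → f k ≠ 0) :
    APred f ∧ upsF f ≤ m ∧ f (tauF f n m) ≤ -(n : ℤ) := by
  obtain ⟨i, him, hineg, hinz⟩ := hG
  have hi1 : 1 ≤ i := by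
    by_contra h
    have : i = 0 := by omega
    rw [this] at hineg
    omega
  have hAP : APred f := ⟨i, hi1, by omega, hinz⟩
  obtain ⟨_, _, hmin, _, _⟩ := det_ups f hAP
  have htle : tauF f n m ≤ i := det_stop_tau_le f n m i (Or.inr hineg)
  refine ⟨hAP, (hmin i hi1 (by omega)).trans him, ?_⟩
  rcases det_tau_mem f n m with (⟨ht1, ht2⟩ | ht3) | ht4
  · exact absurd ht2 (hinz _ ht1 htle)
  · exact ht3
  · have : i = m := by omega
    rw [ht4, ← this]
    exact hineg

lemma det_tau_nonpos (f : ℕ → ℤ) (n m : ℕ) (hA : APred f)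
    (hut : upsF f ≤ tauF f n m) (hstep : ∀ t, f (t + 1) ≤ f t + 1) :
    f (tauF f n m) ≤ 0 := by
  obtain ⟨hu1, hu2, _, _, _⟩ := det_ups f hA
  have key : ∀ d, upsF f + d ≤ tauF f n m →
      f (upsF f + d) ≤ 0 ∧ (upsF f + d < tauF f n m → f (upsF f + d) < 0) := by
    intro d
    induction d with
    | zero =>
      intro _
      rw [Nat.add_zero]
      exact ⟨by omega, fun _ => hu2⟩
    | succ d ih =>
      intro hd
      have hassoc : upsF f + (d + 1) = upsF f + d + 1 := rfl
      rw [hassoc] at hd ⊢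
      have hprev := ih (by omega)
      have hneg : f (upsF f + d) < 0 := hprev.2 (by omega)
      have hle : f (upsF f + d + 1) ≤ 0 := by
        have := hstep (upsF f + d)
        omega
      refine ⟨hle, ?_⟩
      intro hlt
      have hnostop := det_tau_not_stop f n m (upsF f + d + 1) hlt
      have : f (upsF f + d + 1) ≠ 0 := by
        intro h
        exact hnostop (Or.inl ⟨by omega, h⟩)
      omega
  have := (key (tauF f n m - upsF f) (by omega)).1
  have heq : upsF f + (tauF f n m - upsF f) = tauF f n m := by omega
  rwa [heq] at this

lemma det_tau_eq_iff (f : ℕ → ℤ) (n m j : ℕ) (hj : j ≤ m) :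
    tauF f n m = j ↔
      (((1 ≤ j ∧ f j = 0) ∨ f j ≤ -(n : ℤ)) ∨ j = m) ∧
        ∀ s, s < j → ¬((1 ≤ s ∧ f s = 0) ∨ f s ≤ -(n : ℤ)) := by
  constructor
  · intro h
    refine ⟨by rw [← h]; exact det_tau_mem f n m, ?_⟩
    intro s hs
    exact det_tau_not_stop f n m s (by omega)
  · rintro ⟨hmem, hmin⟩
    have h1 : tauF f n m ≤ j := by
      rcases hmem with h | h
      · exact det_stop_tau_le f n m j h
      · rw [h]; exact det_tau_le f n m
    have h2 : ¬ tauF f n m < j := by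
      intro h
      rcases det_tau_mem f n m with h3 | h3
      · exact hmin _ h h3
      · omega
    omega

lemma measurable_discrete {α β : Type*} [Countable α] [MeasurableSpace α]
    [MeasurableSingletonClass α] [MeasurableSpace β] (f : α → β) : Measurable f :=
  measurable_of_countable f

lemma measurableSet_discrete {α : Type*} [Countable α] [MeasurableSpace α]
    [MeasurableSingletonClass α] (s : Set α) : MeasurableSet s :=
  (Set.to_countable s).measurableSet

lemma law_pi {Ω : Type*} [MeasurableSpace Ω] (P : Measure Ω) [IsProbabilityMeasure P]
    (X : ℕ → Ω → ℤ) (hmeas : ∀ i, Measurable (X i))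
    (hindep : iIndepFun X P)
    (hident : ∀ i j, IdentDistrib (X i) (X j) P P) (k : ℕ) :
    P.map (fun ω (i : Fin k) => X i ω) = Measure.pi (fun _ : Fin k => P.map (X 0)) := by
  have hP0 : IsProbabilityMeasure (P.map (X 0)) :=
    Measure.isProbabilityMeasure_map (hmeas 0).aemeasurable
  refine (Measure.pi_eq ?_).symm
  intro s hs
  have hvecmeas : Measurable (fun ω (i : Fin k) => X i ω) :=
    measurable_pi_lambda _ (fun i => hmeas i)
  rw [Measure.map_apply hvecmeas (MeasurableSet.univ_pi (X := fun _ : Fin k => ℤ) hs)]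
  classical
  set s' : ℕ → Set ℤ := fun j => if h : j < k then s ⟨j, h⟩ else Set.univ with hs'
  have hpre : (fun ω (i : Fin k) => X i ω) ⁻¹' Set.pi Set.univ s
      = ⋂ j ∈ Finset.range k, X j ⁻¹' s' j := by
    ext ω
    simp only [Set.mem_preimage, Set.mem_pi, Set.mem_univ, forall_true_left,
      Set.mem_iInter, Finset.mem_range]
    constructor
    · intro h j hj
      rw [hs']
      simp only [dif_pos hj]
      exact h ⟨j, hj⟩
    · intro h i
      have := h i.1 i.2
      rw [hs'] at this
      simp only [dif_pos i.2] at this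
      exact this
  rw [hpre]
  rw [hindep.meas_biInter (fun j _ => ⟨s' j, measurableSet_discrete _, rfl⟩)]
  rw [← Fin.prod_univ_eq_prod_range (fun j => P (X j ⁻¹' s' j)) k]
  refine Finset.prod_congr rfl ?_
  intro i _
  have h1 : P (X i ⁻¹' s' i.1) = (P.map (X i)) (s' i.1) := by
    rw [Measure.map_apply (hmeas i) (measurableSet_discrete _)]
  rw [h1, (hident i.1 0).map_eq]
  congr 1
  rw [hs']
  simp only [dif_pos i.2]

lemma pi_map_rev (μ : Measure ℤ) [IsProbabilityMeasure μ] (k : ℕ) :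
    (Measure.pi (fun _ : Fin k => μ)).map (revV (k := k)) = Measure.pi (fun _ : Fin k => μ) := by
  refine (Measure.pi_eq ?_).symm
  intro s hs
  rw [Measure.map_apply (measurable_discrete _) (MeasurableSet.univ_pi (X := fun _ : Fin k => ℤ) hs)]
  have hpre : revV (k := k) ⁻¹' Set.pi Set.univ s = Set.pi Set.univ (fun i => s i.rev) := by
    ext x
    simp only [Set.mem_preimage, Set.mem_pi, Set.mem_univ, forall_true_left, revV]
    constructor
    · intro h i
      have := h i.rev
      rwa [Fin.rev_rev] at this
    · intro h i
      have h2 := h i.rev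
      rw [Fin.rev_rev] at h2
      exact h2
  rw [hpre, Measure.pi_pi]
  exact Fintype.prod_equiv (Function.Involutive.toPerm _ Fin.rev_involutive)
    _ _ (fun i => rfl)

lemma integral_rev {Ω : Type*} [MeasurableSpace Ω] (P : Measure Ω) [IsProbabilityMeasure P]
    (X : ℕ → Ω → ℤ) (hmeas : ∀ i, Measurable (X i))
    (hindep : iIndepFun X P)
    (hident : ∀ i j, IdentDistrib (X i) (X j) P P) (k : ℕ) (f : (Fin k → ℤ) → ℝ) :
    ∫ ω, f (revV (fun i : Fin k => X i ω)) ∂P = ∫ ω, f (fun i : Fin k => X i ω) ∂P := by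
  have hvec : Measurable (fun ω (i : Fin k) => X i ω) :=
    measurable_pi_lambda _ (fun i => hmeas i)
  have hlaw := law_pi P X hmeas hindep hident k
  haveI : IsProbabilityMeasure (P.map (X 0)) :=
    Measure.isProbabilityMeasure_map (hmeas 0).aemeasurable
  have hfm : Measurable f := measurable_of_countable f
  have hrevm : Measurable (revV (k := k)) := measurable_of_countable _
  have h1 : ∫ ω, f (revV (fun i : Fin k => X i ω)) ∂P
      = ∫ y, f (revV y) ∂(P.map (fun ω (i : Fin k) => X i ω)) :=
    (integral_map (f := fun y => f (revV y)) hvec.aemeasurable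
      ((hfm.comp hrevm)).aestronglyMeasurable).symm
  have h2 : ∫ y, f (revV y) ∂(Measure.pi (fun _ : Fin k => P.map (X 0)))
      = ∫ z, f z ∂((Measure.pi (fun _ : Fin k => P.map (X 0))).map (revV (k := k))) :=
    (integral_map hrevm.aemeasurable hfm.aestronglyMeasurable).symm
  have h3 : ∫ ω, f (fun i : Fin k => X i ω) ∂P
      = ∫ y, f y ∂(P.map (fun ω (i : Fin k) => X i ω)) :=
    (integral_map hvec.aemeasurable hfm.aestronglyMeasurable).symm
  rw [h1, hlaw, h2, pi_map_rev, ← hlaw, ← h3]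

lemma cast_meas : Measurable (fun z : ℤ => (z : ℝ)) := measurable_of_countable _

lemma Xreal_int {Ω : Type*} [MeasurableSpace Ω] (P : Measure Ω) [IsProbabilityMeasure P]
    (X : ℕ → Ω → ℤ)
    (hident : ∀ i j, IdentDistrib (X i) (X j) P P)
    (hint : Integrable (fun ω => (X 0 ω : ℝ)) P) (t : ℕ) :
    Integrable (fun ω => (X t ω : ℝ)) P :=
  ((hident t 0).comp cast_meas).integrable_iff.2 hint

lemma Xreal_mean {Ω : Type*} [MeasurableSpace Ω] (P : Measure Ω) [IsProbabilityMeasure P]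
    (X : ℕ → Ω → ℤ)
    (hident : ∀ i j, IdentDistrib (X i) (X j) P P)
    (hmean : ∫ ω, (X 0 ω : ℝ) ∂P = 0) (t : ℕ) :
    ∫ ω, (X t ω : ℝ) ∂P = 0 :=
  (((hident t 0).comp cast_meas).integral_eq).trans hmean

lemma indep_vanish {Ω : Type*} [MeasurableSpace Ω] (P : Measure Ω) [IsProbabilityMeasure P]
    (X : ℕ → Ω → ℤ) (hmeas : ∀ i, Measurable (X i))
    (hindep : iIndepFun X P)
    (hident : ∀ i j, IdentDistrib (X i) (X j) P P)
    (hint : Integrable (fun ω => (X 0 ω : ℝ)) P)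
    (hmean : ∫ ω, (X 0 ω : ℝ) ∂P = 0)
    (t : ℕ) (g : (↥(Finset.range t) → ℤ) → ℝ)
    (hgint : Integrable (fun ω => g (fun i : ↥(Finset.range t) => X (i : ℕ) ω)) P) :
    ∫ ω, (X t ω : ℝ) * g (fun i : ↥(Finset.range t) => X (i : ℕ) ω) ∂P = 0 := by
  have hdisj : Disjoint ({t} : Finset ℕ) (Finset.range t) := by
    simp [Finset.disjoint_left]
  have h := hindep.indepFun_finset {t} (Finset.range t) hdisj hmeas
  have hφ : Measurable (fun v : ↥({t} : Finset ℕ) → ℤ =>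
      ((v ⟨t, Finset.mem_singleton_self t⟩ : ℤ) : ℝ)) := measurable_of_countable _
  have hg : Measurable g := measurable_of_countable g
  have hIF : IndepFun (fun ω => ((X t ω : ℤ) : ℝ))
      (fun ω => g (fun i : ↥(Finset.range t) => X (i : ℕ) ω)) P := h.comp hφ hg
  have := hIF.integral_fun_mul_eq_mul_integral
    (Xreal_int P X hident hint t).aestronglyMeasurable hgint.aestronglyMeasurable
  calc ∫ ω, (X t ω : ℝ) * g (fun i : ↥(Finset.range t) => X (i : ℕ) ω) ∂P
      = (∫ ω, (X t ω : ℝ) ∂P) * ∫ ω, g (fun i : ↥(Finset.range t) => X (i : ℕ) ω) ∂P := this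
    _ = 0 := by rw [Xreal_mean P X hident hmean t, zero_mul]

variable {Ω : Type*}

def Eev (S : ℕ → Ω → ℤ) (k : ℕ) : Set Ω :=
  {ω | (∀ i, 1 ≤ i → i < k → 1 ≤ S i ω) ∧ S k ω ≤ -1}

def Mev (S : ℕ → Ω → ℤ) (k : ℕ) : Set Ω :=
  {ω | (∀ i, 1 ≤ i → i < k → S i ω ≤ S k ω - 1) ∧ S k ω ≤ -1}

def Amev (S : ℕ → Ω → ℤ) (m : ℕ) : Set Ω := ⋃ k ∈ Finset.Icc 1 m, Eev S k

def Aev (S : ℕ → Ω → ℤ) : Set Ω := {ω | APred fun t => S t ω}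

def Gev (S : ℕ → Ω → ℤ) (n m : ℕ) : Set Ω :=
  {ω | ∃ i, i ≤ m ∧ S i ω ≤ -(n : ℤ) ∧ ∀ k, 1 ≤ k → k ≤ i → S k ω ≠ 0}

def Cev (S : ℕ → Ω → ℤ) (n t : ℕ) : Set Ω :=
  {ω | (∃ i, 1 ≤ i ∧ i ≤ t ∧ S i ω < 0 ∧ ∀ k, 1 ≤ k → k ≤ i → S k ω ≠ 0) ∧
    ∀ s, s ≤ t → ¬((1 ≤ s ∧ S s ω = 0) ∨ S s ω ≤ -(n : ℤ))}

noncomputable def hfunF (S : ℕ → Ω → ℤ) (m : ℕ) (ω : Ω) : ℝ :=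
  ∑ k ∈ Finset.Icc 1 m, (Eev S k).indicator (fun ω' => |(S k ω' : ℝ)|) ω

noncomputable def Hfun (S : ℕ → Ω → ℤ) (υ : Ω → ℕ) : Ω → ℝ :=
  (Aev S).indicator (fun ω => |(S (υ ω) ω : ℝ)|)

noncomputable def Wfun (S : ℕ → Ω → ℤ) (n m : ℕ) (ω : Ω) : ℝ :=
  (Amev S m).indicator (fun ω' => (S (tauF (fun t => S t ω') n m) ω' : ℝ)) ω

def psR (t : ℕ) (v : ↥(Finset.range t) → ℤ) (j : ℕ) : ℤ :=
  ∑ u ∈ Finset.range j, (if h : u ∈ Finset.range t then v ⟨u, h⟩ else 0)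

def DD (n t : ℕ) : Set (↥(Finset.range t) → ℤ) :=
  {v | (∃ i, 1 ≤ i ∧ i ≤ t ∧ psR t v i < 0 ∧ ∀ k, 1 ≤ k → k ≤ i → psR t v k ≠ 0) ∧
    ∀ s, s ≤ t → ¬((1 ≤ s ∧ psR t v s = 0) ∨ psR t v s ≤ -(n : ℤ))}

lemma Am_iff (S : ℕ → Ω → ℤ) (m : ℕ) (ω : Ω) :
    ω ∈ Amev S m ↔ APred (fun t => S t ω) ∧ upsF (fun t => S t ω) ≤ m := by
  constructor
  · intro h
    rw [Amev, Set.mem_iUnion] at h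
    obtain ⟨k, hk⟩ := h
    rw [Set.mem_iUnion] at hk
    obtain ⟨hkI, hkE⟩ := hk
    rw [Finset.mem_Icc] at hkI
    obtain ⟨hup, hAP⟩ := det_E_ups (fun t => S t ω) k hkI.1 hkE
    exact ⟨hAP, by omega⟩
  · rintro ⟨hAP, hle⟩
    obtain ⟨hu1, hu2, _, _, hpos⟩ := det_ups (fun t => S t ω) hAP
    rw [Amev, Set.mem_iUnion]
    refine ⟨upsF (fun t => S t ω), ?_⟩
    rw [Set.mem_iUnion]
    refine ⟨Finset.mem_Icc.2 ⟨hu1, hle⟩, ⟨hpos, by omega⟩⟩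

lemma hfun_eq (S : ℕ → Ω → ℤ) (υ : Ω → ℕ)
    (hu : ∀ ω, υ ω = upsF (fun t => S t ω)) (m : ℕ) (ω : Ω) :
    hfunF S m ω = (Amev S m).indicator (fun ω' => |(S (υ ω') ω' : ℝ)|) ω := by
  by_cases hmem : ω ∈ Amev S m
  · obtain ⟨hAP, hule⟩ := (Am_iff S m ω).1 hmem
    obtain ⟨hu1, hu2, _, _, hpos⟩ := det_ups (fun t => S t ω) hAP
    rw [Set.indicator_of_mem hmem, hfunF]
    rw [Finset.sum_eq_single_of_mem (υ ω)
      (Finset.mem_Icc.2 ⟨by rw [hu]; omega, by rw [hu]; omega⟩)]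
    · rw [Set.indicator_of_mem]
      rw [hu]
      exact ⟨hpos, by omega⟩
    · intro k hk hne
      rw [Set.indicator_of_notMem]
      intro hEk
      rw [Finset.mem_Icc] at hk
      obtain ⟨hupk, _⟩ := det_E_ups (fun t => S t ω) k hk.1 hEk
      exact hne (by rw [hu, hupk])
  · rw [Set.indicator_of_notMem hmem, hfunF]
    refine Finset.sum_eq_zero ?_
    intro k hk
    rw [Finset.mem_Icc] at hk
    rw [Set.indicator_of_notMem]
    intro hEk
    obtain ⟨hupk, hAP⟩ := det_E_ups (fun t => S t ω) k hk.1 hEk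
    exact hmem ((Am_iff S m ω).2 ⟨hAP, by omega⟩)

lemma hfun_mono (S : ℕ → Ω → ℤ) (ω : Ω) : Monotone fun m => hfunF S m ω := by
  intro m1 m2 h
  refine Finset.sum_le_sum_of_subset_of_nonneg (Finset.Icc_subset_Icc_right h) ?_
  intro k _ _
  exact Set.indicator_nonneg (fun ω' _ => abs_nonneg _) ω

lemma hfun_fix (S : ℕ → Ω → ℤ) (υ : Ω → ℕ)
    (hu : ∀ ω, υ ω = upsF (fun t => S t ω)) (m : ℕ) (ω : Ω) (h : υ ω ≤ m) :
    hfunF S m ω = Hfun S υ ω := by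
  rw [hfun_eq S υ hu m ω, Hfun]
  by_cases hA : ω ∈ Aev S
  · have hAm : ω ∈ Amev S m := (Am_iff S m ω).2 ⟨hA, by rw [← hu]; exact h⟩
    rw [Set.indicator_of_mem hAm, Set.indicator_of_mem hA]
  · have hAm : ω ∉ Amev S m := by
      intro hmem
      exact hA ((Am_iff S m ω).1 hmem).1
    rw [Set.indicator_of_notMem hAm, Set.indicator_of_notMem hA]

lemma hfun_le_H (S : ℕ → Ω → ℤ) (υ : Ω → ℕ)
    (hu : ∀ ω, υ ω = upsF (fun t => S t ω)) (m : ℕ) (ω : Ω) :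
    hfunF S m ω ≤ Hfun S υ ω := by
  rw [hfun_eq S υ hu m ω, Hfun]
  by_cases hmem : ω ∈ Amev S m
  · have hA : ω ∈ Aev S := ((Am_iff S m ω).1 hmem).1
    rw [Set.indicator_of_mem hmem, Set.indicator_of_mem hA]
  · rw [Set.indicator_of_notMem hmem]
    exact Set.indicator_nonneg (fun ω' _ => abs_nonneg _) ω

lemma H_nonneg (S : ℕ → Ω → ℤ) (υ : Ω → ℕ) (ω : Ω) : 0 ≤ Hfun S υ ω :=
  Set.indicator_nonneg (fun ω' _ => abs_nonneg _) ω


section Meas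
variable {Ω : Type*} [MeasurableSpace Ω] {S : ℕ → Ω → ℤ}

lemma leafM (hSmeas : ∀ k, Measurable (S k)) (i : ℕ) (B : Set ℤ) :
    MeasurableSet {ω | S i ω ∈ B} := (hSmeas i) ((Set.to_countable B).measurableSet)

lemma Eev_meas (hSmeas : ∀ k, Measurable (S k)) (k : ℕ) : MeasurableSet (Eev S k) := by
  have : Eev S k = (⋂ i, ⋂ (_ : 1 ≤ i), ⋂ (_ : i < k), {ω | 1 ≤ S i ω}) ∩ {ω | S k ω ≤ -1} := by
    ext ω
    simp only [Eev, Set.mem_inter_iff, Set.mem_iInter, Set.mem_setOf_eq]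
  rw [this]
  exact (MeasurableSet.iInter fun i => MeasurableSet.iInter fun _ =>
    MeasurableSet.iInter fun _ => leafM hSmeas i {z | 1 ≤ z}).inter (leafM hSmeas k {z | z ≤ -1})

lemma Mev_meas (hSmeas : ∀ k, Measurable (S k)) (k : ℕ) : MeasurableSet (Mev S k) := by
  have : Mev S k = (⋂ i, ⋂ (_ : 1 ≤ i), ⋂ (_ : i < k),
      {ω | (S i ω, S k ω) ∈ {p : ℤ × ℤ | p.1 ≤ p.2 - 1}}) ∩ {ω | S k ω ≤ -1} := by
    ext ω
    simp only [Mev, Set.mem_inter_iff, Set.mem_iInter, Set.mem_setOf_eq]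
  rw [this]
  refine (MeasurableSet.iInter fun i => MeasurableSet.iInter fun _ =>
    MeasurableSet.iInter fun _ => ?_).inter (leafM hSmeas k {z | z ≤ -1})
  exact ((hSmeas i).prodMk (hSmeas k)) ((Set.to_countable _).measurableSet)

lemma Amev_meas (hSmeas : ∀ k, Measurable (S k)) (m : ℕ) : MeasurableSet (Amev S m) :=
  MeasurableSet.biUnion (Finset.countable_toSet _) (fun k _ => Eev_meas hSmeas k)

lemma Aev_meas (hSmeas : ∀ k, Measurable (S k)) : MeasurableSet (Aev S) := by
  have : Aev S = ⋃ i, ⋃ (_ : 1 ≤ i), ({ω | S i ω < 0} ∩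
      ⋂ k, ⋂ (_ : 1 ≤ k), ⋂ (_ : k ≤ i), {ω | S k ω ≠ 0}) := by
    ext ω
    simp only [Aev, APred, Set.mem_iUnion, Set.mem_inter_iff, Set.mem_iInter, Set.mem_setOf_eq,
      exists_prop]
  rw [this]
  exact MeasurableSet.iUnion fun i => MeasurableSet.iUnion fun _ =>
    ((leafM hSmeas i {z | z < 0}).inter (MeasurableSet.iInter fun k =>
      MeasurableSet.iInter fun _ => MeasurableSet.iInter fun _ => leafM hSmeas k {z | z ≠ 0}))

lemma Gev_meas (hSmeas : ∀ k, Measurable (S k)) (n m : ℕ) : MeasurableSet (Gev S n m) := by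
  have : Gev S n m = ⋃ i, ⋃ (_ : i ≤ m), ({ω | S i ω ≤ -(n : ℤ)} ∩
      ⋂ k, ⋂ (_ : 1 ≤ k), ⋂ (_ : k ≤ i), {ω | S k ω ≠ 0}) := by
    ext ω
    simp only [Gev, Set.mem_iUnion, Set.mem_inter_iff, Set.mem_iInter, Set.mem_setOf_eq,
      exists_prop]
  rw [this]
  exact MeasurableSet.iUnion fun i => MeasurableSet.iUnion fun _ =>
    ((leafM hSmeas i {z | z ≤ -(n:ℤ)}).inter (MeasurableSet.iInter fun k =>
      MeasurableSet.iInter fun _ => MeasurableSet.iInter fun _ => leafM hSmeas k {z | z ≠ 0}))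

lemma stop_meas (hSmeas : ∀ k, Measurable (S k)) (n s : ℕ) :
    MeasurableSet {ω | (1 ≤ s ∧ S s ω = 0) ∨ S s ω ≤ -(n : ℤ)} := by
  by_cases h1 : 1 ≤ s
  · have : {ω | (1 ≤ s ∧ S s ω = 0) ∨ S s ω ≤ -(n : ℤ)}
        = {ω | S s ω ∈ {z | z = 0 ∨ z ≤ -(n:ℤ)}} := by
      ext ω
      simp only [Set.mem_setOf_eq, h1, true_and]
    rw [this]
    exact leafM hSmeas s _
  · have : {ω | (1 ≤ s ∧ S s ω = 0) ∨ S s ω ≤ -(n : ℤ)}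
        = {ω | S s ω ∈ {z | z ≤ -(n:ℤ)}} := by
      ext ω
      simp only [Set.mem_setOf_eq, h1, false_and, false_or]
    rw [this]
    exact leafM hSmeas s _

lemma Cev_meas (hSmeas : ∀ k, Measurable (S k)) (n t : ℕ) : MeasurableSet (Cev S n t) := by
  have : Cev S n t = (⋃ i, ⋃ (_ : 1 ≤ i), ⋃ (_ : i ≤ t), ({ω | S i ω < 0} ∩
      ⋂ k, ⋂ (_ : 1 ≤ k), ⋂ (_ : k ≤ i), {ω | S k ω ≠ 0})) ∩
      (⋂ s, ⋂ (_ : s ≤ t), {ω | (1 ≤ s ∧ S s ω = 0) ∨ S s ω ≤ -(n : ℤ)}ᶜ) := by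
    ext ω
    simp only [Cev, Set.mem_inter_iff, Set.mem_iUnion, Set.mem_iInter, Set.mem_setOf_eq,
      Set.mem_compl_iff, exists_prop]
  rw [this]
  refine MeasurableSet.inter ?_ ?_
  · exact MeasurableSet.iUnion fun i => MeasurableSet.iUnion fun _ =>
      MeasurableSet.iUnion fun _ =>
      ((leafM hSmeas i {z | z < 0}).inter (MeasurableSet.iInter fun k =>
        MeasurableSet.iInter fun _ => MeasurableSet.iInter fun _ => leafM hSmeas k {z | z ≠ 0}))
  · exact MeasurableSet.iInter fun s => MeasurableSet.iInter fun _ =>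
      (stop_meas hSmeas n s).compl

lemma tau_fiber_meas (hSmeas : ∀ k, Measurable (S k)) (n m j : ℕ) (hj : j ≤ m) :
    MeasurableSet {ω | tauF (fun t => S t ω) n m = j} := by
  have : {ω | tauF (fun t => S t ω) n m = j}
      = ({ω | (1 ≤ j ∧ S j ω = 0) ∨ S j ω ≤ -(n : ℤ)} ∪ {ω | j = m}) ∩
        (⋂ s, ⋂ (_ : s < j), {ω | (1 ≤ s ∧ S s ω = 0) ∨ S s ω ≤ -(n : ℤ)}ᶜ) := by
    ext ω
    rw [Set.mem_setOf_eq, det_tau_eq_iff (fun t => S t ω) n m j hj]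
    simp only [Set.mem_inter_iff, Set.mem_union, Set.mem_iInter, Set.mem_setOf_eq,
      Set.mem_compl_iff]
  rw [this]
  refine MeasurableSet.inter ?_ ?_
  · refine (stop_meas hSmeas n j).union ?_
    by_cases h : j = m
    · simp [h]
    · simp [h]
  · exact MeasurableSet.iInter fun s => MeasurableSet.iInter fun _ =>
      (stop_meas hSmeas n s).compl

end Meas


section PartI
variable {Ω : Type*} [MeasurableSpace Ω]

lemma thetam_le_C (P : Measure Ω) [IsProbabilityMeasure P]
    (X : ℕ → Ω → ℤ) (hmeas : ∀ i, Measurable (X i))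
    (hindep : iIndepFun X P)
    (hident : ∀ i j, IdentDistrib (X i) (X j) P P)
    (S : ℕ → Ω → ℤ) (hS : ∀ k ω, S k ω = ∑ j ∈ Finset.range k, X j ω)
    (hSr_int : ∀ k, Integrable (fun ω => (S k ω : ℝ)) P)
    (hSmeas : ∀ k, Measurable (S k))
    (hvar : Integrable (fun ω => ((X 0 ω : ℝ)) ^ 2) P) (m : ℕ) :
    ∫ ω, hfunF S m ω ∂P ≤ ∫ ω, ((X 0 ω : ℝ)) ^ 2 ∂P := by
  classical
  have hS0 : ∀ ω, S 0 ω = 0 := fun ω => by rw [hS]; simp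
  have hS1 : ∀ ω, S 1 ω = X 0 ω := fun ω => by rw [hS]; simp
  have hMint : ∀ k, Integrable ((Mev S k).indicator (fun ω' => ((-(S k ω') : ℤ) : ℝ))) P := by
    intro k
    refine Integrable.indicator ?_ (Mev_meas hSmeas k)
    have : (fun ω => ((-(S k ω) : ℤ) : ℝ)) = fun ω => -((S k ω : ℝ)) := by
      funext ω; push_cast; ring
    rw [this]
    exact (hSr_int k).neg
  have hEint : ∀ k, Integrable ((Eev S k).indicator (fun ω' => |(S k ω' : ℝ)|)) P :=
    fun k => ((hSr_int k).abs).indicator (Eev_meas hSmeas k)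
  have hkey : ∀ k, ∫ ω, (Eev S k).indicator (fun ω' => |(S k ω' : ℝ)|) ω ∂P
      = ∫ ω, (Mev S k).indicator (fun ω' => ((-(S k ω') : ℤ) : ℝ)) ω ∂P := by
    intro k
    set fE : (Fin k → ℤ) → ℝ := Set.indicator
      {x | (∀ i, 1 ≤ i → i < k → 1 ≤ ps (extV x) i) ∧ ps (extV x) k ≤ -1}
      (fun x => ((-(ps (extV x) k) : ℤ) : ℝ)) with hfE
    have psx : ∀ (ω : Ω) (j : ℕ), j ≤ k →
        ps (extV (fun i : Fin k => X i ω)) j = S j ω := by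
      intro ω j hj
      rw [ps, hS]
      refine Finset.sum_congr rfl ?_
      intro u hu
      rw [Finset.mem_range] at hu
      rw [extV]
      simp only [dif_pos (by omega : u < k)]
    have heq1 : ∀ ω, (Eev S k).indicator (fun ω' => |(S k ω' : ℝ)|) ω
        = fE (fun i : Fin k => X i ω) := by
      intro ω
      have hiff : ω ∈ Eev S k ↔ (fun i : Fin k => X i ω) ∈
          {x | (∀ i, 1 ≤ i → i < k → 1 ≤ ps (extV x) i) ∧ ps (extV x) k ≤ -1} := by
        constructor
        · intro h
          refine ⟨fun i h1 h2 => ?_, ?_⟩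
          · rw [psx ω i (by omega)]; exact h.1 i h1 h2
          · rw [psx ω k le_rfl]; exact h.2
        · intro h
          refine ⟨fun i h1 h2 => ?_, ?_⟩
          · have := h.1 i h1 h2; rwa [psx ω i (by omega)] at this
          · have := h.2; rwa [psx ω k le_rfl] at this
      by_cases hmem : ω ∈ Eev S k
      · rw [Set.indicator_of_mem hmem, hfE, Set.indicator_of_mem (hiff.1 hmem)]
        rw [psx ω k le_rfl]
        have h2 : S k ω ≤ -1 := hmem.2
        have h3 : ((S k ω : ℤ) : ℝ) ≤ 0 := by exact_mod_cast (by omega : S k ω ≤ 0)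
        rw [abs_of_nonpos h3]
        push_cast
        ring
      · rw [Set.indicator_of_notMem hmem, hfE,
          Set.indicator_of_notMem (fun h => hmem (hiff.2 h))]
    have heq2 : ∀ ω, fE (revV (fun i : Fin k => X i ω))
        = (Mev S k).indicator (fun ω' => ((-(S k ω') : ℤ) : ℝ)) ω := by
      intro ω
      have hps : ∀ j, j ≤ k → ps (extV (revV (fun i : Fin k => X i ω))) j
          = S k ω - S (k - j) ω := by
        intro j hj
        rw [ps_rev _ hj, psx ω k le_rfl, psx ω (k - j) (by omega)]
      have hiff : (revV (fun i : Fin k => X i ω)) ∈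
          {x | (∀ i, 1 ≤ i → i < k → 1 ≤ ps (extV x) i) ∧ ps (extV x) k ≤ -1}
          ↔ ω ∈ Mev S k := by
        constructor
        · intro h
          refine ⟨fun i h1 h2 => ?_, ?_⟩
          · have := h.1 (k - i) (by omega) (by omega)
            rw [hps (k - i) (by omega)] at this
            rw [show k - (k - i) = i by omega] at this
            omega
          · have := h.2
            rw [hps k le_rfl] at this
            rw [show k - k = 0 by omega, hS0 ω] at this
            omega
        · intro h
          refine ⟨fun i h1 h2 => ?_, ?_⟩
          · rw [hps i (by omega)]
            have := h.1 (k - i) (by omega) (by omega)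
            omega
          · rw [hps k le_rfl, show k - k = 0 by omega, hS0 ω]
            have := h.2
            omega
      by_cases hmem : ω ∈ Mev S k
      · rw [Set.indicator_of_mem hmem, hfE, Set.indicator_of_mem (hiff.2 hmem)]
        rw [hps k le_rfl, show k - k = 0 by omega, hS0 ω]
        push_cast
        ring
      · rw [Set.indicator_of_notMem hmem, hfE,
          Set.indicator_of_notMem (fun h => hmem (hiff.1 h))]
    calc ∫ ω, (Eev S k).indicator (fun ω' => |(S k ω' : ℝ)|) ω ∂P
        = ∫ ω, fE (fun i : Fin k => X i ω) ∂P := integral_congr_ae (ae_of_all _ heq1)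
      _ = ∫ ω, fE (revV (fun i : Fin k => X i ω)) ∂P :=
          (integral_rev P X hmeas hindep hident k fE).symm
      _ = ∫ ω, (Mev S k).indicator (fun ω' => ((-(S k ω') : ℤ) : ℝ)) ω ∂P :=
          integral_congr_ae (ae_of_all _ heq2)
  have hptwise : ∀ ω, ∑ k ∈ Finset.Icc 1 m,
      (Mev S k).indicator (fun ω' => ((-(S k ω') : ℤ) : ℝ)) ω ≤ ((X 0 ω : ℝ)) ^ 2 := by
    intro ω
    have hterm : ∀ k, (Mev S k).indicator (fun ω' => ((-(S k ω') : ℤ) : ℝ)) ω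
        = Set.indicator {k' : ℕ | (∀ i, 1 ≤ i → i < k' →
            (fun t => S t ω) i ≤ (fun t => S t ω) k' - 1) ∧ (fun t => S t ω) k' ≤ -1}
          (fun k' => ((-((fun t => S t ω) k') : ℤ) : ℝ)) k := by
      intro k
      have hiff : ω ∈ Mev S k ↔ k ∈ {k' : ℕ | (∀ i, 1 ≤ i → i < k' →
          (fun t => S t ω) i ≤ (fun t => S t ω) k' - 1) ∧ (fun t => S t ω) k' ≤ -1} := Iff.rfl
      by_cases hmem : ω ∈ Mev S k
      · rw [Set.indicator_of_mem hmem, Set.indicator_of_mem (hiff.1 hmem)]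
      · rw [Set.indicator_of_notMem hmem, Set.indicator_of_notMem (fun h => hmem (hiff.2 h))]
    calc ∑ k ∈ Finset.Icc 1 m, (Mev S k).indicator (fun ω' => ((-(S k ω') : ℤ) : ℝ)) ω
        = ∑ k ∈ Finset.Icc 1 m, Set.indicator {k' : ℕ | (∀ i, 1 ≤ i → i < k' →
            (fun t => S t ω) i ≤ (fun t => S t ω) k' - 1) ∧ (fun t => S t ω) k' ≤ -1}
          (fun k' => ((-((fun t => S t ω) k') : ℤ) : ℝ)) k := Finset.sum_congr rfl fun k _ => hterm k
      _ ≤ (((fun t => S t ω) 1 : ℤ) : ℝ) ^ 2 := sumBound (fun t => S t ω) m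
      _ = ((X 0 ω : ℝ)) ^ 2 := by rw [show (fun t => S t ω) 1 = X 0 ω from hS1 ω]
  calc ∫ ω, hfunF S m ω ∂P
      = ∑ k ∈ Finset.Icc 1 m, ∫ ω, (Eev S k).indicator (fun ω' => |(S k ω' : ℝ)|) ω ∂P := by
        simp only [hfunF]
        exact integral_finset_sum _ (fun k _ => hEint k)
    _ = ∑ k ∈ Finset.Icc 1 m, ∫ ω, (Mev S k).indicator (fun ω' => ((-(S k ω') : ℤ) : ℝ)) ω ∂P :=
        Finset.sum_congr rfl fun k _ => hkey k
    _ = ∫ ω, ∑ k ∈ Finset.Icc 1 m, (Mev S k).indicator (fun ω' => ((-(S k ω') : ℤ) : ℝ)) ω ∂P :=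
        (integral_finset_sum _ (fun k _ => hMint k)).symm
    _ ≤ ∫ ω, ((X 0 ω : ℝ)) ^ 2 ∂P := by
        refine integral_mono (integrable_finset_sum _ (fun k _ => hMint k)) hvar hptwise

end PartI


section PartIb
variable {Ω : Type*} [MeasurableSpace Ω]

lemma hfun_nonneg (S : ℕ → Ω → ℤ) (m : ℕ) (ω : Ω) : 0 ≤ hfunF S m ω :=
  Finset.sum_nonneg fun k _ => Set.indicator_nonneg (fun ω' _ => abs_nonneg _) ω

lemma hfun_meas (S : ℕ → Ω → ℤ) (hSmeas : ∀ k, Measurable (S k)) (m : ℕ) :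
    Measurable (fun ω => hfunF S m ω) := by
  refine Finset.measurable_sum _ ?_
  intro k _
  exact Measurable.indicator
    ((measurable_of_countable (fun z : ℤ => |(z : ℝ)|)).comp (hSmeas k)) (Eev_meas hSmeas k)

lemma hfun_int (P : Measure Ω) [IsProbabilityMeasure P] (S : ℕ → Ω → ℤ)
    (hSr_int : ∀ k, Integrable (fun ω => (S k ω : ℝ)) P)
    (hSmeas : ∀ k, Measurable (S k)) (m : ℕ) :
    Integrable (fun ω => hfunF S m ω) P :=
  integrable_finset_sum _ fun k _ => ((hSr_int k).abs).indicator (Eev_meas hSmeas k)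

lemma H_integrable (P : Measure Ω) [IsProbabilityMeasure P]
    (X : ℕ → Ω → ℤ) (hmeas : ∀ i, Measurable (X i))
    (hindep : iIndepFun X P)
    (hident : ∀ i j, IdentDistrib (X i) (X j) P P)
    (S : ℕ → Ω → ℤ) (hS : ∀ k ω, S k ω = ∑ j ∈ Finset.range k, X j ω)
    (hSr_int : ∀ k, Integrable (fun ω => (S k ω : ℝ)) P)
    (hSmeas : ∀ k, Measurable (S k))
    (hvar : Integrable (fun ω => ((X 0 ω : ℝ)) ^ 2) P)
    (υ : Ω → ℕ) (hu : ∀ ω, υ ω = upsF (fun t => S t ω)) :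
    Integrable (Hfun S υ) P := by
  have htend : ∀ ω, Tendsto (fun m => hfunF S m ω) atTop (𝓝 (Hfun S υ ω)) := by
    intro ω
    refine Tendsto.congr' ?_ tendsto_const_nhds
    filter_upwards [eventually_ge_atTop (υ ω)] with m hm
    exact (hfun_fix S υ hu m ω hm).symm
  constructor
  · exact aestronglyMeasurable_of_tendsto_ae atTop
      (fun m => (hfun_meas S hSmeas m).aestronglyMeasurable) (ae_of_all _ htend)
  · rw [hasFiniteIntegral_iff_norm]
    have h1 : ∀ ω, ENNReal.ofReal ‖Hfun S υ ω‖ = ENNReal.ofReal (Hfun S υ ω) := by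
      intro ω
      rw [Real.norm_of_nonneg (H_nonneg S υ ω)]
    have h2 : ∀ ω, ENNReal.ofReal (Hfun S υ ω) = ⨆ m, ENNReal.ofReal (hfunF S m ω) := by
      intro ω
      refine le_antisymm ?_ ?_
      · have h3 : ENNReal.ofReal (Hfun S υ ω) = ENNReal.ofReal (hfunF S (υ ω) ω) := by
          rw [hfun_fix S υ hu (υ ω) ω le_rfl]
        rw [h3]
        exact le_iSup (fun m => ENNReal.ofReal (hfunF S m ω)) (υ ω)
      · exact iSup_le fun m => ENNReal.ofReal_le_ofReal (hfun_le_H S υ hu m ω)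
    calc ∫⁻ ω, ENNReal.ofReal ‖Hfun S υ ω‖ ∂P
        = ∫⁻ ω, ⨆ m, ENNReal.ofReal (hfunF S m ω) ∂P := by
          refine lintegral_congr fun ω => ?_
          rw [h1, h2]
      _ = ⨆ m, ∫⁻ ω, ENNReal.ofReal (hfunF S m ω) ∂P := by
          refine lintegral_iSup (fun m => (hfun_meas S hSmeas m).ennreal_ofReal) ?_
          intro m1 m2 h ω
          exact ENNReal.ofReal_le_ofReal (hfun_mono S ω h)
      _ = ⨆ m, ENNReal.ofReal (∫ ω, hfunF S m ω ∂P) := by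
          refine iSup_congr fun m => ?_
          rw [ofReal_integral_eq_lintegral_ofReal (hfun_int P S hSr_int hSmeas m)
            (ae_of_all _ (hfun_nonneg S m))]
      _ ≤ ENNReal.ofReal (∫ ω, ((X 0 ω : ℝ)) ^ 2 ∂P) := by
          refine iSup_le fun m => ENNReal.ofReal_le_ofReal ?_
          exact thetam_le_C P X hmeas hindep hident S hS hSr_int hSmeas hvar m
      _ < ⊤ := ENNReal.ofReal_lt_top

end PartIb


section PartII
variable {Ω : Type*} [MeasurableSpace Ω]

lemma psR_eq (X : ℕ → Ω → ℤ) (S : ℕ → Ω → ℤ)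
    (hS : ∀ k ω, S k ω = ∑ j ∈ Finset.range k, X j ω) (t j : ℕ) (hj : j ≤ t) (ω : Ω) :
    psR t (fun i : ↥(Finset.range t) => X (i : ℕ) ω) j = S j ω := by
  rw [psR, hS]
  refine Finset.sum_congr rfl ?_
  intro u hu
  rw [Finset.mem_range] at hu
  simp only [dif_pos (Finset.mem_range.2 (by omega : u < t))]

lemma C_iff_DD (X : ℕ → Ω → ℤ) (S : ℕ → Ω → ℤ)
    (hS : ∀ k ω, S k ω = ∑ j ∈ Finset.range k, X j ω) (n t : ℕ) (ω : Ω) :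
    ω ∈ Cev S n t ↔ (fun i : ↥(Finset.range t) => X (i : ℕ) ω) ∈ DD n t := by
  constructor
  · rintro ⟨⟨i, hi1, hit, hineg, hinz⟩, hnostop⟩
    refine ⟨⟨i, hi1, hit, ?_, ?_⟩, ?_⟩
    · rw [psR_eq X S hS t i hit ω]; exact hineg
    · intro k hk1 hki
      rw [psR_eq X S hS t k (by omega) ω]; exact hinz k hk1 hki
    · intro s hst
      rw [psR_eq X S hS t s hst ω]; exact hnostop s hst
  · rintro ⟨⟨i, hi1, hit, hineg, hinz⟩, hnostop⟩
    rw [psR_eq X S hS t i hit ω] at hineg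
    refine ⟨⟨i, hi1, hit, hineg, ?_⟩, ?_⟩
    · intro k hk1 hki
      have := hinz k hk1 hki
      rwa [psR_eq X S hS t k (by omega) ω] at this
    · intro s hst
      have := hnostop s hst
      rwa [psR_eq X S hS t s hst ω] at this

lemma V_int (P : Measure Ω) [IsProbabilityMeasure P]
    (X : ℕ → Ω → ℤ) (S : ℕ → Ω → ℤ)
    (hident : ∀ i j, IdentDistrib (X i) (X j) P P)
    (hint : Integrable (fun ω => (X 0 ω : ℝ)) P)
    (hSmeas : ∀ k, Measurable (S k)) (n t : ℕ) :
    Integrable (fun ω => (X t ω : ℝ) * (Cev S n t).indicator (fun _ => (1 : ℝ)) ω) P := by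
  have heq : (fun ω => (X t ω : ℝ) * (Cev S n t).indicator (fun _ => (1 : ℝ)) ω)
      = (Cev S n t).indicator (fun ω => (X t ω : ℝ)) := by
    funext ω
    by_cases h : ω ∈ Cev S n t
    · rw [Set.indicator_of_mem h, Set.indicator_of_mem h, mul_one]
    · rw [Set.indicator_of_notMem h, Set.indicator_of_notMem h, mul_zero]
  rw [heq]
  exact (Xreal_int P X hident hint t).indicator (Cev_meas hSmeas n t)

lemma V_zero (P : Measure Ω) [IsProbabilityMeasure P]
    (X : ℕ → Ω → ℤ) (hmeas : ∀ i, Measurable (X i))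
    (hindep : iIndepFun X P)
    (hident : ∀ i j, IdentDistrib (X i) (X j) P P)
    (hint : Integrable (fun ω => (X 0 ω : ℝ)) P)
    (hmean : ∫ ω, (X 0 ω : ℝ) ∂P = 0)
    (S : ℕ → Ω → ℤ) (hS : ∀ k ω, S k ω = ∑ j ∈ Finset.range k, X j ω)
    (hSmeas : ∀ k, Measurable (S k)) (n t : ℕ) :
    ∫ ω, (X t ω : ℝ) * (Cev S n t).indicator (fun _ => (1 : ℝ)) ω ∂P = 0 := by
  have hCind : ∀ ω, (Cev S n t).indicator (fun _ => (1 : ℝ)) ω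
      = Set.indicator (DD n t) (fun _ => (1 : ℝ))
          (fun i : ↥(Finset.range t) => X (i : ℕ) ω) := by
    intro ω
    by_cases h : ω ∈ Cev S n t
    · rw [Set.indicator_of_mem h, Set.indicator_of_mem ((C_iff_DD X S hS n t ω).1 h)]
    · rw [Set.indicator_of_notMem h,
        Set.indicator_of_notMem (fun hm => h ((C_iff_DD X S hS n t ω).2 hm))]
  have hgint : Integrable (fun ω => Set.indicator (DD n t) (fun _ => (1 : ℝ))
      (fun i : ↥(Finset.range t) => X (i : ℕ) ω)) P := by
    refine Integrable.congr ((integrable_const (1 : ℝ)).indicator (Cev_meas hSmeas n t))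
      (ae_of_all _ ?_)
    exact hCind
  have hzero := indep_vanish P X hmeas hindep hident hint hmean t
    (Set.indicator (DD n t) (fun _ => (1 : ℝ))) hgint
  calc ∫ ω, (X t ω : ℝ) * (Cev S n t).indicator (fun _ => (1 : ℝ)) ω ∂P
      = ∫ ω, (X t ω : ℝ) * Set.indicator (DD n t) (fun _ => (1 : ℝ))
          (fun i : ↥(Finset.range t) => X (i : ℕ) ω) ∂P := by
        refine integral_congr_ae (ae_of_all _ fun ω => ?_)
        dsimp only
        rw [hCind ω]
    _ = 0 := hzero

lemma W_repr (S : ℕ → Ω → ℤ) (n m : ℕ) (ω : Ω) :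
    Wfun S n m ω = ∑ j ∈ Finset.range (m + 1),
      ((Amev S m) ∩ {ω' | tauF (fun t => S t ω') n m = j}).indicator
        (fun ω' => (S j ω' : ℝ)) ω := by
  by_cases hmem : ω ∈ Amev S m
  · rw [Wfun, Set.indicator_of_mem hmem]
    rw [Finset.sum_eq_single_of_mem (tauF (fun t => S t ω) n m)
      (Finset.mem_range.2 (by have := det_tau_le (fun t => S t ω) n m; omega))]
    · rw [Set.indicator_of_mem (show ω ∈ _ ∩ {ω' | tauF (fun t => S t ω') n m = tauF (fun t => S t ω) n m} from ⟨hmem, rfl⟩)]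
    · intro j _ hne
      rw [Set.indicator_of_notMem]
      rintro ⟨_, hj2⟩
      exact hne (by rw [← hj2])
  · rw [Wfun, Set.indicator_of_notMem hmem]
    refine (Finset.sum_eq_zero ?_).symm
    intro j _
    rw [Set.indicator_of_notMem]
    rintro ⟨h1, _⟩
    exact hmem h1

lemma W_int (P : Measure Ω) [IsProbabilityMeasure P] (S : ℕ → Ω → ℤ)
    (hSr_int : ∀ k, Integrable (fun ω => (S k ω : ℝ)) P)
    (hSmeas : ∀ k, Measurable (S k)) (n m : ℕ) :
    Integrable (fun ω => Wfun S n m ω) P := by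
  refine Integrable.congr (integrable_finset_sum (Finset.range (m + 1)) ?_)
    (ae_of_all _ fun ω => (W_repr S n m ω).symm)
  intro j hj
  rw [Finset.mem_range] at hj
  exact (hSr_int j).indicator ((Amev_meas hSmeas m).inter
    (tau_fiber_meas hSmeas n m j (by omega)))

lemma W_tele (X : ℕ → Ω → ℤ) (S : ℕ → Ω → ℤ)
    (hS : ∀ k ω, S k ω = ∑ j ∈ Finset.range k, X j ω)
    (υ : Ω → ℕ) (hu : ∀ ω, υ ω = upsF (fun t => S t ω)) (n m : ℕ) (hn : 1 ≤ n) (ω : Ω) :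
    Wfun S n m ω = (Amev S m).indicator (fun ω' => (S (υ ω') ω' : ℝ)) ω
      + ∑ t ∈ Finset.range m, (X t ω : ℝ) * (Cev S n t).indicator (fun _ => (1 : ℝ)) ω := by
  classical
  have hf0 : (fun t => S t ω) 0 = 0 := by simp only; rw [hS]; simp
  by_cases hmem : ω ∈ Amev S m
  · obtain ⟨hAP, hule⟩ := (Am_iff S m ω).1 hmem
    have hut : upsF (fun t => S t ω) ≤ tauF (fun t => S t ω) n m :=
      det_ups_le_tau (fun t => S t ω) n m hn hf0 hAP hule
    have htm : tauF (fun t => S t ω) n m ≤ m := det_tau_le (fun t => S t ω) n m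
    have hterm : ∀ t ∈ Finset.range m,
        (X t ω : ℝ) * (Cev S n t).indicator (fun _ => (1 : ℝ)) ω
        = if t ∈ Finset.Ico (upsF (fun t' => S t' ω)) (tauF (fun t' => S t' ω) n m)
            then (X t ω : ℝ) else 0 := by
      intro t ht
      rw [Finset.mem_range] at ht
      by_cases hC : ω ∈ Cev S n t
      · have h2 := (det_CP_iff (fun t' => S t' ω) n m t ht).1 hC
        rw [Set.indicator_of_mem hC, if_pos (Finset.mem_Ico.2 ⟨h2.2.1, h2.2.2⟩), mul_one]
      · rw [Set.indicator_of_notMem hC, if_neg, mul_zero]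
        intro hIco
        rw [Finset.mem_Ico] at hIco
        exact hC ((det_CP_iff (fun t' => S t' ω) n m t ht).2 ⟨hAP, hIco.1, hIco.2⟩)
    have hsum : ∑ t ∈ Finset.range m, (X t ω : ℝ) * (Cev S n t).indicator (fun _ => (1 : ℝ)) ω
        = ∑ t ∈ Finset.Ico (upsF (fun t' => S t' ω)) (tauF (fun t' => S t' ω) n m),
            (X t ω : ℝ) := by
      rw [Finset.sum_congr rfl hterm, Finset.sum_ite_mem]
      congr 1
      rw [Finset.inter_eq_right]
      intro t htIco
      rw [Finset.mem_Ico] at htIco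
      exact Finset.mem_range.2 (by omega)
    have hSsum : ∀ j, (S j ω : ℝ) = ∑ t ∈ Finset.range j, (X t ω : ℝ) := by
      intro j
      rw [hS]
      push_cast
      rfl
    rw [hsum, Finset.sum_Ico_eq_sub _ hut, Wfun, Set.indicator_of_mem hmem,
      Set.indicator_of_mem hmem, ← hSsum, ← hSsum, hu]
    ring
  · rw [Wfun, Set.indicator_of_notMem hmem, Set.indicator_of_notMem hmem]
    have hzero : ∀ t ∈ Finset.range m,
        (X t ω : ℝ) * (Cev S n t).indicator (fun _ => (1 : ℝ)) ω = 0 := by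
      intro t ht
      rw [Finset.mem_range] at ht
      have hC : ω ∉ Cev S n t := by
        intro hC
        obtain ⟨hAP, hule, _⟩ := (det_CP_iff (fun t' => S t' ω) n m t ht).1 hC
        exact hmem ((Am_iff S m ω).2 ⟨hAP, by omega⟩)
      rw [Set.indicator_of_notMem hC, mul_zero]
    rw [Finset.sum_eq_zero hzero]
    ring

lemma part2_bound (P : Measure Ω) [IsProbabilityMeasure P]
    (X : ℕ → Ω → ℤ) (hmeas : ∀ i, Measurable (X i))
    (hindep : iIndepFun X P)
    (hident : ∀ i j, IdentDistrib (X i) (X j) P P)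
    (hint : Integrable (fun ω => (X 0 ω : ℝ)) P)
    (hmean : ∫ ω, (X 0 ω : ℝ) ∂P = 0)
    (S : ℕ → Ω → ℤ) (hS : ∀ k ω, S k ω = ∑ j ∈ Finset.range k, X j ω)
    (hSr_int : ∀ k, Integrable (fun ω => (S k ω : ℝ)) P)
    (hSmeas : ∀ k, Measurable (S k))
    (υ : Ω → ℕ) (hu : ∀ ω, υ ω = upsF (fun t => S t ω))
    (hstep_ae : ∀ᵐ ω ∂P, ∀ t, S (t + 1) ω ≤ S t ω + 1)
    (n m : ℕ) (hn : 1 ≤ n) :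
    (n : ℝ) * (P (Gev S n m)).toReal ≤ ∫ ω, hfunF S m ω ∂P := by
  have hUind : ∀ ω, (Amev S m).indicator (fun ω' => (S (υ ω') ω' : ℝ)) ω = - hfunF S m ω := by
    intro ω
    rw [hfun_eq S υ hu m ω]
    by_cases hmem : ω ∈ Amev S m
    · rw [Set.indicator_of_mem hmem, Set.indicator_of_mem hmem]
      obtain ⟨hAP, _⟩ := (Am_iff S m ω).1 hmem
      obtain ⟨_, hu2, _, _, _⟩ := det_ups (fun t => S t ω) hAP
      have hneg : (S (υ ω) ω : ℝ) ≤ 0 := by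
        have : S (υ ω) ω < 0 := by rw [hu]; exact hu2
        exact_mod_cast (by omega : S (υ ω) ω ≤ 0)
      rw [abs_of_nonpos hneg]
      ring
    · rw [Set.indicator_of_notMem hmem, Set.indicator_of_notMem hmem]
      ring
  have hUint : Integrable (fun ω => (Amev S m).indicator (fun ω' => (S (υ ω') ω' : ℝ)) ω) P := by
    refine Integrable.congr ((hfun_int P S hSr_int hSmeas m).neg) (ae_of_all _ fun ω => ?_)
    dsimp only [Pi.neg_apply]
    exact (hUind ω).symm
  have hWU : ∫ ω, Wfun S n m ω ∂P = - ∫ ω, hfunF S m ω ∂P := by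
    calc ∫ ω, Wfun S n m ω ∂P
        = ∫ ω, ((Amev S m).indicator (fun ω' => (S (υ ω') ω' : ℝ)) ω
            + ∑ t ∈ Finset.range m, (X t ω : ℝ) * (Cev S n t).indicator (fun _ => (1 : ℝ)) ω) ∂P :=
          integral_congr_ae (ae_of_all _ (W_tele X S hS υ hu n m hn))
      _ = (∫ ω, (Amev S m).indicator (fun ω' => (S (υ ω') ω' : ℝ)) ω ∂P)
          + ∫ ω, ∑ t ∈ Finset.range m,
              (X t ω : ℝ) * (Cev S n t).indicator (fun _ => (1 : ℝ)) ω ∂P :=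
          integral_add hUint (integrable_finset_sum _
            (fun t _ => V_int P X S hident hint hSmeas n t))
      _ = (∫ ω, (Amev S m).indicator (fun ω' => (S (υ ω') ω' : ℝ)) ω ∂P)
          + ∑ t ∈ Finset.range m,
            ∫ ω, (X t ω : ℝ) * (Cev S n t).indicator (fun _ => (1 : ℝ)) ω ∂P := by
          rw [integral_finset_sum _ (fun t _ => V_int P X S hident hint hSmeas n t)]
      _ = ∫ ω, (Amev S m).indicator (fun ω' => (S (υ ω') ω' : ℝ)) ω ∂P := by
          rw [Finset.sum_eq_zero
            (fun t _ => V_zero P X hmeas hindep hident hint hmean S hS hSmeas n t)]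
          ring
      _ = ∫ ω, - hfunF S m ω ∂P := integral_congr_ae (ae_of_all _ hUind)
      _ = - ∫ ω, hfunF S m ω ∂P := integral_neg _
  have hae : (fun ω => Wfun S n m ω) ≤ᵐ[P]
      fun ω => (Gev S n m).indicator (fun _ => -(n : ℝ)) ω := by
    filter_upwards [hstep_ae] with ω hω
    have hf0 : (fun t => S t ω) 0 = 0 := by simp only; rw [hS]; simp
    have hfstep : ∀ t, (fun t' => S t' ω) (t + 1) ≤ (fun t' => S t' ω) t + 1 := by
      intro t
      have := hω t
      simp only
      omega
    by_cases hg : ω ∈ Gev S n m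
    · obtain ⟨hAP, hum, hτ⟩ := det_GP_tau (fun t => S t ω) n m hn hf0 hg
      rw [Set.indicator_of_mem hg, Wfun, Set.indicator_of_mem ((Am_iff S m ω).2 ⟨hAP, hum⟩)]
      exact_mod_cast hτ
    · rw [Set.indicator_of_notMem hg]
      by_cases ha : ω ∈ Amev S m
      · obtain ⟨hAP, hum⟩ := (Am_iff S m ω).1 ha
        rw [Wfun, Set.indicator_of_mem ha]
        have := det_tau_nonpos (fun t => S t ω) n m hAP
          (det_ups_le_tau (fun t => S t ω) n m hn hf0 hAP hum) hfstep
        exact_mod_cast this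
      · rw [Wfun, Set.indicator_of_notMem ha]
  have hle := integral_mono_ae (W_int P S hSr_int hSmeas n m)
    ((integrable_const (-(n : ℝ))).indicator (Gev_meas hSmeas n m)) hae
  rw [hWU] at hle
  have hconst : ∫ ω, (Gev S n m).indicator (fun _ => -(n : ℝ)) ω ∂P
      = (P (Gev S n m)).toReal * (-(n : ℝ)) := by
    rw [integral_indicator_const _ (Gev_meas hSmeas n m), smul_eq_mul]
    rfl
  rw [hconst] at hle
  linarith

end PartII

end Statement2Aux
open Statement2Aux

/-- Let `(S_n)` be an integer-valued random walk with `E[S_1] = 0`,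
`E[S_1^2] < ∞` and `P(S_1 ≥ 2) = 0`.  With `σ_1 = inf{k ≥ 1 : S_k = 0}`,
`T'_{-n} = inf{i ≥ 0 : S_i ≤ -n}`, `υ_1 = inf{i ≥ 1 : S_i < 0}` and
`θ = E[|S_{υ_1}| 1{υ_1 < σ_1}]`, one has `P(T'_{-n} < σ_1) ≤ θ/n` for every `n ≥ 1`. -/
theorem statement2 {Ω : Type*} [MeasurableSpace Ω] (P : Measure Ω) [IsProbabilityMeasure P]
    (X : ℕ → Ω → ℤ) (hmeas : ∀ i, Measurable (X i))
    (hindep : iIndepFun X P)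
    (hident : ∀ i j, IdentDistrib (X i) (X j) P P)
    (S : ℕ → Ω → ℤ) (hS : ∀ k ω, S k ω = ∑ j ∈ Finset.range k, X j ω)
    (hup : P {ω | 2 ≤ X 0 ω} = 0)
    (hint : Integrable (fun ω => (X 0 ω : ℝ)) P)
    (hmean : ∫ ω, (X 0 ω : ℝ) ∂P = 0)
    (hvar : Integrable (fun ω => ((X 0 ω : ℝ)) ^ 2) P)
    (υ : Ω → ℕ) (hυ : ∀ ω, υ ω = sInf {i : ℕ | 1 ≤ i ∧ S i ω < 0})
    (θ : ℝ)
    (hθ : θ = ∫ ω in {ω : Ω | ∃ i, 1 ≤ i ∧ S i ω < 0 ∧ ∀ k, 1 ≤ k → k ≤ i → S k ω ≠ 0},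
        |(S (υ ω) ω : ℝ)| ∂P) :
    ∀ n : ℕ, 1 ≤ n →
      (P {ω | ∃ i, S i ω ≤ -(n : ℤ) ∧ ∀ k, 1 ≤ k → k ≤ i → S k ω ≠ 0}).toReal ≤ θ / n := by
  classical
  intro n hn
  have hSmeas : ∀ k, Measurable (S k) := by
    intro k
    have hrw : S k = fun ω => ∑ j ∈ Finset.range k, X j ω := funext fun ω => hS k ω
    rw [hrw]
    exact Finset.measurable_sum _ fun j _ => hmeas j
  have hSr_int : ∀ k, Integrable (fun ω => (S k ω : ℝ)) P := by
    intro k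
    have hrw : (fun ω => (S k ω : ℝ)) = fun ω => ∑ j ∈ Finset.range k, (X j ω : ℝ) := by
      funext ω
      rw [hS k ω]
      push_cast
      rfl
    rw [hrw]
    exact integrable_finset_sum _ fun j _ => Xreal_int P X hident hint j
  have hu : ∀ ω, υ ω = upsF (fun t => S t ω) := fun ω => hυ ω
  have hSsucc : ∀ t ω, S (t + 1) ω = S t ω + X t ω := fun t ω => by
    rw [hS, hS, Finset.sum_range_succ]
  have hstep_ae : ∀ᵐ ω ∂P, ∀ t, S (t + 1) ω ≤ S t ω + 1 := by
    have h1 : ∀ t, P {ω | 2 ≤ X t ω} = 0 := by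
      intro t
      have h2 := (hident t 0).measure_mem_eq (s := {z : ℤ | 2 ≤ z})
        ((Set.to_countable _).measurableSet)
      calc P {ω | 2 ≤ X t ω} = P (X t ⁻¹' {z : ℤ | 2 ≤ z}) := rfl
        _ = P (X 0 ⁻¹' {z : ℤ | 2 ≤ z}) := h2
        _ = 0 := hup
    have h3 : ∀ᵐ ω ∂P, ∀ t, X t ω ≤ 1 := by
      rw [MeasureTheory.ae_all_iff]
      intro t
      have hset : {a : Ω | ¬ X t a ≤ 1} = {ω | 2 ≤ X t ω} := by
        ext ω
        simp only [Set.mem_setOf_eq]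
        omega
      rw [ae_iff, hset]
      exact h1 t
    filter_upwards [h3] with ω hω t
    rw [hSsucc t ω]
    have := hω t
    omega
  have hHint : Integrable (Hfun S υ) P :=
    H_integrable P X hmeas hindep hident S hS hSr_int hSmeas hvar υ hu
  have hθH : θ = ∫ ω, Hfun S υ ω ∂P := by
    rw [hθ]
    have hAset : {ω : Ω | ∃ i, 1 ≤ i ∧ S i ω < 0 ∧ ∀ k, 1 ≤ k → k ≤ i → S k ω ≠ 0}
        = Aev S := rfl
    rw [hAset, ← integral_indicator (Aev_meas hSmeas)]
    rfl
  have hθm : ∀ m, ∫ ω, hfunF S m ω ∂P ≤ θ := by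
    intro m
    rw [hθH]
    exact integral_mono (hfun_int P S hSr_int hSmeas m) hHint (hfun_le_H S υ hu m)
  have hθ0 : 0 ≤ θ := by
    rw [hθH]
    exact integral_nonneg (H_nonneg S υ)
  have hkey : ∀ m, (n : ℝ) * (P (Gev S n m)).toReal ≤ θ := fun m =>
    (part2_bound P X hmeas hindep hident hint hmean S hS hSr_int hSmeas υ hu
      hstep_ae n m hn).trans (hθm m)
  have hTar : {ω : Ω | ∃ i, S i ω ≤ -(n : ℤ) ∧ ∀ k, 1 ≤ k → k ≤ i → S k ω ≠ 0}
      = ⋃ m, Gev S n m := by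
    ext ω
    simp only [Set.mem_setOf_eq, Set.mem_iUnion, Gev]
    constructor
    · rintro ⟨i, h1, h2⟩
      exact ⟨i, i, le_rfl, h1, h2⟩
    · rintro ⟨m, i, _, h1, h2⟩
      exact ⟨i, h1, h2⟩
  rw [hTar]
  have hmono : Monotone (fun m => Gev S n m) := by
    intro m1 m2 h ω
    rintro ⟨i, h1, h2⟩
    exact ⟨i, by omega, h2⟩
  rw [hmono.directed_le.measure_iUnion]
  have hn0 : (0 : ℝ) < n := by exact_mod_cast hn
  have hPG : ∀ m, P (Gev S n m) ≤ ENNReal.ofReal (θ / n) := by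
    intro m
    refine (ENNReal.le_ofReal_iff_toReal_le (measure_ne_top _ _) (div_nonneg hθ0 hn0.le)).2 ?_
    rw [le_div_iff₀ hn0]
    have := hkey m
    linarith
  exact ENNReal.toReal_le_of_le_ofReal (div_nonneg hθ0 hn0.le) (iSup_le hPG)
end

section
/- Let (S_n) be a real-valued random walk with E[S_1] = m > 0 and E[|S_1|^α] = c_α < ∞ for some α > 1. Then for all n ≥ 1, x > 0 and y ≥ n^{max(1/α, 1/2)}, P(S_n ≤ m n − x) ≤ c' e^{−x/y} + c_α n y^{−α}, where c' > 0 is a constant depending only on the law of S_1. -/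
open MeasureTheory ProbabilityTheory Filter
open scoped ENNReal

private lemma aux_exp_le {β u : ℝ} (hβ1 : 1 ≤ β) (hβ2 : β ≤ 2) (hu : -1 ≤ u) :
    Real.exp (-u) ≤ 1 - u + |u| ^ β := by
  rcases le_or_gt (|u|) 1 with h1 | h1
  · rcases eq_or_ne u 0 with rfl | hu0
    · simp only [neg_zero, Real.exp_zero, abs_zero, sub_zero]
      have := Real.rpow_nonneg (le_refl (0:ℝ)) β
      linarith
    · have habs : |(-u)| ≤ 1 := by rwa [abs_neg]
      have hb := Real.exp_bound habs (n := 2) (by norm_num)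
      have hsum : ∑ m ∈ Finset.range 2, (-u) ^ m / m.factorial = 1 - u := by
        simp [Finset.sum_range_succ]
        ring
      rw [hsum, abs_neg] at hb
      have h2 := (abs_le.mp hb).2
      have hc : ((Nat.succ 2 : ℕ) : ℝ) / ((Nat.factorial 2 : ℕ) * (2:ℕ)) = 3/4 := by
        norm_num [Nat.factorial]
      rw [hc] at h2
      have hpow : |u| ^ (2:ℕ) = |u| ^ ((2:ℕ):ℝ) := (Real.rpow_natCast _ 2).symm
      have h4 : |u| ^ ((2:ℕ):ℝ) ≤ |u| ^ β := by
        refine Real.rpow_le_rpow_of_exponent_ge (abs_pos.mpr hu0) h1 ?_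
        exact_mod_cast hβ2
      have h5 : |u| ^ (2:ℕ) ≤ |u| ^ β := hpow ▸ h4
      have hsq : (0:ℝ) ≤ |u| ^ (2:ℕ) := by positivity
      nlinarith
  · have hu1 : 1 < u := by
      rcases abs_cases u with ⟨he, _⟩ | ⟨he, hneg⟩
      · linarith [he ▸ h1]
      · rw [he] at h1; linarith
    have h5 : Real.exp (-u) ≤ 1 := Real.exp_le_one_iff.mpr (by linarith)
    have h6 : u ≤ |u| ^ β := by
      have : |u| ^ (1:ℝ) ≤ |u| ^ β :=
        Real.rpow_le_rpow_of_exponent_le h1.le hβ1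
      rw [Real.rpow_one] at this
      calc u ≤ |u| := le_abs_self u
        _ ≤ |u| ^ β := this
    linarith

private lemma aux_rpow_le {β α v : ℝ} (hv : 0 ≤ v) (hβ0 : 0 ≤ β) (hβα : β ≤ α) :
    v ^ β ≤ 1 + v ^ α := by
  rcases le_or_gt v 1 with h | h
  · have := Real.rpow_le_one hv h hβ0
    have := Real.rpow_nonneg hv α
    linarith
  · have := Real.rpow_le_rpow_of_exponent_le h.le hβα
    linarith

/-- Let `(S_n)` be a real-valued random walk with `E[S_1] = m > 0` and
`E[|S_1|^α] = c_α < ∞` for some `α > 1`.  Then for all `n ≥ 1`, `x > 0` and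
`y ≥ n^{max(1/α, 1/2)}`, `P(S_n ≤ m n − x) ≤ c' e^{−x/y} + c_α n y^{−α}`,
where `c' > 0` is a constant depending only on the law of `S_1`. -/
theorem statement5 {Ω : Type*} [MeasurableSpace Ω] (P : Measure Ω) [IsProbabilityMeasure P]
    (X : ℕ → Ω → ℝ) (hmeas : ∀ i, Measurable (X i))
    (hindep : iIndepFun X P)
    (hident : ∀ i j, IdentDistrib (X i) (X j) P P)
    (S : ℕ → Ω → ℝ) (hS : ∀ k ω, S k ω = ∑ j ∈ Finset.range k, X j ω)
    (m : ℝ) (hm : 0 < m)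
    (hint : Integrable (X 0) P) (hmean : ∫ ω, X 0 ω ∂P = m)
    (α : ℝ) (hα : 1 < α)
    (cα : ℝ) (hmom : Integrable (fun ω => |X 0 ω| ^ α) P)
    (hcα : ∫ ω, |X 0 ω| ^ α ∂P = cα) :
    ∃ c' : ℝ, 0 < c' ∧ ∀ n : ℕ, 1 ≤ n → ∀ x : ℝ, 0 < x → ∀ y : ℝ,
      (n : ℝ) ^ (max (1 / α) (1 / 2)) ≤ y →
      (P {ω | S n ω ≤ m * n - x}).toReal
        ≤ c' * Real.exp (-x / y) + cα * n * y ^ (-α) := by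
  have hcα0 : 0 ≤ cα := hcα ▸ integral_nonneg fun ω => Real.rpow_nonneg (abs_nonneg _) _
  refine ⟨Real.exp (1 + cα), Real.exp_pos _, ?_⟩
  intro n hn x hx y hy
  set β : ℝ := min α 2 with hβdef
  have hβ1 : 1 < β := lt_min hα one_lt_two
  have hβ0 : 0 < β := by linarith
  have hβ2 : β ≤ 2 := min_le_right _ _
  have hβα : β ≤ α := min_le_left _ _
  have hα0 : (0:ℝ) < α := by linarith
  have hmaxβ : max (1/α) (1/2 : ℝ) = 1/β := by
    rcases le_total α 2 with h | h
    · rw [hβdef, min_eq_left h, max_eq_left]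
      exact one_div_le_one_div_of_le hα0 h
    · rw [hβdef, min_eq_right h, max_eq_right]
      exact one_div_le_one_div_of_le two_pos h
  rw [hmaxβ] at hy
  have hn1 : (1:ℝ) ≤ (n:ℝ) := by exact_mod_cast hn
  have hy1 : 1 ≤ y := le_trans (Real.one_le_rpow hn1 (by positivity)) hy
  have hy0 : 0 < y := by linarith
  set t : ℝ := 1/y with htdef
  have ht0 : 0 < t := by positivity
  have ht1 : t ≤ 1 := by rw [htdef, div_le_one hy0]; exact hy1
  have hty : t * y = 1 := by rw [htdef]; field_simp
  -- truncated variables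
  set Z : ℕ → Ω → ℝ := fun i ω => max (X i ω) (-y) with hZdef
  set W : ℕ → Ω → ℝ := fun i ω => -(Z i ω) with hWdef
  have hZmeas : ∀ i, Measurable (Z i) := fun i => (hmeas i).max measurable_const
  have hWmeas : ∀ i, Measurable (W i) := fun i => (hZmeas i).neg
  have hZge : ∀ i ω, -y ≤ Z i ω := fun i ω => le_max_right _ _
  have hZX : ∀ i ω, X i ω ≤ Z i ω := fun i ω => le_max_left _ _
  have hZabs : ∀ i ω, |Z i ω| ≤ |X i ω| := by
    intro i ω
    rcases le_total (X i ω) (-y) with h | h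
    · rw [hZdef]; simp only [max_eq_right h, abs_neg]
      rw [abs_of_nonneg hy0.le, abs_of_nonpos (by linarith)]
      linarith
    · rw [hZdef]; simp only [max_eq_left h]; exact le_rfl
  -- the union bound decomposition
  have hsub : {ω | S n ω ≤ m * n - x} ⊆
      {ω | x - m * n ≤ (∑ i ∈ Finset.range n, W i) ω} ∪
        ⋃ i ∈ Finset.range n, {ω | X i ω < -y} := by
    intro ω hω
    by_cases hall : ∀ i ∈ Finset.range n, -y ≤ X i ω
    · left
      simp only [Set.mem_setOf_eq, Finset.sum_apply]
      have hZeq : ∀ i ∈ Finset.range n, Z i ω = X i ω := fun i hi =>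
        max_eq_left (hall i hi)
      have hsum : ∑ i ∈ Finset.range n, W i ω = -(S n ω) := by
        rw [hS n ω, ← Finset.sum_neg_distrib]
        exact Finset.sum_congr rfl fun i hi => by rw [hWdef]; simp [hZeq i hi]
      rw [hsum]
      have := hω
      simp only [Set.mem_setOf_eq] at this
      linarith
    · right
      push_neg at hall
      obtain ⟨i, hi, hlt⟩ := hall
      exact Set.mem_biUnion hi hlt
  -- Markov bound for a single bad increment
  have hmarkov : (P {ω | X 0 ω < -y}).toReal ≤ cα * y ^ (-α) := by
    have hyα : (0:ℝ) < y ^ α := Real.rpow_pos_of_pos hy0 α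
    have hsmeas : MeasurableSet {ω | X 0 ω < -y} := measurableSet_lt (hmeas 0) measurable_const
    have hconst : ∀ ω ∈ {ω | X 0 ω < -y}, y ^ α ≤ |X 0 ω| ^ α := by
      intro ω hω
      simp only [Set.mem_setOf_eq] at hω
      have : y ≤ |X 0 ω| := by
        rw [abs_of_nonpos (by linarith)]; linarith
      exact Real.rpow_le_rpow hy0.le this hα0.le
    have h1 : y ^ α * (P {ω | X 0 ω < -y}).toReal ≤ ∫ ω in {ω | X 0 ω < -y}, |X 0 ω| ^ α ∂P :=
      setIntegral_ge_of_const_le_real hsmeas (measure_ne_top _ _) hconst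
        (hmom.integrableOn)
    have h2 : ∫ ω in {ω | X 0 ω < -y}, |X 0 ω| ^ α ∂P ≤ ∫ ω, |X 0 ω| ^ α ∂P :=
      setIntegral_le_integral hmom (Filter.Eventually.of_forall fun ω =>
        Real.rpow_nonneg (abs_nonneg _) _)
    rw [Real.rpow_neg hy0.le, ← div_eq_mul_inv, le_div_iff₀ hyα]
    calc (P {ω | X 0 ω < -y}).toReal * y ^ α
        = y ^ α * (P {ω | X 0 ω < -y}).toReal := mul_comm _ _
      _ ≤ ∫ ω in {ω | X 0 ω < -y}, |X 0 ω| ^ α ∂P := h1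
      _ ≤ cα := hcα ▸ h2
  -- integrability facts
  have hZint : Integrable (Z 0) P := by
    refine Integrable.mono' hint.abs (hZmeas 0).aestronglyMeasurable ?_
    exact Filter.Eventually.of_forall fun ω => by
      rw [Real.norm_eq_abs]; exact hZabs 0 ω
  have hZβle : ∀ ω, |Z 0 ω| ^ β ≤ 1 + |X 0 ω| ^ α := fun ω =>
    le_trans (Real.rpow_le_rpow (abs_nonneg _) (hZabs 0 ω) hβ0.le)
      (aux_rpow_le (abs_nonneg _) hβ0.le hβα)
  have hZβmeas : Measurable fun ω => |Z 0 ω| ^ β :=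
    (Real.continuous_rpow_const hβ0.le).measurable.comp (hZmeas 0).abs
  have hZβint : Integrable (fun ω => |Z 0 ω| ^ β) P := by
    refine Integrable.mono' ((integrable_const 1).add hmom) hZβmeas.aestronglyMeasurable ?_
    exact Filter.Eventually.of_forall fun ω => by
      rw [Real.norm_eq_abs, abs_of_nonneg (Real.rpow_nonneg (abs_nonneg _) _)]
      exact hZβle ω
  -- mgf bound for a single truncated increment
  have hexpW : ∀ i, Integrable (fun ω => Real.exp (t * W i ω)) P := by
    intro i
    refine Integrable.mono' (integrable_const (Real.exp 1))
      (((hWmeas i).const_mul t).exp).aestronglyMeasurable ?_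
    refine Filter.Eventually.of_forall fun ω => ?_
    rw [Real.norm_eq_abs, abs_of_nonneg (Real.exp_pos _).le, Real.exp_le_exp]
    have : W i ω ≤ y := by
      rw [hWdef]; simp only [neg_le]; exact hZge i ω
    calc t * W i ω ≤ t * y := by nlinarith
      _ = 1 := hty
  have hmgfW0 : mgf (W 0) P t ≤ Real.exp (-(t*m) + t ^ β * (1 + cα)) := by
    have hptwise : ∀ ω, Real.exp (t * W 0 ω) ≤ 1 - t * Z 0 ω + t ^ β * |Z 0 ω| ^ β := by
      intro ω
      have hu : -1 ≤ t * Z 0 ω := by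
        have := hZge 0 ω
        nlinarith
      have h := aux_exp_le hβ1.le hβ2 hu
      have heq : t * W 0 ω = -(t * Z 0 ω) := by rw [hWdef]; ring
      rw [heq]
      have habs : |t * Z 0 ω| ^ β = t ^ β * |Z 0 ω| ^ β := by
        rw [abs_mul, abs_of_pos ht0, Real.mul_rpow ht0.le (abs_nonneg _)]
      rw [habs] at h
      exact h
    have hrhs_int : Integrable (fun ω => 1 - t * Z 0 ω + t ^ β * |Z 0 ω| ^ β) P :=
      ((integrable_const 1).sub (hZint.const_mul t)).add (hZβint.const_mul _)
    have h1 : mgf (W 0) P t ≤ ∫ ω, (1 - t * Z 0 ω + t ^ β * |Z 0 ω| ^ β) ∂P :=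
      integral_mono (hexpW 0) hrhs_int hptwise
    have hint1 : Integrable (fun ω => 1 - t * Z 0 ω) P :=
      (integrable_const 1).sub (hZint.const_mul t)
    have hint2 : Integrable (fun ω => t ^ β * |Z 0 ω| ^ β) P := hZβint.const_mul _
    have hint3 : Integrable (fun ω => t * Z 0 ω) P := hZint.const_mul t
    have h2 : ∫ ω, (1 - t * Z 0 ω + t ^ β * |Z 0 ω| ^ β) ∂P
        = 1 - t * ∫ ω, Z 0 ω ∂P + t ^ β * ∫ ω, |Z 0 ω| ^ β ∂P := by
      rw [integral_add hint1 hint2, integral_sub (integrable_const 1) hint3,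
        integral_const, integral_const_mul, integral_const_mul]
      simp
    have hZmean : m ≤ ∫ ω, Z 0 ω ∂P := by
      rw [← hmean]
      exact integral_mono hint hZint (hZX 0)
    have hZβmean : ∫ ω, |Z 0 ω| ^ β ∂P ≤ 1 + cα := by
      have h5 : ∫ ω, |Z 0 ω| ^ β ∂P ≤ ∫ ω, (1 + |X 0 ω| ^ α) ∂P :=
        integral_mono hZβint ((integrable_const 1).add hmom) hZβle
      have h6 : ∫ ω, (1 + |X 0 ω| ^ α) ∂P = 1 + cα := by
        rw [integral_add (integrable_const 1) hmom, integral_const, hcα]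
        simp
      linarith [h6 ▸ h5]
    have h3 : 1 - t * ∫ ω, Z 0 ω ∂P + t ^ β * ∫ ω, |Z 0 ω| ^ β ∂P
        ≤ 1 + (-(t*m) + t ^ β * (1 + cα)) := by
      have htβ : (0:ℝ) ≤ t ^ β := Real.rpow_nonneg ht0.le _
      nlinarith
    calc mgf (W 0) P t ≤ 1 - t * ∫ ω, Z 0 ω ∂P + t ^ β * ∫ ω, |Z 0 ω| ^ β ∂P := h2 ▸ h1
      _ ≤ 1 + (-(t*m) + t ^ β * (1 + cα)) := h3
      _ ≤ Real.exp (-(t*m) + t ^ β * (1 + cα)) := by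
          linarith [Real.add_one_le_exp (-(t*m) + t ^ β * (1 + cα))]
  -- all W i have the same mgf
  have hmgf_eq : ∀ i, mgf (W i) P t = mgf (W 0) P t := by
    intro i
    have hg : Measurable fun v : ℝ => -(max v (-y)) := (measurable_id.max measurable_const).neg
    have hWid : IdentDistrib (W i) (W 0) P P := by
      have := (hident i 0).comp hg
      exact this
    have := (hWid.comp (Real.measurable_exp.comp (measurable_const_mul t))).integral_eq
    simpa [mgf, Function.comp] using this
  -- independence of the W i
  have hWindep : iIndepFun W P := by
    have hg : Measurable fun v : ℝ => -(max v (-y)) := (measurable_id.max measurable_const).neg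
    exact hindep.comp (fun _ => fun v => -(max v (-y))) (fun _ => hg)
  -- Chernoff bound
  have hVint : Integrable (fun ω => Real.exp (t * ∑ i ∈ Finset.range n, W i ω)) P := by
    refine Integrable.mono' (integrable_const (Real.exp n))
      (((Finset.measurable_sum (Finset.range n) fun i _ => hWmeas i).const_mul
        t).exp).aestronglyMeasurable ?_
    · refine Filter.Eventually.of_forall fun ω => ?_
      rw [Real.norm_eq_abs, abs_of_nonneg (Real.exp_pos _).le, Real.exp_le_exp]
      have hsum : ∑ i ∈ Finset.range n, W i ω ≤ n * y := by
        calc ∑ i ∈ Finset.range n, W i ω ≤ ∑ _i ∈ Finset.range n, y :=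
              Finset.sum_le_sum fun i _ => by
                rw [hWdef]; simp only [neg_le]; exact hZge i ω
          _ = n * y := by rw [Finset.sum_const, Finset.card_range]; ring
      calc t * (∑ i ∈ Finset.range n, W i ω) ≤ t * (n * y) := by nlinarith
        _ = n := by rw [← mul_assoc, mul_comm t (n:ℝ), mul_assoc, hty, mul_one]
  have hcher := measure_ge_le_exp_mul_mgf (μ := P) (X := ∑ i ∈ Finset.range n, W i)
    (x - m * n) ht0.le (by simpa using hVint)
  have hmgfsum : mgf (∑ i ∈ Finset.range n, W i) P t = (mgf (W 0) P t) ^ n := by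
    rw [hWindep.mgf_sum hWmeas (Finset.range n)]
    rw [Finset.prod_congr rfl fun i _ => hmgf_eq i, Finset.prod_const, Finset.card_range]
  -- n * t^β ≤ 1
  have hntβ : (n:ℝ) * t ^ β ≤ 1 := by
    have hyβ : (n:ℝ) ≤ y ^ β := by
      have h1 : ((n:ℝ) ^ (1/β)) ^ β ≤ y ^ β :=
        Real.rpow_le_rpow (Real.rpow_nonneg (Nat.cast_nonneg n) _) hy hβ0.le
      have h2 : ((n:ℝ) ^ (1/β)) ^ β = (n:ℝ) := by
        rw [← Real.rpow_mul (Nat.cast_nonneg n), one_div_mul_cancel hβ0.ne', Real.rpow_one]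
      linarith [h2 ▸ h1]
    have hyβ0 : (0:ℝ) < y ^ β := Real.rpow_pos_of_pos hy0 β
    have htβ : t ^ β = (y ^ β)⁻¹ := by
      rw [htdef, one_div, Real.inv_rpow hy0.le]
    rw [htβ]
    calc (n:ℝ) * (y ^ β)⁻¹ ≤ y ^ β * (y ^ β)⁻¹ :=
          mul_le_mul_of_nonneg_right hyβ (by positivity)
      _ = 1 := mul_inv_cancel₀ hyβ0.ne'
  -- assemble the Chernoff side
  have hchernoff : (P {ω | x - m * n ≤ (∑ i ∈ Finset.range n, W i) ω}).toReal
      ≤ Real.exp (1 + cα) * Real.exp (-x / y) := by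
    have hmgf_pow : (mgf (W 0) P t) ^ n ≤ Real.exp (n * (-(t*m) + t ^ β * (1 + cα))) := by
      calc (mgf (W 0) P t) ^ n ≤ (Real.exp (-(t*m) + t ^ β * (1 + cα))) ^ n :=
            pow_le_pow_left₀ mgf_nonneg hmgfW0 n
        _ = Real.exp (n * (-(t*m) + t ^ β * (1 + cα))) := (Real.exp_nat_mul _ n).symm
    calc (P {ω | x - m * n ≤ (∑ i ∈ Finset.range n, W i) ω}).toReal
        ≤ Real.exp (-t * (x - m * n)) * mgf (∑ i ∈ Finset.range n, W i) P t := hcher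
      _ ≤ Real.exp (-t * (x - m * n)) * Real.exp (n * (-(t*m) + t ^ β * (1 + cα))) := by
          rw [hmgfsum]
          exact mul_le_mul_of_nonneg_left hmgf_pow (Real.exp_pos _).le
      _ = Real.exp (-(t * x) + (n:ℝ) * t ^ β * (1 + cα)) := by
          rw [← Real.exp_add]; ring_nf
      _ ≤ Real.exp ((1 + cα) + (-x / y)) := by
          rw [Real.exp_le_exp]
          have h1 : (n:ℝ) * t ^ β * (1 + cα) ≤ 1 * (1 + cα) :=
            mul_le_mul_of_nonneg_right hntβ (by linarith)
          have h2 : -(t * x) = -x / y := by rw [htdef]; ring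
          linarith
      _ = Real.exp (1 + cα) * Real.exp (-x / y) := Real.exp_add _ _
  -- measure-theoretic assembly
  have hkey : P {ω | S n ω ≤ m * n - x}
      ≤ P {ω | x - m * n ≤ (∑ i ∈ Finset.range n, W i) ω}
        + ∑ i ∈ Finset.range n, P {ω | X i ω < -y} := by
    refine (measure_mono hsub).trans ?_
    refine (measure_union_le _ _).trans ?_
    gcongr
    exact measure_biUnion_finset_le _ _
  have hident_meas : ∀ i, P {ω | X i ω < -y} = P {ω | X 0 ω < -y} := by
    intro i
    have : {ω | X i ω < -y} = X i ⁻¹' Set.Iio (-y) := rfl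
    rw [this, (hident i 0).measure_mem_eq measurableSet_Iio]
    rfl
  have hfin1 : P {ω | x - m * n ≤ (∑ i ∈ Finset.range n, W i) ω} ≠ ∞ := measure_ne_top _ _
  have hfin2 : (∑ i ∈ Finset.range n, P {ω | X i ω < -y}) ≠ ∞ :=
    ENNReal.sum_ne_top.mpr fun i _ => measure_ne_top _ _
  have htoReal : (P {ω | S n ω ≤ m * n - x}).toReal
      ≤ (P {ω | x - m * n ≤ (∑ i ∈ Finset.range n, W i) ω}).toReal
        + ∑ i ∈ Finset.range n, (P {ω | X i ω < -y}).toReal := by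
    have := ENNReal.toReal_mono (by finiteness) hkey
    rwa [ENNReal.toReal_add hfin1 hfin2, ENNReal.toReal_sum (fun i _ => measure_ne_top _ _)]
      at this
  have hsum_bound : ∑ i ∈ Finset.range n, (P {ω | X i ω < -y}).toReal
      ≤ cα * n * y ^ (-α) := by
    calc ∑ i ∈ Finset.range n, (P {ω | X i ω < -y}).toReal
        = ∑ _i ∈ Finset.range n, (P {ω | X 0 ω < -y}).toReal :=
          Finset.sum_congr rfl fun i _ => by rw [hident_meas i]
      _ = n * (P {ω | X 0 ω < -y}).toReal := by
          rw [Finset.sum_const, Finset.card_range]; ring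
      _ ≤ n * (cα * y ^ (-α)) := by
          apply mul_le_mul_of_nonneg_left hmarkov (Nat.cast_nonneg n)
      _ = cα * n * y ^ (-α) := by ring
  calc (P {ω | S n ω ≤ m * n - x}).toReal
      ≤ (P {ω | x - m * n ≤ (∑ i ∈ Finset.range n, W i) ω}).toReal
        + ∑ i ∈ Finset.range n, (P {ω | X i ω < -y}).toReal := htoReal
    _ ≤ Real.exp (1 + cα) * Real.exp (-x / y) + cα * n * y ^ (-α) :=
        add_le_add hchernoff hsum_bound
end

section
/- Let L be an optional line of the branching random walk of the form L = {ξ_k : τ(ξ) = k}, where τ(ξ) = inf{k ≥ 0 : (V(ξ_0),...,V(ξ_k)) ∈ A_k} for Borel sets A_k ⊆ ℝ^{k+1}. Then E[#L] = E[e^{t* S_τ} 1{τ < ∞}] and E[Σ_{u ∈ L} e^{−t* V(u)}] = P(τ < ∞), where τ = inf{k ≥ 0 : (S_0,...,S_k) ∈ A_k} for the many-to-one random walk S. -/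
open MeasureTheory ProbabilityTheory Filter
open scoped ENNReal

noncomputable section

/-- The genealogical tree of a branching process encoded by offspring numbers `N`. -/
def brwTree {Ω : Type*} (N : List ℕ → Ω → ℕ) (ω : Ω) : Set (List ℕ) :=
  {u | ∀ j : Fin u.length, u.get j < N (u.take j.1) ω}

/-- The position of the vertex `u` in the branching random walk. -/
def brwPos {Ω : Type*} (X : List ℕ → ℕ → Ω → ℝ) (ω : Ω) (u : List ℕ) : ℝ :=
  ∑ j : Fin u.length, X (u.take j.1) (u.get j) ω

/-- The optional line `L` associated with the path events `(A_k)`: vertices `u` of the tree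
whose ancestral path `(V(u_0), …, V(u_{|u|}))` belongs to `A_{|u|}` while no strict ancestral
subpath belongs to the corresponding `A_m`. -/
def brwLine {Ω : Type*} (N : List ℕ → Ω → ℕ) (X : List ℕ → ℕ → Ω → ℝ)
    (A : (k : ℕ) → Set (Fin (k + 1) → ℝ)) (ω : Ω) : Set (List ℕ) :=
  {u | u ∈ brwTree N ω ∧
    (fun j : Fin (u.length + 1) => brwPos X ω (u.take j.1)) ∈ A u.length ∧
    ∀ m < u.length, (fun j : Fin (m + 1) => brwPos X ω (u.take j.1)) ∉ A m}

namespace Stmt9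

variable {Ω : Type*} {N : List ℕ → Ω → ℕ} {X : List ℕ → ℕ → Ω → ℝ} {tstar : ℝ}

/-- weight of tuple `e`: indicator of tree membership times `e^{-t* V}` factored as a product. -/
def brwW (N : List ℕ → Ω → ℕ) (X : List ℕ → ℕ → Ω → ℝ) (tstar : ℝ) (ω : Ω) {k : ℕ}
    (e : Fin k → ℕ) : ℝ≥0∞ :=
  ∏ j : Fin k, if e j < N ((List.ofFn e).take j.1) ω then
    ENNReal.ofReal (Real.exp (-tstar * X ((List.ofFn e).take j.1) (e j) ω)) else 0

def pPath (X : List ℕ → ℕ → Ω → ℝ) (ω : Ω) {k : ℕ} (e : Fin k → ℕ) : Fin (k + 1) → ℝ :=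
  fun j => brwPos X ω ((List.ofFn e).take j.1)

def ext {k : ℕ} (z : Fin (k + 1) → ℝ) (y : ℝ) : Fin (k + 2) → ℝ :=
  Fin.snoc z (z (Fin.last k) + y)

lemma brwPos_take (ω : Ω) (u : List ℕ) {m : ℕ} (hm : m ≤ u.length) :
    brwPos X ω (u.take m)
      = ∑ i : Fin m, X (u.take i.1) (u.get ⟨i.1, lt_of_lt_of_le i.isLt hm⟩) ω := by
  have hl : m = (u.take m).length := by simp [List.length_take, Nat.min_eq_left hm]
  rw [brwPos, ← Fin.sum_congr' _ hl]
  refine Finset.sum_congr rfl fun i _ => ?_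
  have h1 : (u.take m).take ((Fin.cast hl i) : Fin (u.take m).length).1 = u.take i.1 := by
    rw [List.take_take]
    congr 1
    simpa using Nat.min_eq_left i.isLt.le
  rw [h1]
  congr 1
  simp only [List.get_eq_getElem]
  exact List.getElem_take ..

lemma take_ofFn_eq {k : ℕ} (e : Fin k → ℕ) : (List.ofFn e).take k = List.ofFn e :=
  List.take_of_length_le (by simp)

lemma brwPos_ofFn (ω : Ω) {k : ℕ} (e : Fin k → ℕ) :
    brwPos X ω (List.ofFn e) = ∑ j : Fin k, X ((List.ofFn e).take j.1) (e j) ω := by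
  conv_lhs => rw [← take_ofFn_eq e]
  rw [brwPos_take ω _ (by simp)]
  refine Finset.sum_congr rfl fun i _ => ?_
  simp [List.get_ofFn]

lemma mem_tree_ofFn (ω : Ω) {k : ℕ} (e : Fin k → ℕ) :
    List.ofFn e ∈ brwTree N ω ↔ ∀ j : Fin k, e j < N ((List.ofFn e).take j.1) ω := by
  constructor
  · intro h j
    have := h (Fin.cast (List.length_ofFn (f := e)).symm j)
    rw [List.get_ofFn] at this
    simpa using this
  · intro h j
    have := h (Fin.cast (List.length_ofFn (f := e)) j)
    rw [List.get_ofFn]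
    simpa using this

lemma take_ofFn_snoc {k : ℕ} (e : Fin k → ℕ) (i : ℕ) {m : ℕ} (hm : m ≤ k) :
    (List.ofFn (Fin.snoc e i : Fin (k + 1) → ℕ)).take m = (List.ofFn e).take m := by
  have hof : List.ofFn (Fin.snoc e i : Fin (k + 1) → ℕ) = List.ofFn e ++ [i] := by
    rw [List.ofFn_succ']
    simp [List.concat_eq_append]
  rw [hof, List.take_append_of_le_length (by simpa using hm)]

lemma brwW_snoc (ω : Ω) {k : ℕ} (e : Fin k → ℕ) (i : ℕ) :
    brwW N X tstar ω (Fin.snoc e i)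
      = brwW N X tstar ω e *
        (if i < N (List.ofFn e) ω then
          ENNReal.ofReal (Real.exp (-tstar * X (List.ofFn e) i ω)) else 0) := by
  rw [brwW, Fin.prod_univ_castSucc]
  congr 1
  · refine Finset.prod_congr rfl fun j _ => ?_
    rw [show ((j.castSucc : Fin (k + 1)) : ℕ) = j.1 from rfl,
      take_ofFn_snoc e i j.isLt.le, Fin.snoc_castSucc]
  · rw [show ((Fin.last k : Fin (k + 1)) : ℕ) = k from rfl,
      take_ofFn_snoc e i le_rfl, take_ofFn_eq, Fin.snoc_last]

lemma brwPos_snoc (ω : Ω) {k : ℕ} (e : Fin k → ℕ) (i : ℕ) :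
    brwPos X ω (List.ofFn (Fin.snoc e i : Fin (k + 1) → ℕ))
      = brwPos X ω (List.ofFn e) + X (List.ofFn e) i ω := by
  rw [brwPos_ofFn, brwPos_ofFn, Fin.sum_univ_castSucc]
  congr 1
  · refine Finset.sum_congr rfl fun j _ => ?_
    rw [show ((j.castSucc : Fin (k + 1)) : ℕ) = j.1 from rfl,
      take_ofFn_snoc e i j.isLt.le, Fin.snoc_castSucc]
  · rw [show ((Fin.last k : Fin (k + 1)) : ℕ) = k from rfl,
      take_ofFn_snoc e i le_rfl, take_ofFn_eq, Fin.snoc_last]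

lemma pPath_snoc (ω : Ω) {k : ℕ} (e : Fin k → ℕ) (i : ℕ) :
    pPath X ω (Fin.snoc e i) = ext (pPath X ω e) (X (List.ofFn e) i ω) := by
  funext j
  refine Fin.lastCases ?_ (fun jj => ?_) j
  · show brwPos X ω ((List.ofFn (Fin.snoc e i : Fin (k + 1) → ℕ)).take (k + 1)) = _
    rw [List.take_of_length_le (by simp), brwPos_snoc]
    rw [ext, Fin.snoc_last, pPath]
    rw [show ((Fin.last k : Fin (k + 1)) : ℕ) = k from rfl, take_ofFn_eq]
  · show brwPos X ω ((List.ofFn (Fin.snoc e i : Fin (k + 1) → ℕ)).take jj.castSucc.1) = _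
    rw [ext, Fin.snoc_castSucc, show (jj.castSucc : ℕ) = jj.1 from rfl,
      take_ofFn_snoc e i (Nat.lt_succ_iff.mp jj.isLt)]
    rfl

lemma measurable_ext {k : ℕ} :
    Measurable fun p : (Fin (k + 1) → ℝ) × ℝ => ext p.1 p.2 := by
  refine measurable_pi_lambda _ fun j => ?_
  refine Fin.lastCases ?_ (fun jj => ?_) j
  · simp only [ext, Fin.snoc_last]
    exact ((measurable_pi_apply _).comp measurable_fst).add measurable_snd
  · simp only [ext, Fin.snoc_castSucc]
    exact (measurable_pi_apply _).comp measurable_fst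

lemma measurable_sum_range {δ : Type*} [MeasurableSpace δ] {h : δ → ℕ} (hh : Measurable h)
    {F : ℕ → δ → ℝ≥0∞} (hF : ∀ i, Measurable (F i)) :
    Measurable fun p => ∑ i ∈ Finset.range (h p), F i p := by
  have hrw : (fun p => ∑ i ∈ Finset.range (h p), F i p)
      = fun p => ∑' n : ℕ, Set.indicator {q | h q = n}
          (fun q => ∑ i ∈ Finset.range n, F i q) p := by
    funext p
    rw [tsum_eq_single (h p)]
    · rw [Set.indicator_of_mem (by exact rfl)]
    · intro n hn
      exact Set.indicator_of_notMem (fun hq => hn (by exact hq.symm ▸ rfl)) _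
  rw [hrw]
  exact Measurable.ennreal_tsum fun n =>
    (Finset.measurable_sum _ fun i _ => hF i).indicator (hh (measurableSet_singleton n))

lemma indepFun_finset_comp {ι β γ : Type*} {Ω₀ : Type*} [MeasurableSpace Ω₀] {P : Measure Ω₀}
    [mβ : MeasurableSpace β] [MeasurableSpace γ] {Y : ι → Ω₀ → β}
    (hind : iIndepFun Y P) (hY : ∀ i, Measurable (Y i))
    (s : Finset ι) (v : ι) (hv : v ∉ s) {g : ((w : s) → β) → γ} (hg : Measurable g) :
    IndepFun (fun ω => g fun w : s => Y w ω) (Y v) P := by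
  have h := hind.indepFun_finset s {v} (Finset.disjoint_singleton_right.mpr hv) hY
  exact h.comp hg (measurable_pi_apply (⟨v, Finset.mem_singleton_self v⟩ : ({v} : Finset ι)))

lemma lintegral_indepFun {Ω₀ α β : Type*} [MeasurableSpace Ω₀] [MeasurableSpace α]
    [MeasurableSpace β] {P : Measure Ω₀} [IsProbabilityMeasure P] {Z : Ω₀ → α} {Y : Ω₀ → β}
    (hZ : Measurable Z) (hY : Measurable Y) (hind : IndepFun Z Y P)
    {G : α × β → ℝ≥0∞} (hG : Measurable G) :
    ∫⁻ ω, G (Z ω, Y ω) ∂P = ∫⁻ ω, ∫⁻ y, G (Z ω, y) ∂(P.map Y) ∂P := by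
  have hmap : P.map (fun ω => (Z ω, Y ω)) = (P.map Z).prod (P.map Y) :=
    (indepFun_iff_map_prod_eq_prod_map_map hZ.aemeasurable hY.aemeasurable).1 hind
  haveI : IsProbabilityMeasure (P.map Y) := Measure.isProbabilityMeasure_map hY.aemeasurable
  haveI : IsProbabilityMeasure (P.map Z) := Measure.isProbabilityMeasure_map hZ.aemeasurable
  have hinner : Measurable fun a => ∫⁻ y, G (a, y) ∂(P.map Y) :=
    Measurable.lintegral_prod_right (f := fun a y => G (a, y)) hG
  calc ∫⁻ ω, G (Z ω, Y ω) ∂P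
      = ∫⁻ p, G p ∂(P.map (fun ω => (Z ω, Y ω))) :=
        (lintegral_map hG (hZ.prodMk hY)).symm
    _ = ∫⁻ p, G p ∂((P.map Z).prod (P.map Y)) := by rw [hmap]
    _ = ∫⁻ a, ∫⁻ y, G (a, y) ∂(P.map Y) ∂(P.map Z) := lintegral_prod G hG.aemeasurable
    _ = ∫⁻ ω, ∫⁻ y, G (Z ω, y) ∂(P.map Y) ∂P := lintegral_map hinner hZ

section Meas
variable [MeasurableSpace Ω]
  (hN : ∀ u, Measurable (N u)) (hX : ∀ u i, Measurable (X u i))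
include hN hX

omit hN in
lemma measurable_brwPos (l : List ℕ) : Measurable fun ω => brwPos X ω l :=
  Finset.measurable_sum _ fun j _ => hX _ _

lemma measurable_brwW {k : ℕ} (e : Fin k → ℕ) :
    Measurable fun ω => brwW N X tstar ω e := by
  refine Finset.measurable_prod _ fun j _ => ?_
  refine Measurable.ite ?_ ?_ measurable_const
  · exact (hN _) MeasurableSet.of_discrete
  · exact ENNReal.measurable_ofReal.comp (Real.measurable_exp.comp ((hX _ _).const_mul _))

omit hN in
lemma measurable_pPath {k : ℕ} (e : Fin k → ℕ) :
    Measurable fun ω => pPath X ω e :=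
  measurable_pi_lambda _ fun j => measurable_brwPos hX _

end Meas

lemma tree_weight (ω : Ω) {k : ℕ} (e : Fin k → ℕ) :
    Set.indicator (brwTree N ω)
        (fun u => ENNReal.ofReal (Real.exp (-tstar * brwPos X ω u))) (List.ofFn e)
      = brwW N X tstar ω e := by
  by_cases h : List.ofFn e ∈ brwTree N ω
  · rw [Set.indicator_of_mem h]
    rw [mem_tree_ofFn] at h
    rw [brwPos_ofFn, Finset.mul_sum, Real.exp_sum,
      ENNReal.ofReal_prod_of_nonneg (fun i _ => (Real.exp_pos _).le)]
    unfold brwW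
    exact Finset.prod_congr rfl fun j _ => (if_pos (h j)).symm
  · rw [Set.indicator_of_notMem h]
    rw [mem_tree_ofFn] at h
    push_neg at h
    obtain ⟨j, hj⟩ := h
    exact (Finset.prod_eq_zero (Finset.mem_univ j) (by rw [if_neg (not_lt.mpr hj)])).symm

/-- tuples of length `k+1` are pairs of a length-`k` tuple and a last entry. -/
def snocEquiv (k : ℕ) : ((Fin k → ℕ) × ℕ) ≃ (Fin (k + 1) → ℕ) where
  toFun p := Fin.snoc p.1 p.2
  invFun e := (Fin.init e, e (Fin.last k))
  left_inv p := by simp [Fin.init_snoc, Fin.snoc_last]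
  right_inv e := Fin.snoc_init_self e

/-- the `S`-side path. -/
def sPath {Ω' : Type*} (W : ℕ → Ω' → ℝ) (k : ℕ) (ω' : Ω') : Fin (k + 1) → ℝ :=
  fun j => ∑ i ∈ Finset.range j.1, W i ω'

section SSide
variable {Ω' : Type*} [MeasurableSpace Ω'] {P' : Measure Ω'} {W : ℕ → Ω' → ℝ}

lemma measurable_sPath (hWmeas : ∀ i, Measurable (W i)) (k : ℕ) :
    Measurable (sPath W k) :=
  measurable_pi_lambda _ fun _ => Finset.measurable_sum _ fun i _ => hWmeas i

lemma sPath_snoc (k : ℕ) (ω' : Ω') :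
    sPath W (k + 1) ω' = ext (sPath W k ω') (W k ω') := by
  funext j
  refine Fin.lastCases ?_ (fun jj => ?_) j
  · show ∑ i ∈ Finset.range ((Fin.last (k + 1)) : ℕ), W i ω' = _
    rw [ext, Fin.snoc_last]
    show _ = (∑ i ∈ Finset.range ((Fin.last k : Fin (k + 1)) : ℕ), W i ω') + W k ω'
    rw [show ((Fin.last (k + 1)) : ℕ) = k + 1 from rfl,
      show ((Fin.last k : Fin (k + 1)) : ℕ) = k from rfl, Finset.sum_range_succ]
  · rw [ext, Fin.snoc_castSucc]
    rfl

lemma indep_sPath (hWmeas : ∀ i, Measurable (W i))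
    (hWindep : iIndepFun W P') (k : ℕ) :
    IndepFun (sPath W k) (W k) P' := by
  have hg : Measurable (fun t : ((w : (Finset.range k : Finset ℕ)) → ℝ) =>
      (fun j : Fin (k + 1) => ∑ i : Fin j.1,
        t ⟨i.1, Finset.mem_range.mpr (lt_of_lt_of_le i.isLt (Nat.lt_succ_iff.mp j.isLt))⟩ :
        Fin (k + 1) → ℝ)) :=
    measurable_pi_lambda _ fun _ => Finset.measurable_sum _ fun i _ => measurable_pi_apply _
  have h := indepFun_finset_comp hWindep hWmeas (Finset.range k) k (by simp) hg
  have heq : (fun ω' => (fun j : Fin (k + 1) => ∑ i : Fin j.1,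
        W i.1 ω' : Fin (k + 1) → ℝ)) = sPath W k := by
    funext ω' j
    exact (Finset.sum_range fun i => W i ω').symm
  rw [heq] at h
  exact h

end SSide

section BSide
variable [MeasurableSpace Ω] {P : Measure Ω}

def gfun (tstar : ℝ) {k : ℕ} (e : Fin k → ℕ)
    (t : (w : (((Finset.range k).image fun m => (List.ofFn e).take m) : Finset (List ℕ))) →
      ℕ × (ℕ → ℝ)) : ℝ≥0∞ × (Fin (k + 1) → ℝ) :=
  (∏ j : Fin k, if e j < (t ⟨(List.ofFn e).take j.1,
        Finset.mem_image_of_mem _ (Finset.mem_range.mpr j.isLt)⟩).1 then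
      ENNReal.ofReal (Real.exp (-tstar * (t ⟨(List.ofFn e).take j.1,
        Finset.mem_image_of_mem _ (Finset.mem_range.mpr j.isLt)⟩).2 (e j))) else 0,
   fun j : Fin (k + 1) => ∑ i : Fin j.1,
      (t ⟨(List.ofFn e).take i.1, Finset.mem_image_of_mem _
          (Finset.mem_range.mpr (lt_of_lt_of_le i.isLt (Nat.lt_succ_iff.mp j.isLt)))⟩).2
        (e ⟨i.1, lt_of_lt_of_le i.isLt (Nat.lt_succ_iff.mp j.isLt)⟩))

lemma measurable_gfun {k : ℕ} (e : Fin k → ℕ) : Measurable (gfun tstar e) := by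
  unfold gfun
  have hj : ∀ j : Fin k, Measurable fun t :
      ((w : (((Finset.range k).image fun m => (List.ofFn e).take m) : Finset (List ℕ))) →
        ℕ × (ℕ → ℝ)) => t ⟨(List.ofFn e).take j.1,
          Finset.mem_image_of_mem _ (Finset.mem_range.mpr j.isLt)⟩ :=
    fun j => measurable_pi_apply _
  have hij : ∀ (j : Fin (k + 1)) (i : Fin j.1), Measurable fun t :
      ((w : (((Finset.range k).image fun m => (List.ofFn e).take m) : Finset (List ℕ))) →
        ℕ × (ℕ → ℝ)) => t ⟨(List.ofFn e).take i.1, Finset.mem_image_of_mem _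
          (Finset.mem_range.mpr (lt_of_lt_of_le i.isLt (Nat.lt_succ_iff.mp j.isLt)))⟩ :=
    fun j i => measurable_pi_apply _
  refine Measurable.prod ?_ ?_
  · dsimp only
    refine Finset.measurable_prod _ fun j _ => ?_
    refine Measurable.ite ?_ ?_ measurable_const
    · exact (measurable_fst.comp (hj j)) MeasurableSet.of_discrete
    · exact ENNReal.measurable_ofReal.comp (Real.measurable_exp.comp
        (((measurable_pi_apply (e j)).comp (measurable_snd.comp (hj j))).const_mul _))
  · dsimp only
    exact measurable_pi_lambda _ fun j => Finset.measurable_sum _ fun i _ =>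
      (measurable_pi_apply _).comp (measurable_snd.comp (hij j i))

lemma indep_brw
    (hmeas : ∀ u, Measurable (fun ω => ((N u ω, fun i => X u i ω) : ℕ × (ℕ → ℝ))))
    (hindep : iIndepFun
      (fun u ω => ((N u ω, fun i => X u i ω) : ℕ × (ℕ → ℝ))) P)
    {k : ℕ} (e : Fin k → ℕ) :
    IndepFun (fun ω => (brwW N X tstar ω e, pPath X ω e))
      (fun ω => ((N (List.ofFn e) ω, fun i => X (List.ofFn e) i ω) : ℕ × (ℕ → ℝ))) P := by
  have hvs : List.ofFn e ∉ ((Finset.range k).image fun m => (List.ofFn e).take m) := by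
    simp only [Finset.mem_image, Finset.mem_range]
    rintro ⟨m, hm, hmv⟩
    have h1 : ((List.ofFn e).take m).length = (List.ofFn e).length := by rw [hmv]
    rw [List.length_take, List.length_ofFn] at h1
    omega
  have h := indepFun_finset_comp hindep hmeas
    ((Finset.range k).image fun m => (List.ofFn e).take m) (List.ofFn e) hvs
    (measurable_gfun (tstar := tstar) e)
  have heq : (fun ω => gfun tstar e
        fun w : (((Finset.range k).image fun m => (List.ofFn e).take m) : Finset (List ℕ)) =>
          ((N w.1 ω, fun i => X w.1 i ω) : ℕ × (ℕ → ℝ)))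
      = fun ω => (brwW N X tstar ω e, pPath X ω e) := by
    funext ω
    refine Prod.ext ?_ ?_
    · rfl
    · funext j
      show (∑ i : Fin j.1, X ((List.ofFn e).take i.1)
          (e ⟨i.1, lt_of_lt_of_le i.isLt (Nat.lt_succ_iff.mp j.isLt)⟩) ω) = pPath X ω e j
      rw [pPath, brwPos_take ω _ (m := j.1) (by simp [Nat.lt_succ_iff.mp j.isLt])]
      refine Finset.sum_congr rfl fun i _ => ?_
      congr 1
      simp [List.get_ofFn]
  rw [heq] at h
  exact h

end BSide

/-- the one-step transition functional. -/
def phi (tstar : ℝ) {k : ℕ} (f : (Fin (k + 2) → ℝ) → ℝ≥0∞) (z : Fin (k + 1) → ℝ)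
    (p : ℕ × (ℕ → ℝ)) : ℝ≥0∞ :=
  ∑ i ∈ Finset.range p.1, ENNReal.ofReal (Real.exp (-tstar * p.2 i)) * f (ext z (p.2 i))

lemma phi_def (tstar : ℝ) {k : ℕ} (f : (Fin (k + 2) → ℝ) → ℝ≥0∞) (z : Fin (k + 1) → ℝ)
    (p : ℕ × (ℕ → ℝ)) : phi tstar f z p
      = ∑ i ∈ Finset.range p.1,
          ENNReal.ofReal (Real.exp (-tstar * p.2 i)) * f (ext z (p.2 i)) := rfl

attribute [irreducible] phi

lemma measurable_phi {k : ℕ} {f : (Fin (k + 2) → ℝ) → ℝ≥0∞} (hf : Measurable f) :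
    Measurable fun q : (Fin (k + 1) → ℝ) × (ℕ × (ℕ → ℝ)) => phi tstar f q.1 q.2 := by
  simp only [phi_def]
  refine measurable_sum_range
    (h := fun q : (Fin (k + 1) → ℝ) × (ℕ × (ℕ → ℝ)) => q.2.1)
    (F := fun i q => ENNReal.ofReal (Real.exp (-tstar * q.2.2 i)) * f (ext q.1 (q.2.2 i)))
    (measurable_fst.comp measurable_snd) (fun i => ?_)
  have h2i : Measurable fun q : (Fin (k + 1) → ℝ) × (ℕ × (ℕ → ℝ)) => q.2.2 i :=
    (measurable_pi_apply i).comp (measurable_snd.comp measurable_snd)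
  exact (ENNReal.measurable_ofReal.comp (Real.measurable_exp.comp (h2i.const_mul _))).mul
    (hf.comp (measurable_ext.comp (measurable_fst.prodMk h2i)))

section M2O
variable [MeasurableSpace Ω] {P : Measure Ω} [IsProbabilityMeasure P]
  {Ω' : Type*} [MeasurableSpace Ω'] {P' : Measure Ω'} [IsProbabilityMeasure P']
  {W : ℕ → Ω' → ℝ} {ν : Measure ℝ} [IsProbabilityMeasure ν]

set_option maxHeartbeats 2000000 in
lemma M2O
    (hmeas : ∀ u, Measurable (fun ω => ((N u ω, fun i => X u i ω) : ℕ × (ℕ → ℝ))))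
    (hindep : iIndepFun
      (fun u ω => ((N u ω, fun i => X u i ω) : ℕ × (ℕ → ℝ))) P)
    (hident : ∀ u v : List ℕ,
      IdentDistrib (fun ω => ((N u ω, fun i => X u i ω) : ℕ × (ℕ → ℝ)))
        (fun ω => ((N v ω, fun i => X v i ω) : ℕ × (ℕ → ℝ))) P P)
    (hν : ∀ h : ℝ → ℝ≥0∞, Measurable h →
      ∫⁻ y, h y ∂ν =
        ∫⁻ ω, ∑ i ∈ Finset.range (N [] ω),
          ENNReal.ofReal (Real.exp (-tstar * X [] i ω)) * h (X [] i ω) ∂P)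
    (hWmeas : ∀ i, Measurable (W i))
    (hWindep : iIndepFun W P')
    (hWlaw : ∀ i, Measure.map (W i) P' = ν)
    (k : ℕ) : ∀ {f : (Fin (k + 1) → ℝ) → ℝ≥0∞}, Measurable f →
    ∫⁻ ω, ∑' e : Fin k → ℕ, brwW N X tstar ω e * f (pPath X ω e) ∂P
      = ∫⁻ ω', f (sPath W k ω') ∂P' := by
  have hN : ∀ u, Measurable (N u) := fun u => measurable_fst.comp (hmeas u)
  have hX : ∀ u i, Measurable (X u i) :=
    fun u i => (measurable_pi_apply i).comp (measurable_snd.comp (hmeas u))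
  induction k with
  | zero =>
    intro f hf
    have h1 : ∀ ω : Ω, (∑' e : Fin 0 → ℕ, brwW N X tstar ω e * f (pPath X ω e))
        = f (fun _ => 0) := by
      intro ω
      rw [tsum_eq_single (fun i : Fin 0 => i.elim0)
        (fun b hb => absurd (Subsingleton.elim b _) hb)]
      have hw : brwW N X tstar ω (fun i : Fin 0 => i.elim0) = 1 := by
        rw [brwW]; simp
      have hp : pPath X ω (fun i : Fin 0 => i.elim0) = fun _ => 0 := by
        funext j
        rw [pPath, show (List.ofFn fun i : Fin 0 => i.elim0) = ([] : List ℕ) from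
          List.ofFn_zero, List.take_nil]
        simp [brwPos]
      rw [hw, hp, one_mul]
    rw [lintegral_congr h1, lintegral_const, measure_univ, mul_one]
    have h2 : ∀ ω' : Ω', f (sPath W 0 ω') = f (fun _ => 0) := by
      intro ω'
      congr 1
      funext j
      have hj : j = 0 := Fin.ext (by omega)
      subst hj
      rfl
    rw [lintegral_congr h2, lintegral_const, measure_univ, mul_one]
  | succ k ih =>
    intro f hf
    set f' : (Fin (k + 1) → ℝ) → ℝ≥0∞ := fun z => ∫⁻ y, f (ext z y) ∂ν with hf'def
    have hf' : Measurable f' :=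
      Measurable.lintegral_prod_right (f := fun z y => f (ext z y)) (hf.comp measurable_ext)
    have hphiz : ∀ z : Fin (k + 1) → ℝ, Measurable fun p : ℕ × (ℕ → ℝ) => phi tstar f z p := by
      intro z
      have hfe : (fun p : ℕ × (ℕ → ℝ) => phi tstar f z p)
          = (fun q : (Fin (k + 1) → ℝ) × (ℕ × (ℕ → ℝ)) => phi tstar f q.1 q.2) ∘
            (fun p => (z, p)) := rfl
      rw [hfe]
      exact (measurable_phi hf).comp (measurable_const.prodMk measurable_id)
    have key : ∀ ω, (∑' e : Fin (k + 1) → ℕ, brwW N X tstar ω e * f (pPath X ω e))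
        = ∑' e : Fin k → ℕ, brwW N X tstar ω e *
            phi tstar f (pPath X ω e)
              (N (List.ofFn e) ω, fun i => X (List.ofFn e) i ω) := by
      intro ω
      rw [← Equiv.tsum_eq (snocEquiv k), ENNReal.tsum_prod']
      refine tsum_congr fun e => ?_
      calc ∑' i : ℕ, brwW N X tstar ω (Fin.snoc e i) * f (pPath X ω (Fin.snoc e i))
          = ∑' i : ℕ, brwW N X tstar ω e *
              ((if i < N (List.ofFn e) ω then
                  ENNReal.ofReal (Real.exp (-tstar * X (List.ofFn e) i ω)) else 0) *
                f (ext (pPath X ω e) (X (List.ofFn e) i ω))) := by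
            refine tsum_congr fun i => ?_
            rw [brwW_snoc, pPath_snoc, mul_assoc]
        _ = brwW N X tstar ω e * ∑' i : ℕ,
              ((if i < N (List.ofFn e) ω then
                  ENNReal.ofReal (Real.exp (-tstar * X (List.ofFn e) i ω)) else 0) *
                f (ext (pPath X ω e) (X (List.ofFn e) i ω))) := ENNReal.tsum_mul_left
        _ = brwW N X tstar ω e * phi tstar f (pPath X ω e)
              (N (List.ofFn e) ω, fun i => X (List.ofFn e) i ω) := by
            congr 1
            have h1 : (∑' i : ℕ,
                ((if i < N (List.ofFn e) ω then
                    ENNReal.ofReal (Real.exp (-tstar * X (List.ofFn e) i ω)) else 0) *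
                  f (ext (pPath X ω e) (X (List.ofFn e) i ω))))
                = ∑ i ∈ Finset.range (N (List.ofFn e) ω),
                ((if i < N (List.ofFn e) ω then
                    ENNReal.ofReal (Real.exp (-tstar * X (List.ofFn e) i ω)) else 0) *
                  f (ext (pPath X ω e) (X (List.ofFn e) i ω))) :=
              tsum_eq_sum (fun i hi => by rw [if_neg (by simpa using hi), zero_mul])
            rw [h1]
            simp only [phi_def]
            exact Finset.sum_congr rfl fun i hi => by rw [if_pos (Finset.mem_range.mp hi)]
    have perterm : ∀ e : Fin k → ℕ,
        ∫⁻ ω, brwW N X tstar ω e * phi tstar f (pPath X ω e)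
            (N (List.ofFn e) ω, fun i => X (List.ofFn e) i ω) ∂P
          = ∫⁻ ω, brwW N X tstar ω e * f' (pPath X ω e) ∂P := by
      intro e
      have hG : Measurable fun q : (ℝ≥0∞ × (Fin (k + 1) → ℝ)) × (ℕ × (ℕ → ℝ)) =>
          q.1.1 * phi tstar f q.1.2 q.2 :=
        (measurable_fst.comp measurable_fst).mul ((measurable_phi hf).comp
          ((measurable_snd.comp measurable_fst).prodMk measurable_snd))
      have h8 := lintegral_indepFun
        ((measurable_brwW (tstar := tstar) hN hX e).prodMk (measurable_pPath hX e))
        (hmeas (List.ofFn e)) (indep_brw hmeas hindep e) hG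
      have hin : ∀ z : Fin (k + 1) → ℝ,
          ∫⁻ p, phi tstar f z p
              ∂(P.map (fun ω => ((N (List.ofFn e) ω, fun i => X (List.ofFn e) i ω) :
                ℕ × (ℕ → ℝ)))) = f' z := by
        intro z
        rw [(hident (List.ofFn e) List.nil).map_eq, lintegral_map (hphiz z) (hmeas List.nil)]
        simp only [phi_def]
        exact (hν (fun y => f (ext z y))
          (hf.comp (measurable_ext.comp (measurable_const.prodMk measurable_id)))).symm
      calc ∫⁻ ω, brwW N X tstar ω e * phi tstar f (pPath X ω e)
              (N (List.ofFn e) ω, fun i => X (List.ofFn e) i ω) ∂P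
          = ∫⁻ ω, ∫⁻ p, brwW N X tstar ω e * phi tstar f (pPath X ω e) p
              ∂(P.map (fun ω => ((N (List.ofFn e) ω, fun i => X (List.ofFn e) i ω) :
                ℕ × (ℕ → ℝ)))) ∂P := h8
        _ = ∫⁻ ω, brwW N X tstar ω e * f' (pPath X ω e) ∂P := by
            refine lintegral_congr fun ω => ?_
            rw [lintegral_const_mul _ (hphiz (pPath X ω e)), hin]
    have hmeas1 : ∀ e : Fin k → ℕ, Measurable fun ω =>
        brwW N X tstar ω e * phi tstar f (pPath X ω e)
          (N (List.ofFn e) ω, fun i => X (List.ofFn e) i ω) :=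
      fun e => (measurable_brwW hN hX e).mul ((measurable_phi hf).comp
        ((measurable_pPath hX e).prodMk (hmeas (List.ofFn e))))
    have hmeas2 : ∀ e : Fin k → ℕ, Measurable fun ω =>
        brwW N X tstar ω e * f' (pPath X ω e) :=
      fun e => (measurable_brwW hN hX e).mul (hf'.comp (measurable_pPath hX e))
    calc ∫⁻ ω, ∑' e : Fin (k + 1) → ℕ, brwW N X tstar ω e * f (pPath X ω e) ∂P
        = ∫⁻ ω, ∑' e : Fin k → ℕ, brwW N X tstar ω e *
            phi tstar f (pPath X ω e)
              (N (List.ofFn e) ω, fun i => X (List.ofFn e) i ω) ∂P := lintegral_congr key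
      _ = ∑' e : Fin k → ℕ, ∫⁻ ω, brwW N X tstar ω e *
            phi tstar f (pPath X ω e)
              (N (List.ofFn e) ω, fun i => X (List.ofFn e) i ω) ∂P :=
          lintegral_tsum fun e => (hmeas1 e).aemeasurable
      _ = ∑' e : Fin k → ℕ, ∫⁻ ω, brwW N X tstar ω e * f' (pPath X ω e) ∂P :=
          tsum_congr perterm
      _ = ∫⁻ ω, ∑' e : Fin k → ℕ, brwW N X tstar ω e * f' (pPath X ω e) ∂P :=
          (lintegral_tsum fun e => (hmeas2 e).aemeasurable).symm
      _ = ∫⁻ ω', f' (sPath W k ω') ∂P' := ih hf'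
      _ = ∫⁻ ω', f (sPath W (k + 1) ω') ∂P' := by
          have h8' := lintegral_indepFun (measurable_sPath hWmeas k) (hWmeas k)
            (indep_sPath hWmeas hWindep k)
            (G := fun q : (Fin (k + 1) → ℝ) × ℝ => f (ext q.1 q.2)) (hf.comp measurable_ext)
          rw [hWlaw k] at h8'
          rw [← h8']
          refine (lintegral_congr fun ω' => ?_).symm
          rw [sPath_snoc]

lemma master
    (hmeas : ∀ u, Measurable (fun ω => ((N u ω, fun i => X u i ω) : ℕ × (ℕ → ℝ))))
    (hindep : iIndepFun
      (fun u ω => ((N u ω, fun i => X u i ω) : ℕ × (ℕ → ℝ))) P)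
    (hident : ∀ u v : List ℕ,
      IdentDistrib (fun ω => ((N u ω, fun i => X u i ω) : ℕ × (ℕ → ℝ)))
        (fun ω => ((N v ω, fun i => X v i ω) : ℕ × (ℕ → ℝ))) P P)
    (hν : ∀ h : ℝ → ℝ≥0∞, Measurable h →
      ∫⁻ y, h y ∂ν =
        ∫⁻ ω, ∑ i ∈ Finset.range (N [] ω),
          ENNReal.ofReal (Real.exp (-tstar * X [] i ω)) * h (X [] i ω) ∂P)
    (hWmeas : ∀ i, Measurable (W i))
    (hWindep : iIndepFun W P')
    (hWlaw : ∀ i, Measure.map (W i) P' = ν)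
    (f : (k : ℕ) → (Fin (k + 1) → ℝ) → ℝ≥0∞) (hf : ∀ k, Measurable (f k)) :
    ∫⁻ ω, ∑' u : List ℕ,
        Set.indicator (brwTree N ω)
          (fun u => ENNReal.ofReal (Real.exp (-tstar * brwPos X ω u))) u *
        f u.length (fun j : Fin (u.length + 1) => brwPos X ω (u.take j.1)) ∂P
      = ∑' k, ∫⁻ ω', f k (sPath W k ω') ∂P' := by
  have hN : ∀ u, Measurable (N u) := fun u => measurable_fst.comp (hmeas u)
  have hX : ∀ u i, Measurable (X u i) :=
    fun u i => (measurable_pi_apply i).comp (measurable_snd.comp (hmeas u))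
  have hcast : ∀ (ω : Ω) (u : List ℕ) (k : ℕ) (h : u.length = k),
      f u.length (fun j : Fin (u.length + 1) => brwPos X ω (u.take j.1))
        = f k (fun j : Fin (k + 1) => brwPos X ω (u.take j.1)) := by
    intro ω u k h
    subst h
    rfl
  have hpt : ∀ ω, (∑' u : List ℕ,
        Set.indicator (brwTree N ω)
          (fun u => ENNReal.ofReal (Real.exp (-tstar * brwPos X ω u))) u *
        f u.length (fun j : Fin (u.length + 1) => brwPos X ω (u.take j.1)))
      = ∑' k, ∑' e : Fin k → ℕ, brwW N X tstar ω e * f k (pPath X ω e) := by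
    intro ω
    rw [← Equiv.tsum_eq (List.equivSigmaTuple (α := ℕ)).symm, ENNReal.tsum_sigma']
    refine tsum_congr fun k => tsum_congr fun e => ?_
    show Set.indicator (brwTree N ω)
          (fun u => ENNReal.ofReal (Real.exp (-tstar * brwPos X ω u))) (List.ofFn e) *
        f (List.ofFn e).length
          (fun j : Fin ((List.ofFn e).length + 1) => brwPos X ω ((List.ofFn e).take j.1)) = _
    rw [hcast ω (List.ofFn e) k (List.length_ofFn (f := e)), tree_weight]
    rfl
  have hm : ∀ k, AEMeasurable
      (fun ω => ∑' e : Fin k → ℕ, brwW N X tstar ω e * f k (pPath X ω e)) P :=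
    fun k => (Measurable.ennreal_tsum fun e =>
      (measurable_brwW (tstar := tstar) hN hX e).mul
        ((hf k).comp (measurable_pPath hX e))).aemeasurable
  rw [lintegral_congr hpt, lintegral_tsum hm]
  exact tsum_congr fun k => M2O hmeas hindep hident hν hWmeas hWindep hWlaw k (hf k)

end M2O

section Line
variable {A : (k : ℕ) → Set (Fin (k + 1) → ℝ)}

/-- first-hitting path events. -/
def Bset (A : (k : ℕ) → Set (Fin (k + 1) → ℝ)) (k : ℕ) : Set (Fin (k + 1) → ℝ) :=
  A k ∩ ⋂ (m : ℕ) (hm : m < k),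
    (fun (z : Fin (k + 1) → ℝ) (j : Fin (m + 1)) =>
      z (Fin.castLE (Nat.succ_le_succ hm.le) j)) ⁻¹' (A m)ᶜ

lemma mem_Bset {k : ℕ} {z : Fin (k + 1) → ℝ} :
    z ∈ Bset A k ↔ z ∈ A k ∧ ∀ m (hm : m < k),
      (fun j : Fin (m + 1) => z (Fin.castLE (Nat.succ_le_succ hm.le) j)) ∉ A m := by
  simp [Bset, Set.mem_iInter]

lemma measurable_Bset (hA : ∀ k, MeasurableSet (A k)) (k : ℕ) :
    MeasurableSet (Bset A k) :=
  (hA k).inter (MeasurableSet.iInter fun m => MeasurableSet.iInter fun _ =>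
    (measurable_pi_lambda _ fun _ => measurable_pi_apply _) ((hA m).compl))

def fOne (tstar : ℝ) (A : (k : ℕ) → Set (Fin (k + 1) → ℝ)) (k : ℕ) :
    (Fin (k + 1) → ℝ) → ℝ≥0∞ :=
  Set.indicator (Bset A k) (fun z => ENNReal.ofReal (Real.exp (tstar * z (Fin.last k))))

def fTwo (A : (k : ℕ) → Set (Fin (k + 1) → ℝ)) (k : ℕ) : (Fin (k + 1) → ℝ) → ℝ≥0∞ :=
  Set.indicator (Bset A k) (fun _ => 1)

lemma measurable_fOne (hA : ∀ k, MeasurableSet (A k)) (k : ℕ) :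
    Measurable (fOne tstar A k) :=
  (ENNReal.measurable_ofReal.comp
    (Real.measurable_exp.comp ((measurable_pi_apply _).const_mul _))).indicator
      (measurable_Bset hA k)

lemma measurable_fTwo (hA : ∀ k, MeasurableSet (A k)) (k : ℕ) :
    Measurable (fTwo A k) :=
  measurable_const.indicator (measurable_Bset hA k)

lemma mem_brwLine_iff (ω : Ω) (u : List ℕ) :
    u ∈ brwLine N X A ω ↔ u ∈ brwTree N ω ∧
      (fun j : Fin (u.length + 1) => brwPos X ω (u.take j.1)) ∈ Bset A u.length := by
  constructor
  · rintro ⟨h1, h2, h3⟩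
    exact ⟨h1, mem_Bset.mpr ⟨h2, fun m hm => h3 m hm⟩⟩
  · rintro ⟨h1, h2⟩
    obtain ⟨h2, h3⟩ := mem_Bset.mp h2
    exact ⟨h1, h2, fun m hm => h3 m hm⟩

lemma line_indicator_one (ω : Ω) (u : List ℕ) :
    Set.indicator (brwLine N X A ω) (fun _ => (1 : ℝ≥0∞)) u
      = Set.indicator (brwTree N ω)
          (fun u => ENNReal.ofReal (Real.exp (-tstar * brwPos X ω u))) u *
        fOne tstar A u.length (fun j : Fin (u.length + 1) => brwPos X ω (u.take j.1)) := by
  by_cases hu : u ∈ brwLine N X A ω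
  · obtain ⟨h1, h2⟩ := (mem_brwLine_iff ω u).mp hu
    rw [Set.indicator_of_mem hu, Set.indicator_of_mem h1, fOne, Set.indicator_of_mem h2]
    have hlast : (fun j : Fin (u.length + 1) => brwPos X ω (u.take j.1))
        (Fin.last u.length) = brwPos X ω u := by
      show brwPos X ω (u.take u.length) = _
      rw [List.take_length]
    rw [hlast, ← ENNReal.ofReal_mul (Real.exp_nonneg _), ← Real.exp_add]
    have h0 : -tstar * brwPos X ω u + tstar * brwPos X ω u = 0 := by ring
    rw [h0, Real.exp_zero, ENNReal.ofReal_one]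
  · rw [Set.indicator_of_notMem hu]
    by_cases h1 : u ∈ brwTree N ω
    · have h2 : (fun j : Fin (u.length + 1) => brwPos X ω (u.take j.1)) ∉ Bset A u.length :=
        fun hb => hu ((mem_brwLine_iff ω u).mpr ⟨h1, hb⟩)
      rw [fOne, Set.indicator_of_notMem h2, mul_zero]
    · rw [Set.indicator_of_notMem h1, zero_mul]

lemma line_indicator_two (ω : Ω) (u : List ℕ) :
    Set.indicator (brwLine N X A ω)
        (fun u => ENNReal.ofReal (Real.exp (-tstar * brwPos X ω u))) u
      = Set.indicator (brwTree N ω)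
          (fun u => ENNReal.ofReal (Real.exp (-tstar * brwPos X ω u))) u *
        fTwo A u.length (fun j : Fin (u.length + 1) => brwPos X ω (u.take j.1)) := by
  by_cases hu : u ∈ brwLine N X A ω
  · obtain ⟨h1, h2⟩ := (mem_brwLine_iff ω u).mp hu
    rw [Set.indicator_of_mem hu, Set.indicator_of_mem h1, fTwo, Set.indicator_of_mem h2,
      mul_one]
  · rw [Set.indicator_of_notMem hu]
    by_cases h1 : u ∈ brwTree N ω
    · have h2 : (fun j : Fin (u.length + 1) => brwPos X ω (u.take j.1)) ∉ Bset A u.length :=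
        fun hb => hu ((mem_brwLine_iff ω u).mpr ⟨h1, hb⟩)
      rw [fTwo, Set.indicator_of_notMem h2, mul_zero]
    · rw [Set.indicator_of_notMem h1, zero_mul]

end Line

section DSide
variable {Ω' : Type*} [MeasurableSpace Ω'] {P' : Measure Ω'} {W : ℕ → Ω' → ℝ}
  {A : (k : ℕ) → Set (Fin (k + 1) → ℝ)}

def Dset (A : (k : ℕ) → Set (Fin (k + 1) → ℝ)) {Ω' : Type*} (W : ℕ → Ω' → ℝ) (k : ℕ) :
    Set Ω' :=
  {ω' | sPath W k ω' ∈ Bset A k}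

lemma mem_Dset {k : ℕ} {ω' : Ω'} :
    ω' ∈ Dset A W k ↔ sPath W k ω' ∈ A k ∧ ∀ m, m < k → sPath W m ω' ∉ A m := by
  rw [Dset, Set.mem_setOf_eq, mem_Bset]
  constructor
  · rintro ⟨h1, h2⟩
    exact ⟨h1, fun m hm => h2 m hm⟩
  · rintro ⟨h1, h2⟩
    exact ⟨h1, fun m hm => h2 m hm⟩

lemma measurable_Dset (hWmeas : ∀ i, Measurable (W i)) (hA : ∀ k, MeasurableSet (A k))
    (k : ℕ) : MeasurableSet (Dset A W k) :=
  measurable_sPath hWmeas k (measurable_Bset hA k)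

lemma disjoint_Dset : Pairwise (Function.onFun Disjoint (Dset A W)) := by
  intro a b hab
  rw [Function.onFun, Set.disjoint_left]
  intro ω' ha hb
  rw [mem_Dset] at ha hb
  rcases lt_or_gt_of_ne hab with h | h
  · exact hb.2 a h ha.1
  · exact ha.2 b h hb.1

lemma iUnion_Dset :
    (⋃ k, Dset A W k) = {ω' | {k | sPath W k ω' ∈ A k}.Nonempty} := by
  ext ω'
  simp only [Set.mem_iUnion, Set.mem_setOf_eq]
  constructor
  · rintro ⟨k, hk⟩
    exact ⟨k, (mem_Dset.mp hk).1⟩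
  · rintro hne
    refine ⟨sInf {k | sPath W k ω' ∈ A k}, mem_Dset.mpr ?_⟩
    exact ⟨Nat.sInf_mem hne, fun m hm => Nat.notMem_of_lt_sInf hm⟩

lemma sInf_of_mem_Dset {k : ℕ} {ω' : Ω'} (h : ω' ∈ Dset A W k) :
    sInf {k | sPath W k ω' ∈ A k} = k := by
  rw [mem_Dset] at h
  refine le_antisymm (Nat.sInf_le h.1) ?_
  by_contra hlt
  push_neg at hlt
  have hmem : sInf {k | sPath W k ω' ∈ A k} ∈ {k | sPath W k ω' ∈ A k} :=
    Nat.sInf_mem ⟨k, h.1⟩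
  exact h.2 _ hlt hmem

end DSide

end Stmt9

open Stmt9

/-- **many-to-one for optional lines.**  With `L` the optional line associated
to Borel sets `A_k ⊆ ℝ^{k+1}` and `τ = inf{k ≥ 0 : (S_0,…,S_k) ∈ A_k}` for the many-to-one
random walk `S`, one has `E[#L] = E[e^{t* S_τ} 1{τ<∞}]` and
`E[Σ_{u ∈ L} e^{−t* V(u)}] = P(τ < ∞)`. -/
theorem statement9 {Ω : Type*} [MeasurableSpace Ω] (P : Measure Ω) [IsProbabilityMeasure P]
    (N : List ℕ → Ω → ℕ) (X : List ℕ → ℕ → Ω → ℝ)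
    (hmeas : ∀ u, Measurable (fun ω => ((N u ω, fun i => X u i ω) : ℕ × (ℕ → ℝ))))
    (hindep : iIndepFun
      (fun u ω => ((N u ω, fun i => X u i ω) : ℕ × (ℕ → ℝ))) P)
    (hident : ∀ u v : List ℕ,
      IdentDistrib (fun ω => ((N u ω, fun i => X u i ω) : ℕ × (ℕ → ℝ)))
        (fun ω => ((N v ω, fun i => X v i ω) : ℕ × (ℕ → ℝ))) P P)
    (tstar : ℝ) (ht : 0 < tstar)
    (hφ : ∫⁻ ω, ∑ i ∈ Finset.range (N [] ω),
        ENNReal.ofReal (Real.exp (-tstar * X [] i ω)) ∂P = 1)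
    (ν : Measure ℝ) [IsProbabilityMeasure ν]
    (hν : ∀ h : ℝ → ℝ≥0∞, Measurable h →
      ∫⁻ y, h y ∂ν =
        ∫⁻ ω, ∑ i ∈ Finset.range (N [] ω),
          ENNReal.ofReal (Real.exp (-tstar * X [] i ω)) * h (X [] i ω) ∂P)
    -- the path events defining the optional line
    (A : (k : ℕ) → Set (Fin (k + 1) → ℝ)) (hA : ∀ k, MeasurableSet (A k))
    -- the many-to-one random walk, realized on an auxiliary probability space
    {Ω' : Type*} [MeasurableSpace Ω'] (P' : Measure Ω') [IsProbabilityMeasure P']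
    (W : ℕ → Ω' → ℝ) (hWmeas : ∀ i, Measurable (W i))
    (hWindep : iIndepFun W P')
    (hWlaw : ∀ i, Measure.map (W i) P' = ν) :
    (∫⁻ ω, ∑' u : List ℕ,
        Set.indicator (brwLine N X A ω) (fun _ => (1 : ℝ≥0∞)) u ∂P)
      = (∫⁻ ω' in
          {ω' : Ω' | {k : ℕ | (fun j : Fin (k + 1) =>
              ∑ i ∈ Finset.range j.1, W i ω') ∈ A k}.Nonempty},
          ENNReal.ofReal (Real.exp (tstar *
            ∑ i ∈ Finset.range (sInf {k : ℕ | (fun j : Fin (k + 1) =>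
              ∑ i' ∈ Finset.range j.1, W i' ω') ∈ A k}), W i ω')) ∂P') ∧
    (∫⁻ ω, ∑' u : List ℕ,
        Set.indicator (brwLine N X A ω)
          (fun u => ENNReal.ofReal (Real.exp (-tstar * brwPos X ω u))) u ∂P)
      = P' {ω' | {k : ℕ | (fun j : Fin (k + 1) =>
          ∑ i ∈ Finset.range j.1, W i ω') ∈ A k}.Nonempty} := by

  have hset : {ω' : Ω' | {k : ℕ | (fun j : Fin (k + 1) =>
        ∑ i ∈ Finset.range j.1, W i ω') ∈ A k}.Nonempty} = ⋃ k, Dset A W k :=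
    (iUnion_Dset (A := A) (W := W)).symm
  constructor
  · -- first identity
    have e1 : (∫⁻ ω, ∑' u : List ℕ,
          Set.indicator (brwLine N X A ω) (fun _ => (1 : ℝ≥0∞)) u ∂P)
        = ∑' k, ∫⁻ ω', fOne tstar A k (sPath W k ω') ∂P' := by
      rw [lintegral_congr fun ω => tsum_congr fun u => line_indicator_one ω u]
      exact master hmeas hindep hident hν hWmeas hWindep hWlaw (fOne tstar A)
        (measurable_fOne hA)
    have hrhs1 : ∫⁻ ω' in ⋃ k, Dset A W k,
        ENNReal.ofReal (Real.exp (tstar *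
          ∑ i ∈ Finset.range (sInf {k | sPath W k ω' ∈ A k}), W i ω')) ∂P'
        = ∑' k, ∫⁻ ω', fOne tstar A k (sPath W k ω') ∂P' := by
      rw [lintegral_iUnion (measurable_Dset hWmeas hA) disjoint_Dset]
      refine tsum_congr fun k => ?_
      have h1 : ∫⁻ ω' in Dset A W k,
          ENNReal.ofReal (Real.exp (tstar *
            ∑ i ∈ Finset.range (sInf {k | sPath W k ω' ∈ A k}), W i ω')) ∂P'
          = ∫⁻ ω' in Dset A W k,
            ENNReal.ofReal (Real.exp (tstar * sPath W k ω' (Fin.last k))) ∂P' :=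
        setLIntegral_congr_fun (measurable_Dset hWmeas hA k) (fun ω' hω' => by
          rw [sInf_of_mem_Dset hω']
          rfl)
      have h2 : ∀ ω', fOne tstar A k (sPath W k ω')
          = Set.indicator (Dset A W k)
              (fun ω' => ENNReal.ofReal (Real.exp (tstar * sPath W k ω' (Fin.last k)))) ω' := by
        intro ω'
        by_cases h : ω' ∈ Dset A W k
        · have h' : sPath W k ω' ∈ Bset A k := h
          rw [Set.indicator_of_mem h, fOne, Set.indicator_of_mem h']
        · have h' : sPath W k ω' ∉ Bset A k := fun hb => h hb
          rw [Set.indicator_of_notMem h, fOne, Set.indicator_of_notMem h']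
      rw [h1, lintegral_congr h2, lintegral_indicator (measurable_Dset hWmeas hA k) _]
    rw [hset]
    exact e1.trans hrhs1.symm
  · -- second identity
    have e2 : (∫⁻ ω, ∑' u : List ℕ,
          Set.indicator (brwLine N X A ω)
            (fun u => ENNReal.ofReal (Real.exp (-tstar * brwPos X ω u))) u ∂P)
        = ∑' k, ∫⁻ ω', fTwo A k (sPath W k ω') ∂P' := by
      rw [lintegral_congr fun ω => tsum_congr fun u => line_indicator_two ω u]
      exact master hmeas hindep hident hν hWmeas hWindep hWlaw (fTwo A)
        (measurable_fTwo hA)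
    have hrhs2 : P' (⋃ k, Dset A W k) = ∑' k, ∫⁻ ω', fTwo A k (sPath W k ω') ∂P' := by
      rw [measure_iUnion disjoint_Dset (measurable_Dset hWmeas hA)]
      refine tsum_congr fun k => ?_
      have h2 : ∀ ω', fTwo A k (sPath W k ω')
          = Set.indicator (Dset A W k) (fun _ => (1 : ℝ≥0∞)) ω' := by
        intro ω'
        by_cases h : ω' ∈ Dset A W k
        · have h' : sPath W k ω' ∈ Bset A k := h
          rw [Set.indicator_of_mem h, fTwo, Set.indicator_of_mem h']
        · have h' : sPath W k ω' ∉ Bset A k := fun hb => h hb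
          rw [Set.indicator_of_notMem h, fTwo, Set.indicator_of_notMem h']
      rw [lintegral_congr h2, lintegral_indicator (measurable_Dset hWmeas hA k) _,
        setLIntegral_one]
    rw [hset]
    exact e2.trans hrhs2.symm


end
end
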